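/- arXiv:2210.16617 — 4 statements merged into one kernel-verified Lean document; each statement's English description precedes it below -/
import Mathlib

section
/- Fix μ > 0, δ > 0 and τ ∈ (0,1). Then there exists M ∈ ℕ such that for every integer m ≥ M the function f_m has a zero in the open interval (j_{m,1}, j_{m,2}); i.e. there exists k_{m} ∈ (j_{m,1}, j_{m,2}) with f_m(k_m) = 0. -/
/-- Bessel function of the first kind of real order `ν`, defined by its power series. -/
noncomputable def besselJ (ν : ℝ) (x : ℝ) : ℝ :=
  ∑' k : ℕ, ((-1 : ℝ) ^ k / (Nat.factorial k * Real.Gamma ((k : ℝ) + ν + 1))) *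
    (x / 2) ^ (2 * (k : ℝ) + ν)

/-- `besselJZero ν s` is the `s`-th positive zero of `besselJ ν` (with the convention
`besselJZero ν 0 = 0`), defined recursively as the infimum of zeros beyond the previous one. -/
noncomputable def besselJZero (ν : ℝ) : ℕ → ℝ
  | 0 => 0
  | s + 1 => sInf {x : ℝ | besselJZero ν s < x ∧ besselJ ν x = 0}

/-- The function `f_m` whose zeros are acoustic-elastic transmission eigenvalues on the
unit disk. -/
noncomputable def fAE (μ δ τ : ℝ) (m : ℕ) (k : ℝ) : ℝ :=
  (2 * μ * ((m : ℝ) ^ 2 - 1) - τ ^ 2 * k ^ 2) * besselJ ((m : ℝ) - 1) k * besselJ (m : ℝ) (τ * k)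
    + ((m : ℝ) * τ ^ 2 * k - 2 * μ * ((m : ℝ) ^ 2 - 1) * (m : ℝ) / k + δ * τ ^ 2 * k) *
        besselJ (m : ℝ) k * besselJ (m : ℝ) (τ * k)


namespace AE

noncomputable def c (n k : ℕ) : ℝ := (-1)^k / (k.factorial * (k+n).factorial)

noncomputable def h (n : ℕ) (y : ℝ) : ℝ := ∑' k, c n k * y^k

lemma abs_c_le (n k : ℕ) : |c n k| ≤ 1 / k.factorial := by
  have h0 : (0:ℝ) < (k.factorial : ℝ) := by exact_mod_cast Nat.factorial_pos k
  have h1 : (0:ℝ) < ((k+n).factorial : ℝ) := by exact_mod_cast Nat.factorial_pos (k+n)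
  have : |c n k| = 1 / ((k.factorial : ℝ) * ((k+n).factorial : ℝ)) := by
    rw [c, abs_div, abs_pow, abs_neg, abs_one, one_pow, abs_of_pos (by positivity)]
  rw [this]
  rw [div_le_div_iff₀ (by positivity) h0]
  have h2 : (1:ℝ) ≤ ((k+n).factorial : ℝ) := by
    exact_mod_cast Nat.one_le_iff_ne_zero.2 (Nat.factorial_ne_zero _)
  nlinarith

lemma summable_h (n : ℕ) (y : ℝ) : Summable (fun k => c n k * y^k) := by
  refine Summable.of_norm_bounded (Real.summable_pow_div_factorial |y|) (fun k => ?_)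
  rw [norm_mul, norm_pow, Real.norm_eq_abs, Real.norm_eq_abs]
  calc |c n k| * |y|^k ≤ (1/k.factorial) * |y|^k :=
        mul_le_mul_of_nonneg_right (abs_c_le n k) (by positivity)
    _ = |y|^k / k.factorial := by ring

lemma c_succ (n k : ℕ) : c n (k+1) * ((k:ℝ)+1) = - c (n+1) k := by
  rw [c, c]
  have h1 : ((k+1).factorial : ℝ) = ((k:ℝ)+1) * k.factorial := by
    rw [Nat.factorial_succ]; push_cast; ring
  have h2 : k+1+n = k+(n+1) := by ring
  rw [pow_succ, h1, h2]
  have hk : ((k:ℝ)+1) ≠ 0 := by positivity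
  have hf : (k.factorial : ℝ) ≠ 0 := by exact_mod_cast Nat.factorial_ne_zero k
  have hf2 : (((k+(n+1)).factorial : ℕ) : ℝ) ≠ 0 := by exact_mod_cast Nat.factorial_ne_zero _
  field_simp

lemma hasSum_h (n : ℕ) (y : ℝ) : HasSum (fun k => c n k * y^k) (h n y) :=
  (summable_h n y).hasSum

/-- termwise derivative series sums to `-h (n+1) y` -/
lemma hasSum_deriv_h (n : ℕ) (y : ℝ) :
    HasSum (fun k => c n k * ((k:ℝ) * y^(k-1))) (-(h (n+1) y)) := by
  have h1 : HasSum (fun k => -(c (n+1) k * y^k)) (-(h (n+1) y)) := (hasSum_h (n+1) y).neg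
  have h2 : ∀ k : ℕ, c n (k+1) * (((k+1:ℕ):ℝ) * y^(k+1-1)) = -(c (n+1) k * y^k) := by
    intro k
    have e1 : c n (k+1) * (((k+1:ℕ):ℝ) * y^(k+1-1)) = (c n (k+1) * ((k:ℝ)+1)) * y^k := by
      simp only [Nat.add_sub_cancel]; push_cast; ring
    rw [e1, c_succ]; ring
  have h3 : HasSum (fun k => c n (k+1) * (((k+1:ℕ):ℝ) * y^(k+1-1))) (-(h (n+1) y)) := by
    rw [funext h2]; exact h1
  have h4 := (hasSum_nat_add_iff (f := fun k => c n k * ((k:ℝ) * y^(k-1))) 1).1 (by exact_mod_cast h3)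
  simpa using h4


lemma summable_bound (R : ℝ) : Summable (fun k : ℕ => (k:ℝ) * R^(k-1) / k.factorial) := by
  rw [← summable_nat_add_iff 1]
  have : ∀ k : ℕ, ((k+1:ℕ):ℝ) * R^(k+1-1) / (k+1).factorial = R^k / k.factorial := by
    intro k
    have : (((k+1).factorial : ℕ):ℝ) = ((k:ℝ)+1) * k.factorial := by
      rw [Nat.factorial_succ]; push_cast; ring
    rw [this]
    simp only [Nat.add_sub_cancel]
    have hk : ((k:ℝ)+1) ≠ 0 := by positivity
    have hf : (k.factorial : ℝ) ≠ 0 := by exact_mod_cast Nat.factorial_ne_zero k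
    push_cast
    field_simp
  rw [funext this]
  exact Real.summable_pow_div_factorial R

lemma hasDerivAt_h (n : ℕ) (y : ℝ) : HasDerivAt (h n) (-(h (n+1) y)) y := by
  set R : ℝ := |y| + 1 with hR
  have hRpos : 0 < R := by positivity
  have key : HasDerivAt (fun z => ∑' k, c n k * z^k)
      (∑' k, c n k * ((k:ℝ) * y^(k-1))) y := by
    refine hasDerivAt_tsum_of_isPreconnected
      (u := fun k : ℕ => (k:ℝ) * R^(k-1) / k.factorial)
      (g := fun k z => c n k * z^k)
      (g' := fun k z => c n k * ((k:ℝ) * z^(k-1)))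
      (summable_bound R) (Metric.isOpen_ball (x := (0:ℝ)) (ε := R))
      (convex_ball (0:ℝ) R).isPreconnected
      (fun k z _ => by
        simpa [mul_comm] using ((hasDerivAt_pow k z).const_mul (c n k)))
      ?_ ?_ (summable_h n 0) ?_
    · intro k z hz
      have hzR : |z| < R := by simpa [Real.dist_eq] using hz
      rw [Real.norm_eq_abs, abs_mul, abs_mul, abs_pow]
      have h1 : |c n k| * (|(k:ℝ)| * |z|^(k-1)) ≤ (1/k.factorial) * ((k:ℝ) * R^(k-1)) := by
        apply mul_le_mul (abs_c_le n k)
        · rw [abs_of_nonneg (by positivity : (0:ℝ) ≤ (k:ℝ))]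
          exact mul_le_mul_of_nonneg_left
            (pow_le_pow_left₀ (abs_nonneg z) hzR.le _) (by positivity)
        · positivity
        · positivity
      calc |c n k| * (|(k:ℝ)| * |z|^(k-1)) ≤ (1/k.factorial) * ((k:ℝ) * R^(k-1)) := h1
        _ = (k:ℝ) * R^(k-1) / k.factorial := by ring
    · simp [Real.dist_eq, hR]; positivity
    · simp [Real.dist_eq, hR]
  have : (∑' k, c n k * ((k:ℝ) * y^(k-1))) = -(h (n+1) y) := (hasSum_deriv_h n y).tsum_eq
  rw [this] at key
  exact key

lemma continuous_h (n : ℕ) : Continuous (h n) := by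
  have : Differentiable ℝ (h n) := fun y => (hasDerivAt_h n y).differentiableAt
  exact this.continuous

lemma h_zero (n : ℕ) : h n 0 = 1 / n.factorial := by
  rw [h, tsum_eq_single 0]
  · simp [c]
  · intro k hk
    simp [zero_pow hk]

lemma h_rec (n : ℕ) (y : ℝ) : h n y + y * h (n+2) y = ((n:ℝ)+1) * h (n+1) y := by
  have hS : HasSum (fun k => c (n+2) k * y^k) (h (n+2) y) := hasSum_h (n+2) y
  have hyS : HasSum (fun k => y * (c (n+2) k * y^k)) (y * h (n+2) y) := hS.mul_left y
  -- shifted series G with G 0 = 0, G (k+1) = c (n+2) k * y^(k+1)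
  set G : ℕ → ℝ := fun k => Nat.rec 0 (fun k' _ => c (n+2) k' * y^(k'+1)) k with hG
  have hG1 : HasSum (fun k => G (k+1)) (y * h (n+2) y) := by
    have : ∀ k, G (k+1) = y * (c (n+2) k * y^k) := by intro k; simp [hG]; ring
    rw [funext this]; exact hyS
  have hG2 : HasSum G (y * h (n+2) y) := by
    have := (hasSum_nat_add_iff (f := G) 1).1 (by exact_mod_cast hG1)
    simpa [hG] using this
  have hsum : HasSum (fun k => c n k * y^k + G k) (h n y + y * h (n+2) y) :=
    (hasSum_h n y).add hG2
  have hterm : ∀ k, c n k * y^k + G k = ((n:ℝ)+1) * (c (n+1) k * y^k) := by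
    intro k
    cases k with
    | zero =>
      have g0 : G 0 = 0 := rfl
      have c1 : c n 0 = 1/n.factorial := by simp [c]
      have c2 : c (n+1) 0 = 1/(n+1).factorial := by simp [c]
      rw [g0, c1, c2]
      have : (((n+1).factorial : ℕ):ℝ) = ((n:ℝ)+1) * n.factorial := by
        rw [Nat.factorial_succ]; push_cast; ring
      rw [this]
      have hf : (n.factorial : ℝ) ≠ 0 := by exact_mod_cast Nat.factorial_ne_zero n
      have hn1 : ((n:ℝ)+1) ≠ 0 := by positivity
      field_simp
      ring
    | succ k =>
      simp only [hG]
      have hc : c n (k+1) + c (n+2) k = ((n:ℝ)+1) * c (n+1) (k+1) := by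
        rw [c, c, c]
        have e1 : k+1+n = k+(n+1) := by ring
        have e2 : k+(n+2) = (k+(n+1))+1 := by ring
        have e3 : k+1+(n+1) = (k+(n+1))+1 := by ring
        rw [e1, e2, e3, pow_succ]
        have f1 : (((k+(n+1))+1).factorial : ℝ) = ((k:ℝ)+(n:ℝ)+2) * (k+(n+1)).factorial := by
          rw [Nat.factorial_succ]; push_cast; ring
        have f2 : ((k+1).factorial : ℝ) = ((k:ℝ)+1) * k.factorial := by
          rw [Nat.factorial_succ]; push_cast; ring
        rw [f1, f2]
        have hkf : (k.factorial : ℝ) ≠ 0 := by exact_mod_cast Nat.factorial_ne_zero k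
        have hknf : ((k+(n+1)).factorial : ℝ) ≠ 0 := by exact_mod_cast Nat.factorial_ne_zero _
        have p1 : ((k:ℝ)+1) ≠ 0 := by positivity
        have p2 : ((k:ℝ)+(n:ℝ)+2) ≠ 0 := by positivity
        field_simp
        ring
      calc c n (k+1) * y^(k+1) + c (n+2) k * y^(k+1) = (c n (k+1) + c (n+2) k) * y^(k+1) := by ring
        _ = ((n:ℝ)+1) * (c (n+1) (k+1) * y^(k+1)) := by rw [hc]; ring
  rw [funext hterm] at hsum
  have h2 : HasSum (fun k => ((n:ℝ)+1) * (c (n+1) k * y^k)) (((n:ℝ)+1) * h (n+1) y) :=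
    (hasSum_h (n+1) y).mul_left _
  exact hsum.unique h2


noncomputable def Jh (n : ℕ) (x : ℝ) : ℝ := (x/2)^n * h n (x^2/4)

lemma besselJ_eq {n : ℕ} {x : ℝ} (hx : 0 < x) : besselJ (n : ℝ) x = Jh n x := by
  rw [besselJ, Jh]
  have hx2 : (0:ℝ) < x/2 := by linarith
  have term : ∀ k : ℕ, ((-1 : ℝ) ^ k / (Nat.factorial k * Real.Gamma ((k : ℝ) + n + 1))) *
      (x / 2) ^ (2 * (k : ℝ) + n) = (c n k * (x^2/4)^k) * (x/2)^n := by
    intro k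
    have hg : Real.Gamma ((k : ℝ) + n + 1) = ((k+n).factorial : ℝ) := by
      have : ((k : ℝ) + n + 1) = (((k+n : ℕ) : ℝ) + 1) := by push_cast; ring
      rw [this, Real.Gamma_nat_eq_factorial]
    have he : (2 * (k : ℝ) + n) = (((2*k+n : ℕ) : ℕ) : ℝ) := by push_cast; ring
    rw [hg, he, Real.rpow_natCast]
    have : (x/2)^(2*k+n) = ((x/2)^2)^k * (x/2)^n := by rw [pow_add, pow_mul]
    rw [this]
    have : (x/2)^2 = x^2/4 := by ring
    rw [this, c]
    ring
  rw [tsum_congr term, tsum_mul_right]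
  rw [(hasSum_h n (x^2/4)).tsum_eq, mul_comm]

lemma besselJ_eq' {n : ℕ} (hn : 1 ≤ n) {x : ℝ} (hx : 0 < x) :
    besselJ ((n : ℝ) - 1) x = Jh (n-1) x := by
  have e : ((n-1 : ℕ) : ℝ) = (n:ℝ) - 1 := by
    rw [Nat.cast_sub hn]; simp
  rw [← e, besselJ_eq hx]

lemma continuous_Jh (n : ℕ) : Continuous (Jh n) := by
  apply Continuous.mul
  · exact (continuous_id.div_const 2).pow n
  · exact (continuous_h n).comp ((continuous_pow 2).div_const 4)

lemma Jh_rec {n : ℕ} {x : ℝ} (hx : x ≠ 0) :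
    Jh n x + Jh (n+2) x = (2*((n:ℝ)+1)/x) * Jh (n+1) x := by
  have := h_rec n (x^2/4)
  rw [Jh, Jh, Jh]
  have e1 : (x/2)^(n+2) = (x/2)^n * (x^2/4) := by rw [pow_add]; ring
  have e2 : (x/2)^(n+1) = (x/2)^n * (x/2) := by rw [pow_add]; ring
  rw [e1, e2]
  have key : (2*((n:ℝ)+1)/x) * ((x/2)^n * (x/2) * h (n+1) (x^2/4))
      = ((n:ℝ)+1) * ((x/2)^n * h (n+1) (x^2/4)) := by
    field_simp
  rw [key]
  linear_combination (x/2)^n * this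

lemma hasDerivAt_Jh {n : ℕ} (hn : 1 ≤ n) {x : ℝ} (hx : x ≠ 0) :
    HasDerivAt (Jh n) ((n:ℝ)/x * Jh n x - Jh (n+1) x) x := by
  obtain ⟨p, rfl⟩ : ∃ p, n = p + 1 := ⟨n - 1, by omega⟩
  have h1 : HasDerivAt (fun t : ℝ => (t/2)^(p+1)) (((p:ℝ)+1) * (x/2)^p * (1/2)) x := by
    have hd : HasDerivAt (fun t : ℝ => t/2) ((1:ℝ)/2) x := (hasDerivAt_id x).div_const 2
    have := (hasDerivAt_pow (p+1) (x/2)).comp x hd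
    have e : (((p+1:ℕ):ℝ) * (x/2)^(p+1-1)) * ((1:ℝ)/2) = ((p:ℝ)+1) * (x/2)^p * (1/2) := by
      simp only [Nat.add_sub_cancel]; push_cast; ring
    rw [e] at this
    exact this
  have h2 : HasDerivAt (fun t : ℝ => h (p+1) (t^2/4)) (-(h (p+2) (x^2/4)) * (x/2)) x := by
    have hinner : HasDerivAt (fun t : ℝ => t^2/4) (x/2) x := by
      have := (hasDerivAt_pow 2 x).div_const 4
      refine this.congr_deriv (Eq.symm ?_)
      simp; ring
    exact (hasDerivAt_h (p+1) (x^2/4)).comp x hinner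
  have := h1.mul h2
  have heq : ((p:ℝ)+1) * (x/2)^p * (1/2) * h (p+1) (x^2/4) + (x/2)^(p+1) * (-(h (p+2) (x^2/4)) * (x/2))
      = ((p+1:ℕ):ℝ)/x * Jh (p+1) x - Jh (p+1+1) x := by
    rw [Jh, Jh]
    have e2 : (x/2)^(p+1) = (x/2)^p * (x/2) := by rw [pow_add]; ring
    have e3 : (x/2)^(p+1+1) = (x/2)^p * (x/2) * (x/2) := by rw [pow_add, pow_add]; ring
    rw [e2, e3]
    push_cast
    field_simp
    ring
  rw [heq] at this
  exact this


/-- first derivative of `Jh n` -/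
noncomputable def Jd (n : ℕ) (x : ℝ) : ℝ := (n:ℝ)/x * Jh n x - Jh (n+1) x

lemma hasDerivAt_Jd {n : ℕ} (hn : 1 ≤ n) {x : ℝ} (hx : x ≠ 0) :
    HasDerivAt (Jd n) (((n:ℝ)^2/x^2 - 1) * Jh n x - Jd n x / x) x := by
  have hd1 : HasDerivAt (fun t : ℝ => (n:ℝ)/t) (-(n:ℝ)/x^2) x := by
    have h0 := (hasDerivAt_const x ((n:ℝ))).div (hasDerivAt_id x) hx
    refine h0.congr_deriv (Eq.symm ?_)
    simp
  have hJ := hasDerivAt_Jh hn hx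
  have hJ1 := hasDerivAt_Jh (n := n+1) (by omega) hx
  have hmain := (hd1.mul hJ).sub hJ1
  have heq : (-(n:ℝ)/x^2) * Jh n x + (n:ℝ)/x * ((n:ℝ)/x * Jh n x - Jh (n+1) x)
      - (((n+1:ℕ):ℝ)/x * Jh (n+1) x - Jh (n+1+1) x)
      = ((n:ℝ)^2/x^2 - 1) * Jh n x - Jd n x / x := by
    have hrec : Jh (n+2) x = (2*((n:ℝ)+1)/x) * Jh (n+1) x - Jh n x := by
      have := Jh_rec (n := n) hx; linarith
    rw [show n+1+1 = n+2 from rfl, hrec, Jd]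
    push_cast
    field_simp
    ring
  rw [heq] at hmain
  exact hmain

/-- `u n x = √x · Jh n x` -/
noncomputable def uf (n : ℕ) (x : ℝ) : ℝ := Real.sqrt x * Jh n x
noncomputable def u1 (n : ℕ) (x : ℝ) : ℝ := Jh n x / (2 * Real.sqrt x) + Real.sqrt x * Jd n x
noncomputable def qc (n : ℕ) (x : ℝ) : ℝ := 1 - ((n:ℝ)^2 - 1/4)/x^2

lemma hasDerivAt_uf {n : ℕ} (hn : 1 ≤ n) {x : ℝ} (hx : 0 < x) :
    HasDerivAt (uf n) (u1 n x) x := by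
  have hs := Real.hasDerivAt_sqrt (ne_of_gt hx)
  have hJ : HasDerivAt (Jh n) (Jd n x) x := hasDerivAt_Jh hn (ne_of_gt hx)
  have := hs.mul hJ
  have heq : 1/(2 * Real.sqrt x) * Jh n x + Real.sqrt x * Jd n x = u1 n x := by
    rw [u1]; ring
  rw [heq] at this
  exact this

lemma hasDerivAt_u1 {n : ℕ} (hn : 1 ≤ n) {x : ℝ} (hx : 0 < x) :
    HasDerivAt (u1 n) (-(qc n x * uf n x)) x := by
  have hsq : Real.sqrt x * Real.sqrt x = x := Real.mul_self_sqrt hx.le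
  have hs0 : Real.sqrt x ≠ 0 := by positivity
  have hs := Real.hasDerivAt_sqrt (ne_of_gt hx)
  have hJ : HasDerivAt (Jh n) (Jd n x) x := hasDerivAt_Jh hn (ne_of_gt hx)
  have hJd := hasDerivAt_Jd hn (ne_of_gt hx)
  -- derivative of (2 √x)⁻¹ is -(2·(1/(2√x)))/(2√x)^2
  have hinv : HasDerivAt (fun t : ℝ => Jh n t / (2 * Real.sqrt t))
      (Jd n x / (2*Real.sqrt x) - Jh n x / (4 * x * Real.sqrt x)) x := by
    have hden : HasDerivAt (fun t : ℝ => 2 * Real.sqrt t) (2 * (1/(2*Real.sqrt x))) x :=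
      hs.const_mul 2
    have hden0 : 2 * Real.sqrt x ≠ 0 := by positivity
    have := hJ.div hden hden0
    have s2 : Real.sqrt x ^ 2 = x := Real.sq_sqrt hx.le
    have s3 : Real.sqrt x ^ 3 = x * Real.sqrt x := by
      rw [show (3:ℕ) = 2+1 from rfl, pow_succ, s2]
    have s4 : Real.sqrt x ^ 4 = x^2 := by
      rw [show (4:ℕ) = 2*2 from rfl, pow_mul, s2]
    have s5 : Real.sqrt x ^ 5 = x^2 * Real.sqrt x := by
      rw [show (5:ℕ) = 4+1 from rfl, pow_succ, s4]
    have s6 : Real.sqrt x ^ 6 = x^3 := by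
      rw [show (6:ℕ) = 2*3 from rfl, pow_mul, s2]
    refine this.congr_deriv (Eq.symm ?_)
    field_simp
    ring_nf
    simp only [s2, s3, s4, s5, s6]
  have hmul : HasDerivAt (fun t : ℝ => Real.sqrt t * Jd n t)
      (1/(2*Real.sqrt x) * Jd n x + Real.sqrt x * (((n:ℝ)^2/x^2 - 1) * Jh n x - Jd n x / x)) x :=
    hs.mul hJd
  have := hinv.add hmul
  have heq : Jd n x / (2*Real.sqrt x) - Jh n x / (4 * x * Real.sqrt x)
      + (1/(2*Real.sqrt x) * Jd n x + Real.sqrt x * (((n:ℝ)^2/x^2 - 1) * Jh n x - Jd n x / x))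
      = -(qc n x * uf n x) := by
    have s2 : Real.sqrt x ^ 2 = x := Real.sq_sqrt hx.le
    have s3 : Real.sqrt x ^ 3 = x * Real.sqrt x := by
      rw [show (3:ℕ) = 2+1 from rfl, pow_succ, s2]
    have s4 : Real.sqrt x ^ 4 = x^2 := by
      rw [show (4:ℕ) = 2*2 from rfl, pow_mul, s2]
    have s5 : Real.sqrt x ^ 5 = x^2 * Real.sqrt x := by
      rw [show (5:ℕ) = 4+1 from rfl, pow_succ, s4]
    have s6 : Real.sqrt x ^ 6 = x^3 := by
      rw [show (6:ℕ) = 2*3 from rfl, pow_mul, s2]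
    rw [qc, uf]
    field_simp
    ring_nf
    simp only [s2, s3, s4, s5, s6]
    ring
  rw [heq] at this
  exact this


/-- Sturm-type comparison core: a positive solution of `u'' = -Q u` with `Q ≥ cc > 0`
cannot stay positive on an interval of length `π/√cc`. -/
lemma sturm_aux {U U1 Q : ℝ → ℝ} {a cc : ℝ} (hc : 0 < cc)
    (hU : ∀ x ∈ Set.Icc a (a + Real.pi / Real.sqrt cc), HasDerivAt U (U1 x) x)
    (hU1 : ∀ x ∈ Set.Icc a (a + Real.pi / Real.sqrt cc), HasDerivAt U1 (-(Q x * U x)) x)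
    (hq : ∀ x ∈ Set.Icc a (a + Real.pi / Real.sqrt cc), cc ≤ Q x)
    (hupos : ∀ x ∈ Set.Icc a (a + Real.pi / Real.sqrt cc), 0 < U x) : False := by
  set r := Real.sqrt cc with hr
  have hrpos : 0 < r := Real.sqrt_pos.2 hc
  have hr2 : r^2 = cc := Real.sq_sqrt hc.le
  set b := a + Real.pi / r with hb
  have hab : a < b := by
    rw [hb]
    have : 0 < Real.pi / r := div_pos Real.pi_pos hrpos
    linarith
  set V : ℝ → ℝ := fun x => Real.sin (r * (x - a)) with hV
  set V1 : ℝ → ℝ := fun x => r * Real.cos (r * (x - a)) with hV1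
  have hVd : ∀ x : ℝ, HasDerivAt V (V1 x) x := by
    intro x
    have hi : HasDerivAt (fun t : ℝ => r * (t - a)) r x := by
      simpa using (((hasDerivAt_id x).sub_const a).const_mul r)
    have := (Real.hasDerivAt_sin (r * (x - a))).comp x hi
    exact this.congr_deriv (by simp only [hV1]; ring)
  have hV1d : ∀ x : ℝ, HasDerivAt V1 (-(cc * V x)) x := by
    intro x
    have hi : HasDerivAt (fun t : ℝ => r * (t - a)) r x := by
      simpa using (((hasDerivAt_id x).sub_const a).const_mul r)
    have := ((Real.hasDerivAt_cos (r * (x - a))).comp x hi).const_mul r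
    rw [hV]
    refine this.congr_deriv (Eq.symm ?_)
    simp only [← hr2]
    ring
  have hVnonneg : ∀ x ∈ Set.Icc a b, 0 ≤ V x := by
    intro x hx
    apply Real.sin_nonneg_of_nonneg_of_le_pi
    · have := hx.1; nlinarith
    · have hxb := hx.2
      have : r * (x - a) ≤ r * (b - a) := by nlinarith
      calc r * (x-a) ≤ r * (b - a) := this
        _ = Real.pi := by rw [hb]; field_simp; ring
  set W : ℝ → ℝ := fun x => U1 x * V x - U x * V1 x with hW
  have hWd : ∀ x ∈ Set.Icc a b, HasDerivAt W ((cc - Q x) * (U x * V x)) x := by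
    intro x hx
    have := ((hU1 x hx).mul (hVd x)).sub ((hU x hx).mul (hV1d x))
    refine this.congr_deriv (Eq.symm ?_)
    ring
  have hWanti : AntitoneOn W (Set.Icc a b) := by
    apply antitoneOn_of_deriv_nonpos (convex_Icc a b)
    · exact ContinuousOn.sub
        (ContinuousOn.mul (fun x hx => (hU1 x hx).continuousAt.continuousWithinAt)
          (fun x hx => (hVd x).continuousAt.continuousWithinAt))
        (ContinuousOn.mul (fun x hx => (hU x hx).continuousAt.continuousWithinAt)
          (fun x hx => (hV1d x).continuousAt.continuousWithinAt))
    · intro x hx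
      rw [interior_Icc] at hx
      exact (hWd x (Set.mem_Icc_of_Ioo hx)).differentiableAt.differentiableWithinAt
    · intro x hx
      rw [interior_Icc] at hx
      have hx' := Set.mem_Icc_of_Ioo hx
      rw [(hWd x hx').deriv]
      have h1 : cc - Q x ≤ 0 := by have := hq x hx'; linarith
      have h2 : 0 ≤ U x * V x := mul_nonneg (hupos x hx').le (hVnonneg x hx')
      exact mul_nonpos_of_nonpos_of_nonneg h1 h2
  have hWa : W a = -(U a * r) := by
    simp [hW, hV, hV1]
  have hWb : W b = U b * r := by
    have e1 : r * (b - a) = Real.pi := by rw [hb]; field_simp; ring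
    simp [hW, hV, hV1, e1]
  have hUa := hupos a (Set.left_mem_Icc.2 hab.le)
  have hUb := hupos b (Set.right_mem_Icc.2 hab.le)
  have := hWanti (Set.left_mem_Icc.2 hab.le) (Set.right_mem_Icc.2 hab.le) hab.le
  rw [hWa, hWb] at this
  nlinarith

/-- Sturm: the Bessel function has a zero in every window where `qc ≥ cc`. -/
lemma sturm {n : ℕ} (hn : 1 ≤ n) {a cc : ℝ} (ha : 0 < a) (hc : 0 < cc)
    (hq : ∀ x ∈ Set.Icc a (a + Real.pi / Real.sqrt cc), cc ≤ qc n x) :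
    ∃ z ∈ Set.Icc a (a + Real.pi / Real.sqrt cc), Jh n z = 0 := by
  by_contra hcon
  push_neg at hcon
  set b := a + Real.pi / Real.sqrt cc with hb
  have hab : a < b := by
    have : 0 < Real.pi / Real.sqrt cc := div_pos Real.pi_pos (Real.sqrt_pos.2 hc)
    rw [hb]; linarith
  have hpos : ∀ x ∈ Set.Icc a b, 0 < x := fun x hx => lt_of_lt_of_le ha hx.1
  -- constant sign of Jh on the interval
  have hsign : (∀ x ∈ Set.Icc a b, 0 < Jh n x) ∨ (∀ x ∈ Set.Icc a b, Jh n x < 0) := by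
    by_contra hmix
    push_neg at hmix
    obtain ⟨⟨y1, hy1, hy1'⟩, ⟨y2, hy2, hy2'⟩⟩ := hmix
    have hy1n : Jh n y1 < 0 := lt_of_le_of_ne hy1' (hcon y1 hy1)
    have hy2n : 0 < Jh n y2 := lt_of_le_of_ne hy2' (Ne.symm (hcon y2 hy2))
    rcases le_total y1 y2 with hy12 | hy12
    · have := intermediate_value_Icc hy12 ((continuous_Jh n).continuousOn)
      have h0 : (0:ℝ) ∈ Set.Icc (Jh n y1) (Jh n y2) := ⟨hy1n.le, hy2n.le⟩
      obtain ⟨z, hz, hz0⟩ := this h0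
      exact hcon z ⟨le_trans hy1.1 hz.1, le_trans hz.2 hy2.2⟩ hz0
    · have := intermediate_value_Icc' hy12 ((continuous_Jh n).continuousOn)
      have h0 : (0:ℝ) ∈ Set.Icc (Jh n y1) (Jh n y2) := ⟨hy1n.le, hy2n.le⟩
      obtain ⟨z, hz, hz0⟩ := this h0
      exact hcon z ⟨le_trans hy2.1 hz.1, le_trans hz.2 hy1.2⟩ hz0
  rcases hsign with hall | hall
  · exact sturm_aux hc (fun x hx => hasDerivAt_uf hn (hpos x hx))
      (fun x hx => hasDerivAt_u1 hn (hpos x hx)) hq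
      (fun x hx => mul_pos (Real.sqrt_pos.2 (hpos x hx)) (hall x hx))
  · refine sturm_aux hc (U := fun x => -(uf n x)) (U1 := fun x => -(u1 n x)) (Q := qc n)
      (fun x hx => (hasDerivAt_uf hn (hpos x hx)).neg)
      (fun x hx => ?_) hq
      (fun x hx => ?_)
    · have := (hasDerivAt_u1 (n := n) hn (hpos x hx)).neg
      refine this.congr_deriv (Eq.symm ?_)
      ring
    · have : uf n x < 0 := mul_neg_of_pos_of_neg (Real.sqrt_pos.2 (hpos x hx)) (hall x hx)
      show (0:ℝ) < -(uf n x)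
      linarith


noncomputable def En (n : ℕ) (x : ℝ) : ℝ := (u1 n x)^2 + qc n x * (uf n x)^2

lemma hasDerivAt_qc {n : ℕ} {x : ℝ} (hx : x ≠ 0) :
    HasDerivAt (qc n) (2*((n:ℝ)^2 - 1/4)/x^3 * 1) x := by
  have h1 := (hasDerivAt_const x ((n:ℝ)^2 - 1/4)).div (hasDerivAt_pow 2 x) (pow_ne_zero 2 hx)
  have h2 := (hasDerivAt_const x (1:ℝ)).sub h1
  refine h2.congr_deriv (Eq.symm ?_)
  field_simp
  ring

lemma hasDerivAt_En {n : ℕ} (hn : 1 ≤ n) {x : ℝ} (hx : 0 < x) :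
    HasDerivAt (En n) (2*((n:ℝ)^2 - 1/4)/x^3 * (uf n x)^2) x := by
  have h1 := (hasDerivAt_u1 hn hx).pow 2
  have h2 := ((hasDerivAt_qc (n := n) hx.ne').mul ((hasDerivAt_uf hn hx).pow 2))
  have := h1.add h2
  refine this.congr_deriv (Eq.symm ?_)
  simp only [Nat.cast_ofNat, Pi.pow_apply]
  ring

lemma En_mono {n : ℕ} (hn : 1 ≤ n) {s t : ℝ} (hs : 0 < s) (hst : s ≤ t) :
    En n s ≤ En n t := by
  have hmono : MonotoneOn (En n) (Set.Icc s t) := by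
    apply monotoneOn_of_deriv_nonneg (convex_Icc s t)
    · intro x hx
      exact (hasDerivAt_En hn (lt_of_lt_of_le hs hx.1)).continuousAt.continuousWithinAt
    · intro x hx
      rw [interior_Icc] at hx
      exact (hasDerivAt_En hn (lt_of_lt_of_le hs hx.1.le)).differentiableAt.differentiableWithinAt
    · intro x hx
      rw [interior_Icc] at hx
      have hxpos : 0 < x := lt_of_lt_of_le hs hx.1.le
      rw [(hasDerivAt_En hn hxpos).deriv]
      have hn1 : (1:ℝ) ≤ (n:ℝ) := by exact_mod_cast hn
      have : (0:ℝ) ≤ (n:ℝ)^2 - 1/4 := by nlinarith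
      positivity
  exact hmono (Set.left_mem_Icc.2 hst) (Set.right_mem_Icc.2 hst) hst

lemma deriv_nonpos_left {f : ℝ → ℝ} {j w d : ℝ} (hw : w < j) (hf : HasDerivAt f d j)
    (hpos : ∀ x ∈ Set.Ioo w j, 0 < f x) (hj : f j = 0) : d ≤ 0 := by
  have ht : Filter.Tendsto (slope f j) (nhdsWithin j (Set.Iio j)) (nhds d) :=
    (hasDerivAt_iff_tendsto_slope.1 hf).mono_left
      (nhdsWithin_mono j (fun x hx => Set.mem_compl_singleton_iff.2 (ne_of_lt hx)))
  refine le_of_tendsto ht ?_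
  filter_upwards [Ioo_mem_nhdsLT_of_mem (Set.mem_Ioc.2 ⟨hw, le_refl j⟩)] with x hx
  rw [slope_def_field]
  have h1 : 0 < f x := hpos x hx
  have h2 : x - j < 0 := by have := hx.2; linarith
  rw [div_eq_mul_inv]
  have : f x - f j = f x := by rw [hj]; ring
  rw [this]
  exact (mul_nonpos_iff.2 (Or.inl ⟨h1.le, inv_nonpos.2 h2.le⟩))

lemma neg_right_of_deriv_neg {f : ℝ → ℝ} {j d : ℝ} (hf : HasDerivAt f d j)
    (hj : f j = 0) (hd : d < 0) : ∃ u, j < u ∧ ∀ x ∈ Set.Ioo j u, f x < 0 := by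
  have ht : Filter.Tendsto (slope f j) (nhdsWithin j (Set.Ioi j)) (nhds d) :=
    (hasDerivAt_iff_tendsto_slope.1 hf).mono_left
      (nhdsWithin_mono j (fun x hx => Set.mem_compl_singleton_iff.2 (ne_of_gt hx)))
  have hev : ∀ᶠ x in nhdsWithin j (Set.Ioi j), f x < 0 := by
    filter_upwards [ht.eventually (gt_mem_nhds hd), self_mem_nhdsWithin] with x hx hx'
    rw [slope_def_field] at hx
    have hxj : 0 < x - j := by have : j < x := hx'; linarith
    have : f x - f j < 0 := by
      rcases div_neg_iff.1 hx with ⟨h1, h2⟩ | ⟨h1, h2⟩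
      · linarith
      · exact h1
    rw [hj] at this; linarith
  rw [eventually_nhdsWithin_iff] at hev
  obtain ⟨ε, hε, hball⟩ := Metric.eventually_nhds_iff.1 hev
  exact ⟨j + ε, by linarith, fun x hx => hball (by
      rw [Real.dist_eq, abs_of_pos (by linarith [hx.1] : (0:ℝ) < x - j)]
      · linarith [hx.2]) hx.1⟩

lemma pos_left_of_deriv_neg {f : ℝ → ℝ} {j d : ℝ} (hf : HasDerivAt f d j)
    (hj : f j = 0) (hd : d < 0) : ∃ u, u < j ∧ ∀ x ∈ Set.Ioo u j, 0 < f x := by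
  have ht : Filter.Tendsto (slope f j) (nhdsWithin j (Set.Iio j)) (nhds d) :=
    (hasDerivAt_iff_tendsto_slope.1 hf).mono_left
      (nhdsWithin_mono j (fun x hx => Set.mem_compl_singleton_iff.2 (ne_of_lt hx)))
  have hev : ∀ᶠ x in nhdsWithin j (Set.Iio j), 0 < f x := by
    filter_upwards [ht.eventually (gt_mem_nhds hd), self_mem_nhdsWithin] with x hx hx'
    rw [slope_def_field] at hx
    have hxj : x - j < 0 := by have : x < j := hx'; linarith
    have : 0 < f x - f j := by
      rcases div_neg_iff.1 hx with ⟨h1, h2⟩ | ⟨h1, h2⟩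
      · exact h1
      · linarith
    rw [hj] at this; linarith
  rw [eventually_nhdsWithin_iff] at hev
  obtain ⟨ε, hε, hball⟩ := Metric.eventually_nhds_iff.1 hev
  exact ⟨j - ε, by linarith, fun x hx => hball (by
      rw [Real.dist_eq, abs_of_neg (by linarith [hx.2] : x - j < 0)]
      · linarith [hx.1]) hx.2⟩

lemma Jh_pos_near_zero (n : ℕ) : ∃ ε > 0, ∀ x ∈ Set.Ioc (0:ℝ) ε, 0 < Jh n x := by
  have h0 : 0 < h n 0 := by
    rw [h_zero n]
    positivity
  have hev : ∀ᶠ y in nhds (0:ℝ), 0 < h n y :=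
    (continuous_h n).continuousAt.eventually (eventually_gt_nhds h0)
  obtain ⟨δ, hδ, hball⟩ := Metric.eventually_nhds_iff.1 hev
  refine ⟨Real.sqrt δ, Real.sqrt_pos.2 hδ, fun x hx => ?_⟩
  have hx1 : 0 < x := hx.1
  have hx2 : x^2 ≤ δ := by
    have := hx.2
    nlinarith [Real.sq_sqrt hδ.le, Real.sqrt_nonneg δ]
  have hy : 0 < h n (x^2/4) := by
    apply hball
    rw [Real.dist_eq, sub_zero, abs_of_nonneg (by positivity)]
    linarith
  have : (0:ℝ) < (x/2)^n := by positivity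
  exact mul_pos this hy


lemma continuous_uf (n : ℕ) : Continuous (uf n) :=
  Real.continuous_sqrt.mul (continuous_Jh n)

lemma Jh_pos_low {n : ℕ} (hn : 1 ≤ n) {x0 : ℝ} (hx0 : 0 < x0)
    (hx2 : x0^2 ≤ (n:ℝ)^2 - 1/4) : 0 < Jh n x0 := by
  by_contra hcon
  push_neg at hcon
  obtain ⟨ε0, hε0, hnear⟩ := Jh_pos_near_zero n
  rcases le_or_gt x0 ε0 with hle | hlt
  · exact absurd (hnear x0 ⟨hx0, hle⟩) (not_lt.2 hcon)
  set S := {x : ℝ | x ∈ Set.Icc ε0 x0 ∧ Jh n x ≤ 0} with hS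
  have hSne : S.Nonempty := ⟨x0, ⟨hlt.le, le_refl x0⟩, hcon⟩
  have hSclosed : IsClosed S := by
    apply IsClosed.inter isClosed_Icc
    exact isClosed_le (continuous_Jh n) continuous_const
  have hSbdd : BddBelow S := ⟨ε0, fun x hx => hx.1.1⟩
  set z := sInf S with hz
  have hzS : z ∈ S := hSclosed.csInf_mem hSne hSbdd
  have hzpos : 0 < z := lt_of_lt_of_le hε0 hzS.1.1
  have hzx0 : z ≤ x0 := hzS.1.2
  have hzq : z^2 ≤ (n:ℝ)^2 - 1/4 := le_trans (pow_le_pow_left₀ hzpos.le hzx0 2) hx2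
  have hJz : Jh n z ≤ 0 := hzS.2
  have hposz : ∀ x ∈ Set.Ioo (0:ℝ) z, 0 < Jh n x := by
    intro x hx
    rcases le_or_gt x ε0 with hxe | hxe
    · exact hnear x ⟨hx.1, hxe⟩
    · by_contra hc
      push_neg at hc
      have hxS : x ∈ S := ⟨⟨hxe.le, le_trans hx.2.le hzx0⟩, hc⟩
      exact absurd (csInf_le hSbdd hxS) (not_le.2 hx.2)
  have hupos : ∀ x ∈ Set.Ioo (0:ℝ) z, 0 < uf n x := fun x hx =>
    mul_pos (Real.sqrt_pos.2 hx.1) (hposz x hx)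
  have huz : uf n z ≤ 0 :=
    mul_nonpos_iff.2 (Or.inl ⟨Real.sqrt_nonneg z, hJz⟩)
  set w := z/2 with hw
  have hwz : w ∈ Set.Ioo (0:ℝ) z := ⟨by positivity, by rw [hw]; linarith⟩
  have huw : 0 < uf n w := hupos w hwz
  -- pick w' ∈ (0, w) with uf n w' < uf n w
  have hu0 : uf n 0 = 0 := by simp [uf]
  have htend : Filter.Tendsto (uf n) (nhdsWithin 0 (Set.Ioi (0:ℝ))) (nhds 0) := by
    have := (continuous_uf n).tendsto 0
    rw [hu0] at this
    exact this.mono_left nhdsWithin_le_nhds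
  have hev : ∀ᶠ x in nhdsWithin 0 (Set.Ioi (0:ℝ)), uf n x < uf n w ∧ x ∈ Set.Ioo (0:ℝ) w := by
    have h1 := htend.eventually (gt_mem_nhds huw)
    have h2 : Set.Ioo (0:ℝ) w ∈ nhdsWithin 0 (Set.Ioi (0:ℝ)) :=
      Ioo_mem_nhdsGT_of_mem (Set.mem_Ico.2 ⟨le_refl 0, hwz.1⟩)
    filter_upwards [h1, h2] with x hx1 hx2
    exact ⟨hx1, hx2⟩
  obtain ⟨w', hw'1, hw'2⟩ := hev.exists
  -- MVT on [w', w]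
  have hw'w : w' < w := hw'2.2
  have hw'pos : 0 < w' := hw'2.1
  have hmvt1 := exists_hasDerivAt_eq_slope (uf n) (u1 n) hw'w
    ((continuous_uf n).continuousOn)
    (fun x hx => hasDerivAt_uf hn (lt_trans hw'pos hx.1))
  obtain ⟨a1, ha1, ha1'⟩ := hmvt1
  have ha1pos : 0 < u1 n a1 := by
    rw [ha1']
    apply div_pos (by linarith) (by linarith)
  -- MVT on [w, z]
  have hmvt2 := exists_hasDerivAt_eq_slope (uf n) (u1 n) hwz.2
    ((continuous_uf n).continuousOn)
    (fun x hx => hasDerivAt_uf hn (lt_trans hwz.1 hx.1))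
  obtain ⟨b1, hb1, hb1'⟩ := hmvt2
  have hb1neg : u1 n b1 < 0 := by
    rw [hb1']
    apply div_neg_of_neg_of_pos (by linarith) (by linarith [hwz.2])
  -- u1 is strictly increasing on [a1, b1]
  have ha1b1 : a1 < b1 := lt_trans ha1.2 hb1.1
  have hsub : Set.Icc a1 b1 ⊆ Set.Ioo (0:ℝ) z := by
    intro x hx
    constructor
    · linarith [hx.1, ha1.1, hw'pos]
    · linarith [hx.2, hb1.2]
  have hmono : StrictMonoOn (u1 n) (Set.Icc a1 b1) := by
    apply strictMonoOn_of_deriv_pos (convex_Icc a1 b1)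
    · intro x hx
      exact (hasDerivAt_u1 hn (hsub hx).1).continuousAt.continuousWithinAt
    · intro x hx
      rw [interior_Icc] at hx
      have hxz := hsub (Set.mem_Icc_of_Ioo hx)
      rw [(hasDerivAt_u1 hn hxz.1).deriv]
      have hq : qc n x < 0 := by
        rw [qc]
        have hx2' : x^2 < (n:ℝ)^2 - 1/4 := by
          have h1 : x^2 < z^2 := by nlinarith [hxz.1, hxz.2]
          linarith
        have : 1 < ((n:ℝ)^2 - 1/4)/x^2 := by
          rw [lt_div_iff₀ (pow_pos hxz.1 2)]
          linarith
        linarith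
      have hu : 0 < uf n x := hupos x hxz
      have hpos := mul_pos (neg_pos.2 hq) hu
      nlinarith
  have := hmono (Set.left_mem_Icc.2 ha1b1.le) (Set.right_mem_Icc.2 ha1b1.le) ha1b1
  linarith


noncomputable def xq (n : ℕ) : ℝ := Real.sqrt ((n:ℝ)^2 - 1/4)

def Zset (n : ℕ) : Set ℝ := {x | 0 < x ∧ Jh n x = 0}
noncomputable def jz1 (n : ℕ) : ℝ := sInf (Zset n)
def Zset2 (n : ℕ) : Set ℝ := {x | jz1 n < x ∧ Jh n x = 0}
noncomputable def jz2 (n : ℕ) : ℝ := sInf (Zset2 n)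

section
variable {n : ℕ} (hn : 1 ≤ n)
include hn

lemma nsq_pos : (0:ℝ) < (n:ℝ)^2 - 1/4 := by
  have : (1:ℝ) ≤ (n:ℝ) := by exact_mod_cast hn
  nlinarith

lemma xq_pos : 0 < xq n := Real.sqrt_pos.2 (nsq_pos hn)

lemma xq_sq : (xq n)^2 = (n:ℝ)^2 - 1/4 := Real.sq_sqrt (nsq_pos hn).le

lemma xq_le_n : xq n ≤ (n:ℝ) := by
  rw [xq]
  calc Real.sqrt ((n:ℝ)^2 - 1/4) ≤ Real.sqrt ((n:ℝ)^2) := Real.sqrt_le_sqrt (by nlinarith)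
    _ = (n:ℝ) := Real.sqrt_sq (by positivity)

lemma qc_mono {a x : ℝ} (ha : 0 < a) (hax : a ≤ x) : qc n a ≤ qc n x := by
  rw [qc, qc]
  have h1 : ((n:ℝ)^2 - 1/4)/x^2 ≤ ((n:ℝ)^2 - 1/4)/a^2 :=
    div_le_div_of_nonneg_left (nsq_pos hn).le (pow_pos ha 2)
      (by nlinarith)
  linarith

lemma qc_pos_of_gt {x : ℝ} (hx : xq n < x) : 0 < qc n x := by
  have hx0 : 0 < x := lt_trans (xq_pos hn) hx
  have : (n:ℝ)^2 - 1/4 < x^2 := by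
    have := xq_sq hn
    nlinarith [xq_pos hn]
  rw [qc]
  have h1 : ((n:ℝ)^2 - 1/4)/x^2 < 1 := by
    rw [div_lt_one (pow_pos hx0 2)]
    exact this
  linarith

/-- every zero is beyond `xq` -/
lemma zero_gt_xq {z : ℝ} (hz : z ∈ Zset n) : xq n < z := by
  by_contra hle
  push_neg at hle
  have hz2 : z^2 ≤ (n:ℝ)^2 - 1/4 := by
    rw [← xq_sq hn]
    exact pow_le_pow_left₀ hz.1.le hle 2
  exact absurd hz.2 (ne_of_gt (Jh_pos_low hn hz.1 hz2))

/-- a window lemma: any point `a > xq` yields a zero within `π/√(qc n a)`. -/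
lemma zero_in_window {a : ℝ} (ha : xq n < a) :
    ∃ z ∈ Set.Icc a (a + Real.pi / Real.sqrt (qc n a)), Jh n z = 0 := by
  have ha0 : 0 < a := lt_trans (xq_pos hn) ha
  exact sturm hn ha0 (qc_pos_of_gt hn ha) (fun x hx => qc_mono hn ha0 hx.1)

lemma Zset_nonempty : (Zset n).Nonempty := by
  obtain ⟨z, hz, hz0⟩ := zero_in_window hn (a := xq n + 1) (by linarith)
  exact ⟨z, lt_of_lt_of_le (by linarith [xq_pos hn]) hz.1, hz0⟩

lemma Zset_eq : Zset n = {x | xq n ≤ x ∧ Jh n x = 0} := by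
  ext x
  constructor
  · intro hx
    exact ⟨(zero_gt_xq hn hx).le, hx.2⟩
  · intro hx
    exact ⟨lt_of_lt_of_le (xq_pos hn) hx.1, hx.2⟩

lemma Zset_bddBelow : BddBelow (Zset n) := ⟨xq n, fun z hz => (zero_gt_xq hn hz).le⟩

lemma jz1_mem : jz1 n ∈ Zset n := by
  rw [jz1, Zset_eq hn]
  apply IsClosed.csInf_mem
  · exact (isClosed_le continuous_const continuous_id).inter
      (isClosed_eq (continuous_Jh n) continuous_const)
  · rw [← Zset_eq hn]; exact Zset_nonempty hn
  · rw [← Zset_eq hn]; exact Zset_bddBelow hn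

lemma jz1_zero : Jh n (jz1 n) = 0 := (jz1_mem hn).2

lemma jz1_gt_xq : xq n < jz1 n := zero_gt_xq hn (jz1_mem hn)

lemma jz1_pos : 0 < jz1 n := lt_trans (xq_pos hn) (jz1_gt_xq hn)

lemma jz1_sq : (n:ℝ)^2 - 1/4 < (jz1 n)^2 := by
  have := jz1_gt_xq hn
  have h2 := xq_sq hn
  nlinarith [xq_pos hn]

/-- positivity strictly below the first zero -/
lemma Jh_pos_before_jz1 {x : ℝ} (hx : 0 < x) (hxj : x < jz1 n) : 0 < Jh n x := by
  rcases le_or_gt x (xq n) with hle | hgt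
  · exact Jh_pos_low hn hx (by rw [← xq_sq hn]; exact pow_le_pow_left₀ hx.le hle 2)
  · by_contra hc
    push_neg at hc
    have hxq0 : 0 < Jh n (xq n) := Jh_pos_low hn (xq_pos hn) (le_of_eq (xq_sq hn))
    rcases eq_or_lt_of_le hc with heq | hlt
    · exact absurd (csInf_le (Zset_bddBelow hn) ⟨hx, heq⟩) (not_le.2 hxj)
    · obtain ⟨z, hz, hz0⟩ := intermediate_value_Icc' hgt.le
        ((continuous_Jh n).continuousOn) (Set.mem_Icc.2 ⟨hlt.le, hxq0.le⟩)
      have hzZ : z ∈ Zset n := ⟨lt_of_lt_of_le (xq_pos hn) hz.1, hz0⟩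
      exact absurd (csInf_le (Zset_bddBelow hn) hzZ) (not_le.2 (lt_of_le_of_lt hz.2 hxj))

lemma Jd_jz1_neg : Jd n (jz1 n) < 0 := by
  have hd := hasDerivAt_Jh hn (jz1_pos hn).ne'
  have hle : Jd n (jz1 n) ≤ 0 := by
    refine deriv_nonpos_left (jz1_gt_xq hn) ?_ ?_ (jz1_zero hn)
    · rw [Jd] at *; exact hd
    · intro x hx
      exact Jh_pos_before_jz1 hn (lt_trans (xq_pos hn) hx.1) hx.2
  rcases eq_or_lt_of_le hle with heq | hlt
  · exfalso
    -- energy argument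
    have hu1 : u1 n (jz1 n) = 0 := by
      rw [u1, jz1_zero hn, heq]
      simp
    have huf : uf n (jz1 n) = 0 := by rw [uf, jz1_zero hn]; ring
    have hEj : En n (jz1 n) = 0 := by rw [En, hu1, huf]; ring
    set s := (xq n + jz1 n)/2 with hs
    have hs1 : xq n < s := by rw [hs]; have := jz1_gt_xq hn; linarith
    have hs2 : s < jz1 n := by rw [hs]; have := jz1_gt_xq hn; linarith
    have hspos : 0 < s := lt_trans (xq_pos hn) hs1
    have hqs : 0 < qc n s := qc_pos_of_gt hn hs1
    have hufs : 0 < uf n s :=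
      mul_pos (Real.sqrt_pos.2 hspos) (Jh_pos_before_jz1 hn hspos hs2)
    have hEs : 0 < En n s := by
      rw [En]
      have : 0 < qc n s * (uf n s)^2 := mul_pos hqs (pow_pos hufs 2)
      nlinarith [sq_nonneg (u1 n s)]
    have := En_mono hn hspos hs2.le
    rw [hEj] at this
    linarith
  · exact hlt

lemma hasDerivAt_Jh' {x : ℝ} (hx : x ≠ 0) : HasDerivAt (Jh n) (Jd n x) x := by
  unfold Jd
  exact hasDerivAt_Jh hn hx

lemma exists_neg_right : ∃ u, jz1 n < u ∧ ∀ x ∈ Set.Ioo (jz1 n) u, Jh n x < 0 :=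
  neg_right_of_deriv_neg (hasDerivAt_Jh' hn (jz1_pos hn).ne') (jz1_zero hn) (Jd_jz1_neg hn)

lemma qc_win : 1/((n:ℝ)+1) ≤ qc n (jz1 n + 1) := by
  have hxq := xq_pos hn
  have hj := jz1_gt_xq hn
  have h1 : qc n (xq n + 1) ≤ qc n (jz1 n + 1) := qc_mono hn (by linarith) (by linarith)
  have h2 : 1/((n:ℝ)+1) ≤ qc n (xq n + 1) := by
    rw [qc]
    have hxqn := xq_le_n hn
    have hsq := xq_sq hn
    have hp1 : (0:ℝ) < xq n + 1 := by linarith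
    have hp2 : (0:ℝ) < (n:ℝ)+1 := by positivity
    rw [div_le_iff₀ hp2, ← hsq]
    have key : (xq n)^2/(xq n + 1)^2 ≤ xq n/(xq n + 1) := by
      rw [div_le_div_iff₀ (by positivity) hp1]
      nlinarith
    have key2 : xq n/(xq n + 1) ≤ 1 - 1/((n:ℝ)+1) := by
      rw [div_le_iff₀ hp1]
      have : 1/((n:ℝ)+1) ≤ 1/(xq n + 1) := by
        apply div_le_div_of_nonneg_left (by norm_num) hp1 (by linarith)
      have h3 : (1/(xq n + 1)) * (xq n + 1) = 1 := by field_simp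
      nlinarith [mul_le_mul_of_nonneg_right this hp1.le]
    have h5 : (1/((n:ℝ)+1)) * ((n:ℝ)+1) = 1 := by field_simp
    nlinarith [mul_nonneg (by linarith [key, key2] :
      (0:ℝ) ≤ 1 - (xq n)^2/(xq n+1)^2 - 1/((n:ℝ)+1)) hp2.le, h5]
  linarith

lemma window_le : Real.pi / Real.sqrt (qc n (jz1 n + 1)) ≤ Real.pi * Real.sqrt ((n:ℝ)+1) := by
  have hp2 : (0:ℝ) < (n:ℝ)+1 := by positivity
  have hq0 : 0 < qc n (jz1 n + 1) := lt_of_lt_of_le (by positivity) (qc_win hn)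
  have h1 : Real.sqrt (1/((n:ℝ)+1)) ≤ Real.sqrt (qc n (jz1 n + 1)) :=
    Real.sqrt_le_sqrt (qc_win hn)
  have h2 : Real.sqrt (1/((n:ℝ)+1)) = 1/Real.sqrt ((n:ℝ)+1) := by
    rw [one_div, one_div, Real.sqrt_inv]
  have h3 : 0 < Real.sqrt (1/((n:ℝ)+1)) := Real.sqrt_pos.2 (by positivity)
  calc Real.pi / Real.sqrt (qc n (jz1 n + 1)) ≤ Real.pi / Real.sqrt (1/((n:ℝ)+1)) :=
        div_le_div_of_nonneg_left Real.pi_pos.le h3 h1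
    _ = Real.pi * Real.sqrt ((n:ℝ)+1) := by
        rw [h2]
        field_simp

lemma Zset2_sub : ∃ z ∈ Zset2 n, z ≤ jz1 n + 1 + Real.pi * Real.sqrt ((n:ℝ)+1) := by
  obtain ⟨z, hz, hz0⟩ := zero_in_window hn (a := jz1 n + 1) (by linarith [jz1_gt_xq hn])
  refine ⟨z, ⟨by linarith [hz.1], hz0⟩, ?_⟩
  have := hz.2
  have hw := window_le hn
  linarith

lemma jz2_struct : jz1 n < jz2 n ∧ Jh n (jz2 n) = 0 ∧
    (∀ x ∈ Set.Ioo (jz1 n) (jz2 n), Jh n x < 0) ∧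
    jz2 n ≤ jz1 n + 1 + Real.pi * Real.sqrt ((n:ℝ)+1) := by
  obtain ⟨u0, hu0, hneg⟩ := exists_neg_right hn
  have hZeq : Zset2 n = {x | u0 ≤ x ∧ Jh n x = 0} := by
    ext x
    constructor
    · rintro ⟨hx1, hx2⟩
      refine ⟨?_, hx2⟩
      by_contra hlt
      push_neg at hlt
      exact absurd hx2 (ne_of_lt (hneg x ⟨hx1, hlt⟩))
    · rintro ⟨hx1, hx2⟩
      exact ⟨lt_of_lt_of_le hu0 hx1, hx2⟩
  obtain ⟨z0, hz0mem, hz0le⟩ := Zset2_sub hn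
  have hbdd : BddBelow (Zset2 n) := by
    rw [hZeq]; exact ⟨u0, fun x hx => hx.1⟩
  have hmem : jz2 n ∈ Zset2 n := by
    rw [jz2, hZeq]
    apply IsClosed.csInf_mem
    · exact (isClosed_le continuous_const continuous_id).inter
        (isClosed_eq (continuous_Jh n) continuous_const)
    · rw [← hZeq]; exact ⟨z0, hz0mem⟩
    · rw [← hZeq]; exact hbdd
  have hlt12 : jz1 n < jz2 n := hmem.1
  have hle : jz2 n ≤ jz1 n + 1 + Real.pi * Real.sqrt ((n:ℝ)+1) :=
    le_trans (csInf_le hbdd hz0mem) hz0le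
  refine ⟨hlt12, hmem.2, ?_, hle⟩
  intro x hx
  rcases lt_or_ge x u0 with hxu | hxu
  · exact hneg x ⟨hx.1, hxu⟩
  · by_contra hc
    push_neg at hc
    rcases eq_or_lt_of_le hc with heq | hpos
    · have : x ∈ Zset2 n := ⟨hx.1, heq.symm⟩
      exact absurd (csInf_le hbdd this) (not_le.2 hx.2)
    · set w := (jz1 n + u0)/2 with hw
      have hw1 : jz1 n < w := by rw [hw]; linarith
      have hw2 : w < u0 := by rw [hw]; linarith
      have hwneg : Jh n w < 0 := hneg w ⟨hw1, hw2⟩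
      have hwx : w ≤ x := by linarith
      obtain ⟨z, hz, hzval⟩ := intermediate_value_Icc hwx
        ((continuous_Jh n).continuousOn) (Set.mem_Icc.2 ⟨hwneg.le, hpos.le⟩)
      have : z ∈ Zset2 n := ⟨lt_of_lt_of_le hw1 hz.1, hzval⟩
      exact absurd (csInf_le hbdd this) (not_le.2 (lt_of_le_of_lt hz.2 hx.2))

lemma jz2_gt : jz1 n < jz2 n := (jz2_struct hn).1
lemma jz2_zero : Jh n (jz2 n) = 0 := (jz2_struct hn).2.1
lemma jz2_pos : 0 < jz2 n := lt_trans (jz1_pos hn) (jz2_gt hn)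
lemma Jh_neg_between : ∀ x ∈ Set.Ioo (jz1 n) (jz2 n), Jh n x < 0 := (jz2_struct hn).2.2.1
lemma jz2_le : jz2 n ≤ jz1 n + 1 + Real.pi * Real.sqrt ((n:ℝ)+1) := (jz2_struct hn).2.2.2

lemma Jd_jz2_pos : 0 < Jd n (jz2 n) := by
  have hle : 0 ≤ Jd n (jz2 n) := by
    have hd : HasDerivAt (fun x => -(Jh n x)) (-(Jd n (jz2 n))) (jz2 n) :=
      (hasDerivAt_Jh' hn (jz2_pos hn).ne').neg
    have := deriv_nonpos_left (jz2_gt hn) hd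
      (fun x hx => by
        have := Jh_neg_between hn x hx
        simpa using this)
      (by rw [jz2_zero hn]; ring)
    linarith
  rcases eq_or_lt_of_le hle with heq | hlt
  · exfalso
    have hu1 : u1 n (jz2 n) = 0 := by
      rw [u1, jz2_zero hn, ← heq]
      simp
    have huf : uf n (jz2 n) = 0 := by rw [uf, jz2_zero hn]; ring
    have hEj : En n (jz2 n) = 0 := by rw [En, hu1, huf]; ring
    set s := (jz1 n + jz2 n)/2 with hs
    have hs1 : jz1 n < s := by rw [hs]; have := jz2_gt hn; linarith
    have hs2 : s < jz2 n := by rw [hs]; have := jz2_gt hn; linarith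
    have hspos : 0 < s := lt_trans (jz1_pos hn) hs1
    have hqs : 0 < qc n s := qc_pos_of_gt hn (lt_trans (jz1_gt_xq hn) hs1)
    have hufs : uf n s < 0 :=
      mul_neg_of_pos_of_neg (Real.sqrt_pos.2 hspos) (Jh_neg_between hn s ⟨hs1, hs2⟩)
    have hEs : 0 < En n s := by
      rw [En]
      have h4 : 0 < (uf n s)^2 := by nlinarith [hufs]
      nlinarith [sq_nonneg (u1 n s), mul_pos hqs h4]
    have := En_mono hn hspos hs2.le
    rw [hEj] at this
    linarith
  · exact hlt

end


lemma jz1_le_window {n : ℕ} (hn : 1 ≤ n) {β : ℝ} (hβ : 1 < β) :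
    jz1 n ≤ β*(n:ℝ) + Real.pi / Real.sqrt (1 - 1/β^2) := by
  have hn1 : (1:ℝ) ≤ (n:ℝ) := by exact_mod_cast hn
  have ha : xq n < β*(n:ℝ) := lt_of_le_of_lt (xq_le_n hn) (by nlinarith)
  have hapos : 0 < β*(n:ℝ) := by nlinarith
  obtain ⟨z, hz, hz0⟩ := zero_in_window hn ha
  have hzZ : z ∈ Zset n := ⟨lt_of_lt_of_le hapos hz.1, hz0⟩
  have h1 : jz1 n ≤ z := csInf_le (Zset_bddBelow hn) hzZ
  -- bound the window width
  have hc1 : (0:ℝ) < 1 - 1/β^2 := by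
    have : 1/β^2 < 1 := by
      rw [div_lt_one (by nlinarith)]
      nlinarith
    linarith
  have hqa : 1 - 1/β^2 ≤ qc n (β*(n:ℝ)) := by
    rw [qc]
    have h2 : ((n:ℝ)^2 - 1/4)/(β*(n:ℝ))^2 ≤ 1/β^2 := by
      rw [div_le_div_iff₀ (by positivity) (by positivity)]
      nlinarith
    linarith
  have hwin : Real.pi / Real.sqrt (qc n (β*(n:ℝ))) ≤ Real.pi / Real.sqrt (1 - 1/β^2) :=
    div_le_div_of_nonneg_left Real.pi_pos.le (Real.sqrt_pos.2 hc1) (Real.sqrt_le_sqrt hqa)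
  have := hz.2
  linarith

lemma Jm1_eq_Jd {m : ℕ} (hm : 2 ≤ m) {x : ℝ} (hx : x ≠ 0) (hz : Jh m x = 0) :
    Jh (m-1) x = Jd m x := by
  have hrec := Jh_rec (n := m-1) hx
  have e1 : m-1+2 = m+1 := by omega
  have e2 : m-1+1 = m := by omega
  rw [e1, e2, hz, mul_zero] at hrec
  rw [Jd, hz, mul_zero, zero_sub]
  linarith

lemma besselJZero_one_eq {m : ℕ} (hm : 1 ≤ m) : besselJZero (m:ℝ) 1 = jz1 m := by
  have e : besselJZero (m:ℝ) 1 = sInf {x : ℝ | besselJZero (m:ℝ) 0 < x ∧ besselJ (m:ℝ) x = 0} := rfl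
  rw [e]
  have e0 : besselJZero (m:ℝ) 0 = 0 := rfl
  rw [e0, jz1]
  congr 1
  ext x
  simp only [Set.mem_setOf_eq, Zset]
  constructor
  · rintro ⟨h1, h2⟩; exact ⟨h1, by rwa [besselJ_eq h1] at h2⟩
  · rintro ⟨h1, h2⟩; exact ⟨h1, by rwa [besselJ_eq h1]⟩

lemma besselJZero_two_eq {m : ℕ} (hm : 1 ≤ m) : besselJZero (m:ℝ) 2 = jz2 m := by
  have e : besselJZero (m:ℝ) 2 = sInf {x : ℝ | besselJZero (m:ℝ) 1 < x ∧ besselJ (m:ℝ) x = 0} := rfl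
  rw [e, besselJZero_one_eq hm, jz2]
  congr 1
  ext x
  simp only [Set.mem_setOf_eq, Zset2]
  constructor
  · rintro ⟨h1, h2⟩
    exact ⟨h1, by rwa [besselJ_eq (lt_trans (jz1_pos hm) h1)] at h2⟩
  · rintro ⟨h1, h2⟩
    exact ⟨h1, by rwa [besselJ_eq (lt_trans (jz1_pos hm) h1)]⟩

noncomputable def Afun (μ τ : ℝ) (m : ℕ) (k : ℝ) : ℝ := 2*μ*((m:ℝ)^2-1) - τ^2*k^2

noncomputable def Pfun (μ δ τ : ℝ) (m : ℕ) (k : ℝ) : ℝ :=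
  Afun μ τ m k * Jh (m-1) k
    + ((m:ℝ)*τ^2*k - 2*μ*((m:ℝ)^2-1)*(m:ℝ)/k + δ*τ^2*k) * Jh m k

lemma continuous_Afun (μ τ : ℝ) (m : ℕ) : Continuous (Afun μ τ m) := by
  apply Continuous.sub continuous_const
  exact continuous_const.mul (continuous_pow 2)

lemma fAE_eq {μ δ τ : ℝ} {m : ℕ} (hm : 1 ≤ m) {k : ℝ} (hk : 0 < k) :
    fAE μ δ τ m k = Pfun μ δ τ m k * besselJ (m:ℝ) (τ*k) := by
  rw [fAE, Pfun, Afun, besselJ_eq hk, besselJ_eq' hm hk]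
  ring

lemma Pfun_at_zero {μ δ τ : ℝ} {m : ℕ} (hm : 2 ≤ m) {x : ℝ} (hx : 0 < x)
    (hz : Jh m x = 0) : Pfun μ δ τ m x = Afun μ τ m x * Jd m x := by
  rw [Pfun, hz, Jm1_eq_Jd hm hx.ne' hz]
  ring

/-- core: if the factor `A` does not vanish on `[j1, j2]`, then `fAE` has a zero inside. -/
lemma final_core {m : ℕ} (hm : 2 ≤ m) (μ δ τ : ℝ)
    (hA : ∀ k ∈ Set.Icc (jz1 m) (jz2 m), Afun μ τ m k ≠ 0) :
    ∃ k ∈ Set.Ioo (jz1 m) (jz2 m), fAE μ δ τ m k = 0 := by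
  have hm1 : 1 ≤ m := by omega
  have hj1 := jz1_pos hm1
  have hj12 := jz2_gt hm1
  have hkpos : ∀ k ∈ Set.Icc (jz1 m) (jz2 m), 0 < k := fun k hk => lt_of_lt_of_le hj1 hk.1
  have hAcont := continuous_Afun μ τ m
  -- A has the same sign at both endpoints
  have hsame : 0 < Afun μ τ m (jz1 m) * Afun μ τ m (jz2 m) := by
    rcases lt_trichotomy (Afun μ τ m (jz1 m) * Afun μ τ m (jz2 m)) 0 with hneg | hzero | hpos
    · exfalso
      rcases mul_neg_iff.1 hneg with ⟨h1, h2⟩ | ⟨h1, h2⟩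
      · obtain ⟨z, hz, hz0⟩ := intermediate_value_Icc' hj12.le hAcont.continuousOn
          (Set.mem_Icc.2 ⟨h2.le, h1.le⟩)
        exact hA z hz hz0
      · obtain ⟨z, hz, hz0⟩ := intermediate_value_Icc hj12.le hAcont.continuousOn
          (Set.mem_Icc.2 ⟨h1.le, h2.le⟩)
        exact hA z hz hz0
    · exfalso
      rcases mul_eq_zero.1 hzero with hz | hz
      · exact hA _ (Set.left_mem_Icc.2 hj12.le) hz
      · exact hA _ (Set.right_mem_Icc.2 hj12.le) hz
    · exact hpos
  have hPj1 : Pfun μ δ τ m (jz1 m) = Afun μ τ m (jz1 m) * Jd m (jz1 m) :=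
    Pfun_at_zero hm hj1 (jz1_zero hm1)
  have hPj2 : Pfun μ δ τ m (jz2 m) = Afun μ τ m (jz2 m) * Jd m (jz2 m) :=
    Pfun_at_zero hm (lt_trans hj1 hj12) (jz2_zero hm1)
  have hd1 := Jd_jz1_neg hm1
  have hd2 := Jd_jz2_pos hm1
  have hPsign : Pfun μ δ τ m (jz1 m) * Pfun μ δ τ m (jz2 m) < 0 := by
    rw [hPj1, hPj2]
    have hh := mul_pos hsame (neg_pos.2 (mul_neg_of_neg_of_pos hd1 hd2))
    nlinarith [hh]
  have hPcont : ContinuousOn (Pfun μ δ τ m) (Set.Icc (jz1 m) (jz2 m)) := by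
    unfold Pfun
    apply ContinuousOn.add
    · exact hAcont.continuousOn.mul (continuous_Jh (m-1)).continuousOn
    · apply ContinuousOn.mul ?_ (continuous_Jh m).continuousOn
      apply ContinuousOn.add
      apply ContinuousOn.sub
      · exact (continuous_const.mul continuous_id).continuousOn
      · exact continuousOn_const.div continuousOn_id (fun k hk => (hkpos k hk).ne')
      · exact (continuous_const.mul continuous_id).continuousOn
  rcases mul_neg_iff.1 hPsign with ⟨h1, h2⟩ | ⟨h1, h2⟩
  · obtain ⟨k, hk, hk0⟩ := intermediate_value_Ioo' hj12.le hPcont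
      (Set.mem_Ioo.2 ⟨h2, h1⟩)
    refine ⟨k, hk, ?_⟩
    rw [fAE_eq hm1 (lt_trans hj1 hk.1), hk0, zero_mul]
  · obtain ⟨k, hk, hk0⟩ := intermediate_value_Ioo hj12.le hPcont
      (Set.mem_Ioo.2 ⟨h1, h2⟩)
    refine ⟨k, hk, ?_⟩
    rw [fAE_eq hm1 (lt_trans hj1 hk.1), hk0, zero_mul]


lemma arith1 {p e m : ℝ} (hp : 0 < p) (he : 0 < e) (hm : 1 ≤ m) (h6 : 16*p^2 ≤ e^2*m) :
    p^2*(m+1) ≤ e^2/4*m^2 := by nlinarith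

lemma arith2 {τ k β ε m s : ℝ} (hτ0 : 0 < τ) (hτ1 : τ < 1) (hk : k ≤ (β+ε)*m)
    (hε : 0 < ε) (hm : 0 ≤ m) (hs : τ*β + ε = s) : τ*k ≤ s*m := by
  nlinarith [mul_le_mul_of_nonneg_left hk hτ0.le,
    mul_nonneg (mul_nonneg (by linarith : (0:ℝ) ≤ 1-τ) hε.le) hm]

lemma arith3 {μ s m t : ℝ} (h7 : 2*μ < m^2*(2*μ - s^2)) (hA2 : t ≤ s^2*m^2) :
    0 < 2*μ*(m^2-1) - t := by nlinarith

theorem main (μ δ τ : ℝ) (hμ : 0 < μ) (hδ : 0 < δ) (hτ : τ ∈ Set.Ioo (0 : ℝ) 1) :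
    ∃ M : ℕ, ∀ m : ℕ, M ≤ m →
      ∃ k ∈ Set.Ioo (besselJZero (m : ℝ) 1) (besselJZero (m : ℝ) 2), fAE μ δ τ m k = 0 := by
  obtain ⟨hτ0, hτ1⟩ := hτ
  rcases le_or_gt (2*μ) (τ^2) with hcase | hcase
  · -- A is negative on [j1, j2]
    refine ⟨2, fun m hm => ?_⟩
    have hm1 : 1 ≤ m := by omega
    rw [besselJZero_one_eq hm1, besselJZero_two_eq hm1]
    apply final_core (by omega)
    intro k hk
    have hj1 := jz1_pos hm1
    have hsq := jz1_sq hm1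
    have hk2 : (m:ℝ)^2 - 1/4 < k^2 :=
      lt_of_lt_of_le hsq (pow_le_pow_left₀ hj1.le hk.1 2)
    have hneg : Afun μ τ m k < 0 := by
      rw [Afun]
      nlinarith [mul_nonneg (sub_nonneg.2 hcase) (sq_nonneg k),
        mul_lt_mul_of_pos_left hk2 (by linarith : (0:ℝ) < 2*μ)]
    exact hneg.ne
  · -- A is positive on [j1, j2] for large m
    obtain ⟨r, hr⟩ : ∃ r, r = Real.sqrt (2*μ) := ⟨_, rfl⟩
    have hr2 : r^2 = 2*μ := by rw [hr]; exact Real.sq_sqrt (by linarith)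
    have hrpos : 0 < r := by rw [hr]; exact Real.sqrt_pos.2 (by linarith)
    have hτr : τ < r := by nlinarith
    obtain ⟨β, hβdef⟩ : ∃ b, b = (1 + r/τ)/2 := ⟨_, rfl⟩
    have hrτ1 : 1 < r/τ := by rw [lt_div_iff₀ hτ0]; linarith
    have hβ1 : 1 < β := by rw [hβdef]; linarith
    have hβpos : 0 < β := by linarith
    have hτβ : τ*β < r := by
      rw [hβdef]
      have : τ * ((1 + r/τ)/2) = (τ + r)/2 := by field_simp
      rw [this]
      linarith
    have hτβpos : 0 < τ*β := mul_pos hτ0 hβpos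
    obtain ⟨s, hsdef⟩ : ∃ s, s = (τ*β + r)/2 := ⟨_, rfl⟩
    have hs1 : τ*β < s := by rw [hsdef]; linarith
    have hs2 : s < r := by rw [hsdef]; linarith
    have hs0 : 0 < s := by linarith
    have hs2' : s^2 < 2*μ := by nlinarith
    obtain ⟨ε, hεdef⟩ : ∃ e, e = s - τ*β := ⟨_, rfl⟩
    have hε : 0 < ε := by rw [hεdef]; linarith
    obtain ⟨D, hDdef⟩ : ∃ d, d = Real.pi / Real.sqrt (1 - 1/β^2) + 1 := ⟨_, rfl⟩
    have hc1 : (0:ℝ) < 1 - 1/β^2 := by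
      have h5 : 1/β^2 < 1 := by
        rw [div_lt_one (by nlinarith)]
        nlinarith
      linarith
    have hD0 : 0 < D := by
      rw [hDdef]
      have := div_pos Real.pi_pos (Real.sqrt_pos.2 hc1)
      linarith
    obtain ⟨M1, hM1⟩ := exists_nat_ge (2*D/ε)
    obtain ⟨M2, hM2⟩ := exists_nat_ge (16*Real.pi^2/ε^2)
    obtain ⟨M3, hM3⟩ := exists_nat_ge (2*μ/(2*μ - s^2))
    refine ⟨max (max M1 M2) (max (M3+1) 2), fun m hm => ?_⟩
    have hm2 : 2 ≤ m := le_trans (le_max_right _ _ |>.trans' (le_max_right _ _)) hm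
    have hm1 : 1 ≤ m := by omega
    have hmR : (1:ℝ) ≤ (m:ℝ) := by exact_mod_cast hm1
    have hmM1 : (M1:ℝ) ≤ (m:ℝ) := by
      have : M1 ≤ m := le_trans ((le_max_left M1 M2).trans (le_max_left _ _)) hm
      exact_mod_cast this
    have hmM2 : (M2:ℝ) ≤ (m:ℝ) := by
      have : M2 ≤ m := le_trans ((le_max_right M1 M2).trans (le_max_left _ _)) hm
      exact_mod_cast this
    have hmM3 : (M3:ℝ)+1 ≤ (m:ℝ) := by
      have : M3+1 ≤ m := le_trans ((le_max_left (M3+1) 2).trans (le_max_right _ _)) hm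
      exact_mod_cast this
    rw [besselJZero_one_eq hm1, besselJZero_two_eq hm1]
    apply final_core hm2
    intro k hk
    have hj1 := jz1_pos hm1
    have hk0 : 0 < k := lt_of_lt_of_le hj1 hk.1
    -- upper bound for k
    have hb1 : jz1 m ≤ β*(m:ℝ) + (D - 1) := by
      have := jz1_le_window hm1 hβ1
      rw [hDdef]
      linarith
    have hb2 : k ≤ β*(m:ℝ) + D + Real.pi*Real.sqrt ((m:ℝ)+1) := by
      have := jz2_le hm1
      have hkj2 := hk.2
      linarith
    have hsqrtb : Real.pi*Real.sqrt ((m:ℝ)+1) ≤ (ε/2)*(m:ℝ) := by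
      have h1 : (Real.pi*Real.sqrt ((m:ℝ)+1))^2 = Real.pi^2 * ((m:ℝ)+1) := by
        rw [mul_pow, Real.sq_sqrt (by positivity)]
      have hkey : Real.pi^2*((m:ℝ)+1) ≤ ε^2/4*(m:ℝ)^2 := by
        have hεm : 16*Real.pi^2/ε^2 ≤ (m:ℝ) := le_trans hM2 hmM2
        have h6 : 16*Real.pi^2 ≤ ε^2*(m:ℝ) := by
          rw [div_le_iff₀ (by positivity)] at hεm
          linarith
        exact arith1 Real.pi_pos hε hmR h6
      have h3 : (Real.pi*Real.sqrt ((m:ℝ)+1))^2 ≤ ((ε/2)*(m:ℝ))^2 := by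
        rw [h1]
        calc Real.pi^2*((m:ℝ)+1) ≤ ε^2/4*(m:ℝ)^2 := hkey
          _ = ((ε/2)*(m:ℝ))^2 := by ring
      calc Real.pi*Real.sqrt ((m:ℝ)+1)
          = Real.sqrt ((Real.pi*Real.sqrt ((m:ℝ)+1))^2) := (Real.sqrt_sq (by positivity)).symm
        _ ≤ Real.sqrt (((ε/2)*(m:ℝ))^2) := Real.sqrt_le_sqrt h3
        _ = (ε/2)*(m:ℝ) := Real.sqrt_sq (by positivity)
    have hD2 : D ≤ (ε/2)*(m:ℝ) := by
      have hεm : 2*D/ε ≤ (m:ℝ) := le_trans hM1 hmM1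
      rw [div_le_iff₀ hε] at hεm
      linarith
    have hkb : k ≤ (β + ε)*(m:ℝ) := by
      have e0 : (β + ε)*(m:ℝ) = β*(m:ℝ) + ε*(m:ℝ) := by ring
      rw [e0]
      linarith
    have hsum : τ*β + ε = s := by rw [hεdef]; ring
    have hτk : τ*k ≤ s*(m:ℝ) := arith2 hτ0 hτ1 hkb hε (by linarith) hsum
    have hA2 : τ^2*k^2 ≤ s^2*(m:ℝ)^2 := by
      have h8 := pow_le_pow_left₀ (by positivity : (0:ℝ) ≤ τ*k) hτk 2
      calc τ^2*k^2 = (τ*k)^2 := by ring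
        _ ≤ (s*(m:ℝ))^2 := h8
        _ = s^2*(m:ℝ)^2 := by ring
    have h2μs : 0 < 2*μ - s^2 := by linarith
    have hm2b : 2*μ/(2*μ - s^2) < (m:ℝ)^2 := by
      have h9 : 2*μ/(2*μ - s^2) < (m:ℝ) := by linarith [hM3, hmM3]
      have hmm : (m:ℝ) ≤ (m:ℝ)^2 := by
        calc (m:ℝ) = (m:ℝ)*1 := by ring
          _ ≤ (m:ℝ)*(m:ℝ) := mul_le_mul_of_nonneg_left hmR (by linarith)
          _ = (m:ℝ)^2 := by ring
      linarith
    have hApos : 0 < Afun μ τ m k := by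
      rw [Afun]
      rw [div_lt_iff₀ h2μs] at hm2b
      exact arith3 hm2b hA2
    exact hApos.ne'


end AE

/-- For fixed `μ > 0`, `δ > 0`, `τ ∈ (0,1)`, for all sufficiently large `m` the function
`f_m` has a zero in `(j_{m,1}, j_{m,2})`. -/
theorem fAE_has_zero_between_first_two_bessel_zeros
    (μ δ τ : ℝ) (hμ : 0 < μ) (hδ : 0 < δ) (hτ : τ ∈ Set.Ioo (0 : ℝ) 1) :
    ∃ M : ℕ, ∀ m : ℕ, M ≤ m →
      ∃ k ∈ Set.Ioo (besselJZero (m : ℝ) 1) (besselJZero (m : ℝ) 2), fAE μ δ τ m k = 0 := by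
  exact AE.main μ δ τ hμ hδ hτ
end

section
/- Fix μ > 0, δ > 0 and τ ∈ (0,1). Then there exists M ∈ ℕ such that for every integer m ≥ M one has f_m(j_{m,1})·f_m(j_{m,2}) < 0. -/
open Real Set Filter Topology

namespace BesselAux

noncomputable def a (ν : ℝ) (k : ℕ) : ℝ :=
  (-1) ^ k / (Nat.factorial k * Real.Gamma ((k : ℝ) + ν + 1))

lemma Gamma_arg_pos {ν : ℝ} (hν : 0 ≤ ν) (k : ℕ) : 0 < (k : ℝ) + ν + 1 := by positivity

lemma Gamma_pos {ν : ℝ} (hν : 0 ≤ ν) (k : ℕ) : 0 < Real.Gamma ((k:ℝ) + ν + 1) :=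
  Real.Gamma_pos_of_pos (Gamma_arg_pos hν k)

lemma fact_Gamma_le {ν : ℝ} (hν : 0 ≤ ν) (k : ℕ) :
    (k.factorial : ℝ) * Real.Gamma (ν + 1) ≤ Real.Gamma ((k:ℝ) + ν + 1) := by
  induction k with
  | zero => simp
  | succ n ih =>
      have h1 : ((n:ℝ) + ν + 1) ≠ 0 := (Gamma_arg_pos hν n).ne'
      have h2 : Real.Gamma ((n:ℝ) + ν + 1 + 1) = ((n:ℝ)+ν+1) * Real.Gamma ((n:ℝ)+ν+1) :=
        Real.Gamma_add_one h1
      have hcast : ((n+1:ℕ):ℝ) + ν + 1 = ((n:ℝ) + ν + 1) + 1 := by push_cast; ring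
      rw [hcast, h2]
      calc ((n+1).factorial : ℝ) * Real.Gamma (ν+1)
          = ((n:ℝ)+1) * ((n.factorial:ℝ) * Real.Gamma (ν+1)) := by
            push_cast [Nat.factorial_succ]; ring
        _ ≤ ((n:ℝ)+ν+1) * Real.Gamma ((n:ℝ)+ν+1) := by
            have hb : (0:ℝ) < (n.factorial:ℝ) * Real.Gamma (ν+1) := by
              have := Real.Gamma_pos_of_pos (show (0:ℝ) < ν + 1 by linarith)
              positivity
            apply mul_le_mul (by linarith) ih hb.le (by positivity)

lemma abs_a_le {ν : ℝ} (hν : 0 ≤ ν) (k : ℕ) :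
    |a ν k| ≤ (Real.Gamma (ν+1))⁻¹ * ((k.factorial:ℝ))⁻¹ := by
  have hG := Gamma_pos hν k
  have hG1 : 0 < Real.Gamma (ν+1) := Real.Gamma_pos_of_pos (by linarith)
  have hf : (0:ℝ) < (k.factorial:ℝ) := by exact_mod_cast k.factorial_pos
  have h1 : |a ν k| = ((k.factorial:ℝ) * Real.Gamma ((k:ℝ)+ν+1))⁻¹ := by
    rw [a, abs_div, abs_pow, abs_neg, abs_one, one_pow]
    rw [abs_of_pos (by positivity)]
    exact one_div _
  rw [h1, ← mul_inv]
  apply inv_anti₀ (by positivity)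
  calc Real.Gamma (ν+1) * (k.factorial:ℝ) = (k.factorial:ℝ) * Real.Gamma (ν+1) := by ring
    _ ≤ Real.Gamma ((k:ℝ)+ν+1) := fact_Gamma_le hν k
    _ ≤ (k.factorial:ℝ) * Real.Gamma ((k:ℝ)+ν+1) := by
        nlinarith [hG, (show (1:ℝ) ≤ (k.factorial:ℝ) by exact_mod_cast k.factorial_pos)]

lemma a_rec {ν : ℝ} (hν : 0 ≤ ν) (k : ℕ) :
    a ν (k+1) * (((k:ℝ)+1) * ((k:ℝ)+ν+1)) = - a ν k := by
  have h1 : ((k:ℝ) + ν + 1) ≠ 0 := (Gamma_arg_pos hν k).ne'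
  have hG := (Gamma_pos hν k).ne'
  have hf : ((k.factorial:ℝ)) ≠ 0 := by positivity
  have hcast : ((k+1:ℕ):ℝ) + ν + 1 = ((k:ℝ) + ν + 1) + 1 := by push_cast; ring
  rw [a, a, hcast, Real.Gamma_add_one h1]
  rw [pow_succ]
  push_cast [Nat.factorial_succ]
  field_simp

lemma a_succ_abs {ν : ℝ} (hν : 0 ≤ ν) (k : ℕ) :
    (((k:ℝ)+1)) * |a ν (k+1)| ≤ |a ν k| := by
  have h := congrArg abs (a_rec hν k)
  rw [abs_mul, abs_neg, abs_mul] at h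
  rw [abs_of_pos (show (0:ℝ) < (k:ℝ)+1 by positivity),
    abs_of_pos (Gamma_arg_pos hν k)] at h
  have h2 : (0:ℝ) ≤ ((k:ℝ)+1) * |a ν (k+1)| := by positivity
  nlinarith [abs_nonneg (a ν (k+1)), Gamma_arg_pos hν k]

lemma a_succ2_abs {ν : ℝ} (hν : 0 ≤ ν) (k : ℕ) :
    (((k:ℝ)+2)) * (((k:ℝ)+1)) * |a ν (k+2)| ≤ |a ν k| := by
  have h1 := a_succ_abs hν (k+1)
  have h2 := a_succ_abs hν k
  push_cast at h1
  have h3 : ((k:ℝ)+2) * (((k:ℝ)+1)) * |a ν (k+2)| ≤ ((k:ℝ)+1) * |a ν (k+1)| := by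
    nlinarith [abs_nonneg (a ν (k+2))]
  linarith


lemma summable_abs_R {ν : ℝ} (hν : 0 ≤ ν) {R : ℝ} (hR : 0 ≤ R) :
    Summable (fun k : ℕ => |a ν k| * R ^ k) := by
  have hG1 : 0 < Real.Gamma (ν+1) := Real.Gamma_pos_of_pos (by linarith)
  refine Summable.of_nonneg_of_le (fun k => by positivity) (fun k => ?_)
    ((Real.summable_pow_div_factorial R).mul_left ((Real.Gamma (ν+1))⁻¹))
  have h1 := abs_a_le hν k
  calc |a ν k| * R ^ k ≤ ((Real.Gamma (ν+1))⁻¹ * ((k.factorial:ℝ))⁻¹) * R ^ k :=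
      mul_le_mul_of_nonneg_right h1 (by positivity)
    _ = (Real.Gamma (ν+1))⁻¹ * (R ^ k / (k.factorial:ℝ)) := by ring

lemma summable_a_pow {ν : ℝ} (hν : 0 ≤ ν) (y : ℝ) :
    Summable (fun k : ℕ => a ν k * y ^ k) := by
  apply Summable.of_abs
  refine (summable_abs_R hν (abs_nonneg y)).congr fun k => ?_
  rw [abs_mul, abs_pow]

lemma summable_a1_pow {ν : ℝ} (hν : 0 ≤ ν) (y : ℝ) :
    Summable (fun k : ℕ => ((k:ℝ)+1) * a ν (k+1) * y ^ k) := by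
  apply Summable.of_abs
  refine Summable.of_nonneg_of_le (fun k => abs_nonneg _) (fun k => ?_)
    (summable_abs_R hν (abs_nonneg y))
  rw [abs_mul, abs_mul, abs_pow, abs_of_pos (show (0:ℝ) < (k:ℝ)+1 by positivity)]
  exact mul_le_mul_of_nonneg_right (a_succ_abs hν k) (by positivity)

lemma summable_a2_pow {ν : ℝ} (hν : 0 ≤ ν) (y : ℝ) :
    Summable (fun k : ℕ => ((k:ℝ)+2) * ((k:ℝ)+1) * a ν (k+2) * y ^ k) := by
  apply Summable.of_abs
  refine Summable.of_nonneg_of_le (fun k => abs_nonneg _) (fun k => ?_)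
    (summable_abs_R hν (abs_nonneg y))
  rw [abs_mul, abs_mul, abs_mul, abs_pow,
    abs_of_pos (show (0:ℝ) < (k:ℝ)+2 by positivity),
    abs_of_pos (show (0:ℝ) < (k:ℝ)+1 by positivity)]
  exact mul_le_mul_of_nonneg_right (a_succ2_abs hν k) (by positivity)

/-- the entire function `H ν y = ∑ a ν k yᵏ`, so that `J ν x = (x/2)^ν H ν ((x/2)²)`. -/
noncomputable def Hf (ν : ℝ) (y : ℝ) : ℝ := ∑' k : ℕ, a ν k * y ^ k
noncomputable def H1 (ν : ℝ) (y : ℝ) : ℝ := ∑' k : ℕ, ((k:ℝ)+1) * a ν (k+1) * y ^ k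
noncomputable def H2 (ν : ℝ) (y : ℝ) : ℝ := ∑' k : ℕ, ((k:ℝ)+2) * ((k:ℝ)+1) * a ν (k+2) * y ^ k

/-- generic termwise-differentiation helper. -/
lemma hasDerivAt_series {ν : ℝ} (hν : 0 ≤ ν) (c : ℕ → ℝ)
    (hc : ∀ k, |c k| ≤ |a ν k|) (y : ℝ) :
    HasDerivAt (fun z => ∑' k : ℕ, c k * z ^ k)
      (∑' k : ℕ, c k * ((k:ℝ) * y ^ (k-1))) y := by
  set R : ℝ := |y| + 1 with hR
  have hRpos : 0 < R := by positivity
  have hyR : y ∈ Metric.ball (0:ℝ) R := by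
    simp [Real.norm_eq_abs, hR]
  have hsummc : ∀ z : ℝ, |z| ≤ R → Summable (fun k : ℕ => |c k| * |z| ^ k) := by
    intro z hz
    refine Summable.of_nonneg_of_le (fun k => by positivity) (fun k => ?_)
      (summable_abs_R hν hRpos.le)
    exact mul_le_mul (hc k) (pow_le_pow_left₀ (abs_nonneg z) hz k) (by positivity) (abs_nonneg _)
  apply hasDerivAt_tsum_of_isPreconnected
    (u := fun k : ℕ => (k:ℝ) * |c k| * R ^ (k-1))
    (t := Metric.ball (0:ℝ) R) ?_ Metric.isOpen_ball (convex_ball _ _).isPreconnected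
    ?_ ?_ (Metric.mem_ball_self hRpos) ?_ hyR
  · -- Summable bound
    rw [← summable_nat_add_iff 1]
    refine Summable.of_nonneg_of_le (fun k => by positivity) (fun k => ?_)
      (summable_abs_R hν hRpos.le)
    have h1 : ((k+1:ℕ):ℝ) * |c (k+1)| * R ^ (k+1-1) = (((k:ℝ)+1) * |c (k+1)|) * R ^ k := by
      push_cast; norm_num
    rw [h1]
    refine mul_le_mul_of_nonneg_right ?_ (by positivity)
    calc ((k:ℝ)+1) * |c (k+1)| ≤ ((k:ℝ)+1) * |a ν (k+1)| :=
        mul_le_mul_of_nonneg_left (hc (k+1)) (by positivity)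
      _ ≤ |a ν k| := a_succ_abs hν k
  · -- pointwise derivative
    intro k z _
    exact (hasDerivAt_pow k z).const_mul (c k)
  · -- bound on derivative
    intro k z hz
    have hzR : |z| ≤ R := by
      have := mem_ball_iff_norm.mp hz
      simp only [sub_zero, Real.norm_eq_abs] at this
      linarith
    rw [Real.norm_eq_abs, abs_mul, abs_mul, abs_pow,
      abs_of_nonneg (show (0:ℝ) ≤ ((k:ℕ):ℝ) from Nat.cast_nonneg k)]
    calc |c k| * ((k:ℝ) * |z| ^ (k-1)) = (k:ℝ) * |c k| * |z| ^ (k-1) := by ring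
      _ ≤ (k:ℝ) * |c k| * R ^ (k-1) := by
          refine mul_le_mul_of_nonneg_left ?_ (by positivity)
          exact pow_le_pow_left₀ (abs_nonneg z) hzR _
  · -- summable at base point 0
    apply Summable.of_abs
    refine (hsummc 0 (by simp [hRpos.le])).congr fun k => ?_
    rw [abs_mul, abs_pow]

lemma summable_deriv_terms {ν : ℝ} (hν : 0 ≤ ν) (c : ℕ → ℝ)
    (hc : ∀ k, |c k| ≤ |a ν k|) (y : ℝ) :
    Summable (fun k : ℕ => c k * ((k:ℝ) * y ^ (k-1))) := by
  rw [← summable_nat_add_iff 1]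
  apply Summable.of_abs
  refine Summable.of_nonneg_of_le (fun k => abs_nonneg _) (fun k => ?_)
    (summable_abs_R hν (abs_nonneg y))
  have h1 : c (k+1) * (((k+1:ℕ):ℝ) * y ^ (k+1-1))
      = c (k+1) * (((k:ℝ)+1) * y ^ k) := by push_cast; norm_num
  rw [h1, abs_mul, abs_mul, abs_pow, abs_of_pos (show (0:ℝ) < (k:ℝ)+1 by positivity)]
  calc |c (k+1)| * (((k:ℝ)+1) * |y| ^ k) = (((k:ℝ)+1) * |c (k+1)|) * |y| ^ k := by ring
    _ ≤ |a ν k| * |y| ^ k := by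
        refine mul_le_mul_of_nonneg_right ?_ (by positivity)
        calc ((k:ℝ)+1) * |c (k+1)| ≤ ((k:ℝ)+1) * |a ν (k+1)| :=
            mul_le_mul_of_nonneg_left (hc (k+1)) (by positivity)
          _ ≤ |a ν k| := a_succ_abs hν k

lemma deriv_terms_shift {ν : ℝ} (hν : 0 ≤ ν) (c : ℕ → ℝ)
    (hc : ∀ k, |c k| ≤ |a ν k|) (y : ℝ) :
    ∑' k : ℕ, c k * ((k:ℝ) * y ^ (k-1)) = ∑' k : ℕ, ((k:ℝ)+1) * c (k+1) * y ^ k := by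
  rw [Summable.tsum_eq_zero_add (summable_deriv_terms hν c hc y)]
  simp only [Nat.cast_zero, zero_mul, mul_zero, pow_zero, zero_add]
  refine tsum_congr fun k => ?_
  have h : (k+1) - 1 = k := rfl
  rw [h]
  push_cast
  ring

lemma hasDerivAt_Hf {ν : ℝ} (hν : 0 ≤ ν) (y : ℝ) : HasDerivAt (Hf ν) (H1 ν y) y := by
  have h := hasDerivAt_series hν (a ν) (fun k => le_rfl) y
  rw [deriv_terms_shift hν (a ν) (fun k => le_rfl) y] at h
  exact h

lemma c1_abs {ν : ℝ} (hν : 0 ≤ ν) (k : ℕ) :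
    |((k:ℝ)+1) * a ν (k+1)| ≤ |a ν k| := by
  rw [abs_mul, abs_of_pos (show (0:ℝ) < (k:ℝ)+1 by positivity)]
  exact a_succ_abs hν k

lemma hasDerivAt_H1 {ν : ℝ} (hν : 0 ≤ ν) (y : ℝ) : HasDerivAt (H1 ν) (H2 ν y) y := by
  have h := hasDerivAt_series hν (fun k => ((k:ℝ)+1) * a ν (k+1)) (c1_abs hν) y
  rw [deriv_terms_shift hν _ (c1_abs hν) y] at h
  have he : (∑' k : ℕ, ((k:ℝ)+1) * ((((k+1:ℕ)):ℝ)+1) * a ν ((k+1)+1) * y ^ k) = H2 ν y := by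
    refine tsum_congr fun k => ?_
    push_cast
    ring
  have he2 : (∑' k : ℕ, ((k:ℝ)+1) * (((((k+1:ℕ)):ℝ))+1) * a ν ((k+1)+1) * y ^ k)
      = ∑' k : ℕ, ((k:ℝ)+1) * (((((k+1:ℕ)):ℝ)+1) * a ν (k+1+1)) * y ^ k :=
    tsum_congr fun k => by ring
  rw [← he2, he] at h
  exact h

lemma Hf_cont {ν : ℝ} (hν : 0 ≤ ν) : Continuous (Hf ν) :=
  continuous_iff_continuousAt.mpr fun y => (hasDerivAt_Hf hν y).continuousAt

lemma H1_cont {ν : ℝ} (hν : 0 ≤ ν) : Continuous (H1 ν) :=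
  continuous_iff_continuousAt.mpr fun y => (hasDerivAt_H1 hν y).continuousAt

lemma a_nu_sub {ν : ℝ} (hν : 1 ≤ ν) (k : ℕ) : a (ν-1) k = ((k:ℝ) + ν) * a ν k := by
  have h0 : (k:ℝ) + ν ≠ 0 := by positivity
  have h1 : (k:ℝ) + (ν-1) + 1 = (k:ℝ) + ν := by ring
  have h2 : (k:ℝ) + ν + 1 = ((k:ℝ) + ν) + 1 := by ring
  rw [a, a, h1, h2, Real.Gamma_add_one h0]
  have hG : Real.Gamma ((k:ℝ) + ν) ≠ 0 :=
    (Real.Gamma_pos_of_pos (by positivity)).ne'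
  have hf : ((k.factorial:ℕ):ℝ) ≠ 0 := by positivity
  field_simp

lemma summable_k_abs {ν : ℝ} (hν : 0 ≤ ν) (y : ℝ) :
    Summable (fun k : ℕ => (k:ℝ) * |a ν k| * |y| ^ k) := by
  rw [← summable_nat_add_iff 1]
  refine Summable.of_nonneg_of_le (fun k => by positivity) (fun k => ?_)
    ((summable_abs_R hν (abs_nonneg y)).mul_right |y|)
  have h1 : ((k+1:ℕ):ℝ) * |a ν (k+1)| * |y| ^ (k+1)
      = (((k:ℝ)+1) * |a ν (k+1)|) * (|y| ^ k * |y|) := by push_cast; ring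
  rw [h1]
  calc (((k:ℝ)+1) * |a ν (k+1)|) * (|y| ^ k * |y|)
      ≤ |a ν k| * (|y| ^ k * |y|) :=
        mul_le_mul_of_nonneg_right (a_succ_abs hν k) (by positivity)
    _ = |a ν k| * |y| ^ k * |y| := by ring

lemma summable_ka_pow {ν : ℝ} (hν : 0 ≤ ν) (y : ℝ) :
    Summable (fun k : ℕ => (k:ℝ) * a ν k * y ^ k) := by
  apply Summable.of_abs
  refine (summable_k_abs hν y).congr fun k => ?_
  rw [abs_mul, abs_mul, abs_pow, abs_of_nonneg (show (0:ℝ) ≤ (k:ℝ) from Nat.cast_nonneg k)]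

lemma summable_kk_pow {ν : ℝ} (hν : 0 ≤ ν) (y : ℝ) :
    Summable (fun k : ℕ => ((k:ℝ)+1) * (k:ℝ) * a ν (k+1) * y ^ k) := by
  apply Summable.of_abs
  refine Summable.of_nonneg_of_le (fun k => abs_nonneg _) (fun k => ?_)
    (summable_k_abs hν y)
  rw [abs_mul, abs_mul, abs_mul, abs_pow,
    abs_of_pos (show (0:ℝ) < (k:ℝ)+1 by positivity),
    abs_of_nonneg (show (0:ℝ) ≤ (k:ℝ) from Nat.cast_nonneg k)]
  calc ((k:ℝ)+1) * (k:ℝ) * |a ν (k+1)| * |y| ^ k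
      = (k:ℝ) * (((k:ℝ)+1) * |a ν (k+1)|) * |y| ^ k := by ring
    _ ≤ (k:ℝ) * |a ν k| * |y| ^ k := by
        refine mul_le_mul_of_nonneg_right ?_ (by positivity)
        exact mul_le_mul_of_nonneg_left (a_succ_abs hν k) (Nat.cast_nonneg k)

lemma yH1_eq {ν : ℝ} (hν : 0 ≤ ν) (y : ℝ) :
    y * H1 ν y = ∑' k : ℕ, (k:ℝ) * a ν k * y ^ k := by
  rw [H1, ← tsum_mul_left, Summable.tsum_eq_zero_add (summable_ka_pow hν y)]
  simp only [Nat.cast_zero, zero_mul, zero_add]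
  refine tsum_congr fun k => ?_
  push_cast
  ring

lemma yH2_eq {ν : ℝ} (hν : 0 ≤ ν) (y : ℝ) :
    y * H2 ν y = ∑' k : ℕ, ((k:ℝ)+1) * (k:ℝ) * a ν (k+1) * y ^ k := by
  rw [H2, ← tsum_mul_left, Summable.tsum_eq_zero_add (summable_kk_pow hν y)]
  simp only [Nat.cast_zero, zero_mul, mul_zero, zero_add]
  refine tsum_congr fun k => ?_
  push_cast
  ring

lemma I2 {ν : ℝ} (hν : 1 ≤ ν) (y : ℝ) :
    ν * Hf ν y + y * H1 ν y = Hf (ν-1) y := by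
  have hν0 : (0:ℝ) ≤ ν := by linarith
  rw [yH1_eq hν0, Hf, ← tsum_mul_left,
    ← Summable.tsum_add ((summable_a_pow hν0 y).mul_left ν) (summable_ka_pow hν0 y), Hf]
  refine tsum_congr fun k => ?_
  rw [a_nu_sub hν k]
  ring

lemma I1 {ν : ℝ} (hν : 0 ≤ ν) (y : ℝ) :
    Hf ν y + (ν+1) * H1 ν y + y * H2 ν y = 0 := by
  rw [yH2_eq hν, Hf, H1, ← tsum_mul_left,
    ← Summable.tsum_add (summable_a_pow hν y) ((summable_a1_pow hν y).mul_left (ν+1)),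
    ← Summable.tsum_add ((summable_a_pow hν y).add (((summable_a1_pow hν y)).mul_left (ν+1)))
      (summable_kk_pow hν y)]
  rw [show (0:ℝ) = ∑' _ : ℕ, (0:ℝ) by rw [tsum_zero]]
  refine tsum_congr fun k => ?_
  have h := a_rec hν k
  linear_combination (a ν k + ((k:ℝ)+1)*((k:ℝ)+ν+1) * a ν (k+1)) * (y:ℝ) ^ k * 0 + y ^ k * h

noncomputable def uf (ν : ℝ) (x : ℝ) : ℝ := x ^ (ν + 1/2) * Hf ν (x^2/4)

noncomputable def u1f (ν : ℝ) (x : ℝ) : ℝ :=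
  (ν+1/2) * (x ^ (ν - 1/2) * Hf ν (x^2/4)) + x ^ (ν + 3/2) * H1 ν (x^2/4) / 2

lemma hasDerivAt_uf {ν : ℝ} (hν : 0 ≤ ν) {x : ℝ} (hx : 0 < x) :
    HasDerivAt (uf ν) (u1f ν x) x := by
  have h1 : HasDerivAt (fun x : ℝ => x ^ (ν + 1/2)) ((ν+1/2) * x ^ (ν + 1/2 - 1)) x :=
    Real.hasDerivAt_rpow_const (Or.inl hx.ne')
  have h2 : HasDerivAt (fun x : ℝ => x^2/4) (2*x^1/4) x := (hasDerivAt_pow 2 x).div_const 4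
  have h3 : HasDerivAt (fun x : ℝ => Hf ν (x^2/4)) (H1 ν (x^2/4) * (2*x^1/4)) x :=
    by have := (hasDerivAt_Hf hν (x^2/4)).comp x h2; exact this
  have h4 := h1.mul h3
  have e1 : ν + 1/2 - 1 = ν - 1/2 := by ring
  have e2 : x ^ (ν + 3/2) = x ^ (ν + 1/2) * x := by
    rw [show ν + 3/2 = ν + 1/2 + 1 by ring, Real.rpow_add_one hx.ne']
  have heq : u1f ν x = (ν + 1/2) * x ^ (ν + 1/2 - 1) * Hf ν (x^2/4)
      + x ^ (ν + 1/2) * (H1 ν (x^2/4) * (2*x^1/4)) := by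
    rw [u1f, e1, e2]; ring
  rw [heq]
  exact h4

lemma hasDerivAt_u1f {ν : ℝ} (hν : 0 ≤ ν) {x : ℝ} (hx : 0 < x) :
    HasDerivAt (u1f ν) (((ν^2 - 1/4)/x^2 - 1) * uf ν x) x := by
  have h2 : HasDerivAt (fun x : ℝ => x^2/4) (2*x^1/4) x := (hasDerivAt_pow 2 x).div_const 4
  have h3 : HasDerivAt (fun x : ℝ => Hf ν (x^2/4)) (H1 ν (x^2/4) * (2*x^1/4)) x :=
    by have := (hasDerivAt_Hf hν (x^2/4)).comp x h2; exact this
  have h3' : HasDerivAt (fun x : ℝ => H1 ν (x^2/4)) (H2 ν (x^2/4) * (2*x^1/4)) x :=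
    by have := (hasDerivAt_H1 hν (x^2/4)).comp x h2; exact this
  have hA : HasDerivAt (fun x : ℝ => x ^ (ν - 1/2)) ((ν-1/2) * x ^ (ν - 1/2 - 1)) x :=
    Real.hasDerivAt_rpow_const (Or.inl hx.ne')
  have hB : HasDerivAt (fun x : ℝ => x ^ (ν + 3/2)) ((ν+3/2) * x ^ (ν + 3/2 - 1)) x :=
    Real.hasDerivAt_rpow_const (Or.inl hx.ne')
  have hAd := (hA.mul h3).const_mul (ν+1/2)
  have hBd := (hB.mul h3').div_const 2
  have h := hAd.add hBd
  have eQ1 : x ^ (ν - 1/2) = x ^ (ν - 1/2 - 1) * x := by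
    rw [← Real.rpow_add_one hx.ne' (ν - 1/2 - 1)]
    congr 1
    ring
  have eQ2 : x ^ (ν + 1/2) = x ^ (ν - 1/2 - 1) * x^2 := by
    rw [show ν + 1/2 = (ν - 1/2 - 1) + 2 by ring, Real.rpow_add hx,
      show (2:ℝ) = ((2:ℕ):ℝ) by norm_num, Real.rpow_natCast]
  have eQ3 : x ^ (ν + 3/2 - 1) = x ^ (ν - 1/2 - 1) * x^2 := by
    rw [show ν + 3/2 - 1 = (ν - 1/2 - 1) + 2 by ring, Real.rpow_add hx,
      show (2:ℝ) = ((2:ℕ):ℝ) by norm_num, Real.rpow_natCast]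
  have eQ4 : x ^ (ν + 3/2) = x ^ (ν - 1/2 - 1) * x^3 := by
    rw [show ν + 3/2 = (ν - 1/2 - 1) + 3 by ring, Real.rpow_add hx,
      show (3:ℝ) = ((3:ℕ):ℝ) by norm_num, Real.rpow_natCast]
  have hI := I1 hν (x^2/4)
  have ediv : ((ν^2 - 1/4)/x^2 - 1) * uf ν x
      = (ν^2 - 1/4) * (x ^ (ν - 1/2 - 1) * Hf ν (x^2/4))
        - x ^ (ν - 1/2 - 1) * x^2 * Hf ν (x^2/4) := by
    rw [uf, eQ2]
    have hxne : x ≠ 0 := hx.ne'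
    field_simp
  have goal_eq : ((ν^2 - 1/4)/x^2 - 1) * uf ν x
      = (ν+1/2) * ((ν-1/2) * x ^ (ν - 1/2 - 1) * Hf ν (x^2/4)
          + x ^ (ν - 1/2) * (H1 ν (x^2/4) * (2*x^1/4)))
        + ((ν+3/2) * x ^ (ν + 3/2 - 1) * H1 ν (x^2/4)
          + x ^ (ν + 3/2) * (H2 ν (x^2/4) * (2*x^1/4))) / 2 := by
    rw [ediv, eQ1, eQ3, eQ4]
    linear_combination (-(x ^ (ν - 1/2 - 1) * x^2)) * hI
  rw [goal_eq]
  exact h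

lemma uf_zero {ν : ℝ} (hν : 0 ≤ ν) : uf ν 0 = 0 := by
  rw [uf, Real.zero_rpow (by positivity : ν + 1/2 ≠ 0), zero_mul]

lemma uf_contOn {ν : ℝ} (hν : 0 ≤ ν) {z : ℝ} : ContinuousOn (uf ν) (Set.Icc 0 z) := by
  apply ContinuousOn.mul
  · apply ContinuousOn.rpow_const continuousOn_id
    intro x hx
    right; positivity
  · exact ((Hf_cont hν).comp (by continuity)).continuousOn

lemma u1f_contAt {ν : ℝ} (hν : 0 ≤ ν) {x : ℝ} (hx : 0 < x) :
    ContinuousAt (u1f ν) x := (hasDerivAt_u1f hν hx).continuousAt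

lemma besselJ_eq {ν : ℝ} (x : ℝ) (hx : 0 < x) :
    besselJ ν x = (x/2) ^ ν * Hf ν (x^2/4) := by
  have hx2 : 0 < x/2 := by linarith
  rw [besselJ, Hf, ← tsum_mul_left]
  refine tsum_congr fun k => ?_
  have e : (x/2) ^ (2*(k:ℝ) + ν) = (x/2) ^ ν * (x^2/4) ^ k := by
    rw [Real.rpow_add hx2, show (2*(k:ℝ)) = ((2*k : ℕ):ℝ) by push_cast; ring,
      Real.rpow_natCast, pow_mul]
    have : (x/2)^2 = x^2/4 := by ring
    rw [this, mul_comm]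
  rw [e, a]
  ring

lemma besselJ_as_uf {ν : ℝ} (hν : 0 ≤ ν) {x : ℝ} (hx : 0 < x) :
    ∃ c : ℝ, 0 < c ∧ besselJ ν x = c * uf ν x := by
  refine ⟨(x/2) ^ ν / x ^ (ν + 1/2), by positivity, ?_⟩
  rw [besselJ_eq x hx, uf]
  have h1 : x ^ (ν + 1/2) ≠ 0 := by positivity
  field_simp

lemma besselJ_sub_one_at_zero {ν : ℝ} (hν : 1 ≤ ν) {z : ℝ} (hz : 0 < z)
    (h0 : uf ν z = 0) :
    ∃ c : ℝ, 0 < c ∧ besselJ (ν-1) z = c * u1f ν z := by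
  have hν0 : (0:ℝ) ≤ ν := by linarith
  have hHf0 : Hf ν (z^2/4) = 0 := by
    have h1 : z ^ (ν + 1/2) ≠ 0 := by positivity
    rw [uf] at h0
    exact (mul_eq_zero.mp h0).resolve_left h1
  have hu1 : u1f ν z = z ^ (ν + 3/2) * H1 ν (z^2/4) / 2 := by
    rw [u1f, hHf0]; ring
  have hJ : besselJ (ν-1) z = (z/2) ^ (ν-1) * (z^2/4) * H1 ν (z^2/4) := by
    rw [besselJ_eq z hz, ← I2 hν (z^2/4), hHf0]
    ring
  refine ⟨(z/2) ^ (ν-1) * (z^2/4) * 2 / z ^ (ν + 3/2), by positivity, ?_⟩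
  rw [hJ, hu1]
  have h1 : z ^ (ν + 3/2) ≠ 0 := by positivity
  field_simp

lemma a_zero_pos {ν : ℝ} (hν : 0 ≤ ν) : 0 < a ν 0 := by
  rw [a]
  simp only [pow_zero, Nat.factorial_zero, Nat.cast_one, one_mul, Nat.cast_zero]
  have h1 : (0:ℝ) + ν + 1 = ν + 1 := by ring
  rw [h1]
  have := Real.Gamma_pos_of_pos (show (0:ℝ) < ν + 1 by linarith)
  positivity

lemma Hf_at_zero {ν : ℝ} : Hf ν 0 = a ν 0 := by
  rw [Hf, tsum_eq_single 0]
  · simp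
  · intro k hk
    rcases Nat.exists_eq_succ_of_ne_zero hk with ⟨n, rfl⟩
    simp [pow_succ]

lemma uf_pos_near_zero {ν : ℝ} (hν : 0 ≤ ν) :
    ∃ x₀ > 0, ∀ x : ℝ, 0 < x → x ≤ x₀ → 0 < uf ν x := by
  have h0 : 0 < Hf ν 0 := by rw [Hf_at_zero]; exact a_zero_pos hν
  have hev : ∀ᶠ y in 𝓝 (0:ℝ), 0 < Hf ν y :=
    ((Hf_cont hν).continuousAt).eventually (eventually_gt_nhds h0)
  rcases Metric.eventually_nhds_iff.mp hev with ⟨η, hη, hball⟩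
  refine ⟨Real.sqrt η, Real.sqrt_pos.mpr hη, fun x hx hxle => ?_⟩
  have hx24 : |x^2/4 - 0| < η := by
    rw [sub_zero, abs_of_nonneg (by positivity)]
    have h2 : x^2 ≤ η := by
      calc x^2 = x*x := sq x
        _ ≤ Real.sqrt η * Real.sqrt η := by
            apply mul_le_mul hxle hxle hx.le (Real.sqrt_nonneg η)
        _ = η := Real.mul_self_sqrt hη.le
    linarith
  have hH := hball (by simpa using hx24)
  rw [uf]
  positivity

/-- Sturm-type oscillation: under the potential bound, `uf` has a zero in `[b, b+π/c]`. -/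
lemma exists_zero_in {ν : ℝ} (hν : 0 ≤ ν) {b c : ℝ} (hb : 0 < b) (hc : 0 < c)
    (hq : ∀ x ∈ Icc b (b + π/c), (ν^2 - 1/4)/x^2 ≤ 1 - c^2) :
    ∃ z ∈ Icc b (b + π/c), uf ν z = 0 := by
  by_contra hno
  push_neg at hno
  have hpc : 0 < π / c := by positivity
  have hIccpos : ∀ x ∈ Icc b (b + π/c), (0:ℝ) < x := fun x hx => lt_of_lt_of_le hb hx.1
  have hcontOn : ContinuousOn (uf ν) (Icc b (b + π/c)) := fun x hx =>
    ((hasDerivAt_uf hν (hIccpos x hx)).continuousAt).continuousWithinAt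
  -- constant sign
  have hsgn : (∀ x ∈ Icc b (b + π/c), 0 < uf ν x) ∨ (∀ x ∈ Icc b (b + π/c), uf ν x < 0) := by
    by_contra hcon
    push_neg at hcon
    obtain ⟨⟨x1, hx1, hx1le⟩, ⟨x2, hx2, hx2le⟩⟩ := hcon
    have hx1lt : uf ν x1 < 0 := lt_of_le_of_ne hx1le (hno x1 hx1)
    have hx2lt : 0 < uf ν x2 := lt_of_le_of_ne hx2le (Ne.symm (hno x2 hx2))
    rcases le_total x1 x2 with h | h
    · have hsub : Icc x1 x2 ⊆ Icc b (b + π/c) := Icc_subset_Icc hx1.1 hx2.2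
      obtain ⟨z, hz, hz0⟩ := intermediate_value_Icc h (hcontOn.mono hsub)
        (show (0:ℝ) ∈ Icc (uf ν x1) (uf ν x2) from ⟨hx1lt.le, hx2lt.le⟩)
      exact hno z (hsub hz) hz0
    · have hsub : Icc x2 x1 ⊆ Icc b (b + π/c) := Icc_subset_Icc hx2.1 hx1.2
      obtain ⟨z, hz, hz0⟩ := intermediate_value_Icc' h (hcontOn.mono hsub)
        (show (0:ℝ) ∈ Icc (uf ν x1) (uf ν x2) from ⟨hx1lt.le, hx2lt.le⟩)
      exact hno z (hsub hz) hz0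
  -- reduce to ±1 sign
  have key : ∀ s : ℝ, (s = 1 ∨ s = -1) → (∀ x ∈ Icc b (b + π/c), 0 < s * uf ν x) → False := by
    intro s hs hpos
    set I := Icc b (b + π/c) with hI
    set W : ℝ → ℝ := fun x =>
      s * (uf ν x * (c * Real.cos (c*(x-b))) - u1f ν x * Real.sin (c*(x-b))) with hW
    have hWd : ∀ x ∈ I, HasDerivAt W
        (s * (uf ν x * Real.sin (c*(x-b)) * (1 - c^2 - (ν^2-1/4)/x^2))) x := by
      intro x hx
      have hxpos := hIccpos x hx
      have hlin : HasDerivAt (fun x : ℝ => c*(x-b)) c x := by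
        simpa using ((hasDerivAt_id x).sub_const b).const_mul c
      have hcos : HasDerivAt (fun x : ℝ => Real.cos (c*(x-b)))
          (-Real.sin (c*(x-b)) * c) x := (Real.hasDerivAt_cos _).comp x hlin
      have hsin : HasDerivAt (fun x : ℝ => Real.sin (c*(x-b)))
          (Real.cos (c*(x-b)) * c) x := (Real.hasDerivAt_sin _).comp x hlin
      have h1 := ((hasDerivAt_uf hν hxpos).mul (hcos.const_mul c)).sub
        ((hasDerivAt_u1f hν hxpos).mul hsin)
      have := h1.const_mul s
      refine this.congr_deriv ?_
      ring
    have hWc : ContinuousOn W I := fun x hx => ((hWd x hx).continuousAt).continuousWithinAt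
    have hint : interior I ⊆ I := interior_subset
    have hWmono : MonotoneOn W I := by
      apply monotoneOn_of_deriv_nonneg (convex_Icc _ _) hWc
      · intro x hx
        exact ((hWd x (hint hx)).differentiableAt).differentiableWithinAt
      · intro x hx
        have hxI : x ∈ I := hint hx
        rw [(hWd x hxI).deriv]
        rw [interior_Icc] at hx
        have hxpos : 0 < x := lt_trans hb hx.1
        have hsin_nonneg : 0 ≤ Real.sin (c*(x-b)) := by
          apply Real.sin_nonneg_of_nonneg_of_le_pi
          · nlinarith [hx.1]
          · have : x - b ≤ π / c := by linarith [hx.2]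
            calc c * (x-b) ≤ c * (π/c) := by nlinarith
              _ = π := by field_simp
        have hqx := hq x hxI
        have hsu : 0 < s * uf ν x := hpos x hxI
        have : 0 ≤ 1 - c^2 - (ν^2-1/4)/x^2 := by linarith
        calc (0:ℝ) ≤ (s * uf ν x) * Real.sin (c*(x-b)) * (1 - c^2 - (ν^2-1/4)/x^2) := by
              positivity
          _ = s * (uf ν x * Real.sin (c*(x-b)) * (1 - c^2 - (ν^2-1/4)/x^2)) := by ring
    have hbI : b ∈ I := ⟨le_refl b, by linarith⟩
    have heI : b + π/c ∈ I := ⟨by linarith, le_refl _⟩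
    have hWb : W b = s * uf ν b * c := by
      simp only [hW, sub_self, mul_zero, Real.cos_zero, Real.sin_zero]
      ring
    have hWe : W (b + π/c) = -(s * uf ν (b + π/c) * c) := by
      have harg : c * (b + π/c - b) = π := by field_simp; ring
      rw [hW]
      simp only [harg, Real.cos_pi, Real.sin_pi]
      ring
    have h1 : 0 < s * uf ν b * c := by
      have := hpos b hbI
      positivity
    have h2 : 0 < s * uf ν (b + π/c) * c := by
      have := hpos _ heI
      positivity
    have := hWmono hbI heI (by linarith)
    rw [hWb, hWe] at this
    linarith
  rcases hsgn with h | h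
  · exact key 1 (Or.inl rfl) (fun x hx => by simpa using h x hx)
  · exact key (-1) (Or.inr rfl) (fun x hx => by
      have := h x hx
      nlinarith)


lemma deriv_ev {ν : ℝ} (hν : 0 ≤ ν) {x : ℝ} (hx : 0 < x) :
    deriv (uf ν) =ᶠ[𝓝 x] u1f ν := by
  filter_upwards [Ioi_mem_nhds hx] with y hy
  exact (hasDerivAt_uf hν hy).deriv

lemma sq_lower {ν : ℝ} (hν : 1/2 ≤ ν) {z : ℝ} (hz : 0 < z) (hzero : uf ν z = 0)
    (hpos : ∀ x ∈ Ioo 0 z, 0 < uf ν x) : ν^2 - 1/4 < z^2 := by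
  by_contra hcon
  push_neg at hcon
  have hν0 : (0:ℝ) ≤ ν := by linarith
  have hconv : ConvexOn ℝ (Icc 0 z) (uf ν) := by
    apply convexOn_of_deriv2_nonneg (convex_Icc 0 z) (uf_contOn hν0)
    · rw [interior_Icc]
      intro x hx
      exact ((hasDerivAt_uf hν0 hx.1).differentiableAt).differentiableWithinAt
    · rw [interior_Icc]
      intro x hx
      have hdiff : DifferentiableAt ℝ (u1f ν) x := (hasDerivAt_u1f hν0 hx.1).differentiableAt
      exact (((deriv_ev hν0 hx.1).differentiableAt_iff).mpr hdiff).differentiableWithinAt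
    · rw [interior_Icc]
      intro x hx
      have h2 : deriv^[2] (uf ν) x = deriv (u1f ν) x := by
        rw [show (2:ℕ) = 1 + 1 by rfl, Function.iterate_succ_apply', Function.iterate_one]
        exact Filter.EventuallyEq.deriv_eq (deriv_ev hν0 hx.1)
      rw [h2, (hasDerivAt_u1f hν0 hx.1).deriv]
      have hx2 : x^2 < ν^2 - 1/4 := by nlinarith [hx.1, hx.2]
      have hfac : 0 ≤ (ν^2-1/4)/x^2 - 1 := by
        have h1 : (1:ℝ) ≤ (ν^2-1/4)/x^2 := (one_le_div (pow_pos hx.1 2)).mpr hx2.le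
        linarith
      have hu := (hpos x hx).le
      exact mul_nonneg hfac hu
  have hmem0 : (0:ℝ) ∈ Icc 0 z := ⟨le_refl 0, hz.le⟩
  have hmemz : z ∈ Icc 0 z := ⟨hz.le, le_refl z⟩
  have hcx := hconv.2 hmem0 hmemz (by norm_num : (0:ℝ) ≤ 1/2) (by norm_num : (0:ℝ) ≤ 1/2)
    (by norm_num)
  simp only [smul_eq_mul, mul_zero, zero_add] at hcx
  rw [uf_zero hν0, hzero] at hcx
  have hin : (1/2 : ℝ) * z ∈ Ioo 0 z := ⟨by linarith, by linarith⟩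
  have := hpos _ hin
  linarith

lemma energy {ν : ℝ} (hν : 1/2 ≤ ν) {w z : ℝ} (hw : 0 < w) (hwz : w < z)
    (hqw : ν^2 - 1/4 < w^2) (hne : uf ν w ≠ 0) (hz0 : uf ν z = 0)
    (hz1 : u1f ν z = 0) : False := by
  have hν0 : (0:ℝ) ≤ ν := by linarith
  have hA : (0:ℝ) ≤ ν^2 - 1/4 := by nlinarith
  set E : ℝ → ℝ := fun x => (u1f ν x)^2 + (1 - (ν^2-1/4)/x^2) * (uf ν x)^2 with hE
  have hEd : ∀ x : ℝ, 0 < x →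
      HasDerivAt E (2*(ν^2-1/4)/x^3 * (uf ν x)^2) x := by
    intro x hx
    have h1 : HasDerivAt (fun y => (u1f ν y)^2)
        ((2:ℕ) * (u1f ν x)^(2-1) * (((ν^2 - 1/4)/x^2 - 1) * uf ν x)) x :=
      (hasDerivAt_u1f hν0 hx).pow 2
    have hinv : HasDerivAt (fun y : ℝ => (y^2)⁻¹) (-(2*x^1)/(x^2)^2) x :=
      (hasDerivAt_pow 2 x).inv (pow_ne_zero 2 hx.ne')
    have hqd : HasDerivAt (fun y : ℝ => 1 - (ν^2-1/4)/y^2)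
        (-((ν^2-1/4) * (-(2*x^1)/(x^2)^2))) x := by
      have h := (hinv.const_mul (ν^2-1/4)).const_sub 1
      have he : (fun y : ℝ => 1 - (ν^2-1/4) * (y^2)⁻¹) = (fun y : ℝ => 1 - (ν^2-1/4)/y^2) := by
        funext y; ring
      rwa [he] at h
    have h2 : HasDerivAt (fun y => (1 - (ν^2-1/4)/y^2) * (uf ν y)^2)
        ((-((ν^2-1/4) * (-(2*x^1)/(x^2)^2))) * (uf ν x)^2
          + (1 - (ν^2-1/4)/x^2) * ((2:ℕ) * (uf ν x)^(2-1) * u1f ν x)) x :=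
      hqd.mul ((hasDerivAt_uf hν0 hx).pow 2)
    have h3 := h1.add h2
    refine h3.congr_deriv ?_
    have hxne : x ≠ 0 := hx.ne'
    field_simp
    ring
  have hmono : MonotoneOn E (Icc w z) := by
    apply monotoneOn_of_deriv_nonneg (convex_Icc _ _)
    · intro x hx
      exact ((hEd x (lt_of_lt_of_le hw hx.1)).continuousAt).continuousWithinAt
    · rw [interior_Icc]
      intro x hx
      exact ((hEd x (lt_trans hw hx.1)).differentiableAt).differentiableWithinAt
    · rw [interior_Icc]
      intro x hx
      have hxpos : 0 < x := lt_trans hw hx.1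
      rw [(hEd x hxpos).deriv]
      positivity
  have hEz : E z = 0 := by
    rw [hE]
    simp only [hz0, hz1]
    ring
  have hEw : 0 < E w := by
    have hq : 0 < 1 - (ν^2-1/4)/w^2 := by
      have : (ν^2-1/4)/w^2 < 1 := (div_lt_one (by positivity)).mpr hqw
      linarith
    have hsq : 0 < (uf ν w)^2 :=
      lt_of_le_of_ne (sq_nonneg _) (Ne.symm (pow_ne_zero 2 hne))
    have : 0 < (1 - (ν^2-1/4)/w^2) * (uf ν w)^2 := by positivity
    have h2 : 0 ≤ (u1f ν w)^2 := sq_nonneg _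
    rw [hE]
    dsimp only
    linarith
  have := hmono ⟨le_refl w, hwz.le⟩ ⟨hwz.le, le_refl z⟩ hwz.le
  rw [hEz] at this
  linarith

lemma uf_neg_right {ν : ℝ} (hν : 0 ≤ ν) {z : ℝ} (hz : 0 < z) (hu : uf ν z = 0)
    (hd : u1f ν z < 0) :
    ∃ δ > 0, ∀ x, z < x → x ≤ z + δ → uf ν x < 0 := by
  have hev : ∀ᶠ x in 𝓝 z, u1f ν x < 0 :=
    (u1f_contAt hν hz).eventually (eventually_lt_nhds hd)
  rcases Metric.eventually_nhds_iff.mp hev with ⟨ε, hε, hball⟩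
  refine ⟨ε/2, by positivity, fun x hx1 hx2 => ?_⟩
  have hanti : StrictAntiOn (uf ν) (Icc z (z+ε/2)) := by
    apply strictAntiOn_of_deriv_neg (convex_Icc _ _)
    · intro y hy
      exact ((hasDerivAt_uf hν (lt_of_lt_of_le hz hy.1)).continuousAt).continuousWithinAt
    · rw [interior_Icc]
      intro y hy
      rw [(hasDerivAt_uf hν (lt_trans hz hy.1)).deriv]
      apply hball
      rw [Real.dist_eq, abs_of_pos (by linarith [hy.1] : (0:ℝ) < y - z)]
      linarith [hy.2]
  have := hanti ⟨le_refl z, by linarith⟩ ⟨hx1.le, hx2⟩ hx1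
  rwa [hu] at this

lemma u1f_nonpos_at_zero {ν : ℝ} (hν : 0 ≤ ν) {z : ℝ} (hz : 0 < z) (hu : uf ν z = 0)
    (hpos : ∀ x ∈ Ioo 0 z, 0 < uf ν x) : u1f ν z ≤ 0 := by
  by_contra hcon
  push_neg at hcon
  have hev : ∀ᶠ x in 𝓝 z, 0 < u1f ν x :=
    (u1f_contAt hν hz).eventually (eventually_gt_nhds hcon)
  rcases Metric.eventually_nhds_iff.mp hev with ⟨ε, hε, hball⟩
  set w : ℝ := max (z/2) (z - ε/2) with hwdef
  have hw1 : 0 < w := lt_of_lt_of_le (by linarith) (le_max_left _ _)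
  have hwz : w < z := by
    apply max_lt <;> linarith
  have hmono : StrictMonoOn (uf ν) (Icc w z) := by
    apply strictMonoOn_of_deriv_pos (convex_Icc _ _)
    · intro y hy
      exact ((hasDerivAt_uf hν (lt_of_lt_of_le hw1 hy.1)).continuousAt).continuousWithinAt
    · rw [interior_Icc]
      intro y hy
      rw [(hasDerivAt_uf hν (lt_trans hw1 hy.1)).deriv]
      apply hball
      rw [Real.dist_eq, abs_of_neg (by linarith [hy.2] : y - z < 0)]
      have : z - ε/2 ≤ w := le_max_right _ _
      have := hy.1
      linarith
  have h1 := hmono ⟨le_refl w, hwz.le⟩ ⟨hwz.le, le_refl z⟩ hwz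
  rw [hu] at h1
  have := hpos w ⟨hw1, hwz⟩
  linarith

lemma u1f_nonneg_at_zero {ν : ℝ} (hν : 0 ≤ ν) {w z : ℝ} (hw : 0 < w) (hwz : w < z)
    (hu : uf ν z = 0) (hneg : ∀ x ∈ Ioo w z, uf ν x < 0) : 0 ≤ u1f ν z := by
  by_contra hcon
  push_neg at hcon
  have hev : ∀ᶠ x in 𝓝 z, u1f ν x < 0 :=
    (u1f_contAt hν (lt_trans hw hwz)).eventually (eventually_lt_nhds hcon)
  rcases Metric.eventually_nhds_iff.mp hev with ⟨ε, hε, hball⟩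
  set w' : ℝ := max ((w+z)/2) (z - ε/2) with hwdef
  have hw1 : 0 < w' := lt_of_lt_of_le (by linarith) (le_max_left _ _)
  have hww' : w < w' := lt_of_lt_of_le (by linarith) (le_max_left _ _)
  have hwz' : w' < z := by
    apply max_lt <;> linarith
  have hanti : StrictAntiOn (uf ν) (Icc w' z) := by
    apply strictAntiOn_of_deriv_neg (convex_Icc _ _)
    · intro y hy
      exact ((hasDerivAt_uf hν (lt_of_lt_of_le hw1 hy.1)).continuousAt).continuousWithinAt
    · rw [interior_Icc]
      intro y hy
      rw [(hasDerivAt_uf hν (lt_trans hw1 hy.1)).deriv]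
      apply hball
      rw [Real.dist_eq, abs_of_neg (by linarith [hy.2] : y - z < 0)]
      have : z - ε/2 ≤ w' := le_max_right _ _
      have := hy.1
      linarith
  have h1 := hanti ⟨le_refl w', hwz'.le⟩ ⟨hwz'.le, le_refl z⟩ hwz'
  rw [hu] at h1
  have := hneg w' ⟨hww', hwz'⟩
  linarith

lemma uf_cont {ν : ℝ} (hν : 0 ≤ ν) : Continuous (uf ν) := by
  apply Continuous.mul
  · apply Continuous.rpow_const continuous_id
    intro x
    right
    positivity
  · exact (Hf_cont hν).comp (by continuity)

lemma besselJ_zero_iff {ν : ℝ} (hν : 0 ≤ ν) {x : ℝ} (hx : 0 < x) :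
    besselJ ν x = 0 ↔ uf ν x = 0 := by
  obtain ⟨c, hc, hcx⟩ := besselJ_as_uf hν hx
  rw [hcx]
  constructor
  · intro h
    rcases mul_eq_zero.mp h with h | h
    · exact absurd h hc.ne'
    · exact h
  · intro h
    rw [h, mul_zero]

set_option maxHeartbeats 1000000 in
lemma key {ν θ : ℝ} (hν : 1 ≤ ν) (hθ0 : 0 < θ) (hθ1 : θ < 1) :
    ∃ j1 j2 : ℝ,
      besselJZero ν 1 = j1 ∧ besselJZero ν 2 = j2 ∧
      0 < j1 ∧ j1 < j2 ∧
      ν^2 - 1/4 < j1^2 ∧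
      j2 ≤ ν/θ + 3*π/Real.sqrt (1-θ^2) ∧
      (∀ x, 0 < x → x < j1 → 0 < uf ν x) ∧
      uf ν j1 = 0 ∧ uf ν j2 = 0 ∧ u1f ν j1 < 0 ∧ 0 < u1f ν j2 := by
  have hν0 : (0:ℝ) ≤ ν := by linarith
  have hν12 : (1:ℝ)/2 ≤ ν := by linarith
  have hνpos : (0:ℝ) < ν := by linarith
  set c : ℝ := Real.sqrt (1-θ^2) with hcdef
  have h1θ : (0:ℝ) < 1 - θ^2 := by nlinarith
  have hc : 0 < c := Real.sqrt_pos.mpr h1θ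
  have hc2 : c^2 = 1 - θ^2 := Real.sq_sqrt h1θ.le
  have hbθ : 0 < ν/θ := div_pos hνpos hθ0
  have hpc : 0 < π/c := div_pos Real.pi_pos hc
  have h2c : π/c + π/c = 2*π/c := by ring
  have h3c : 2*π/c + π/c = 3*π/c := by ring
  -- Sturm zero existence beyond ν/θ
  have hzero_in : ∀ b, ν/θ ≤ b → ∃ z ∈ Icc b (b + π/c), uf ν z = 0 := by
    intro b hb
    apply exists_zero_in hν0 (lt_of_lt_of_le hbθ hb) hc
    intro x hx
    have hxb : ν/θ ≤ x := hb.trans hx.1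
    have hx0 : 0 < x := lt_of_lt_of_le hbθ hxb
    have hνθ : ν ≤ θ * x := (div_le_iff₀' hθ0).mp hxb
    rw [hc2]
    rw [div_le_iff₀ (pow_pos hx0 2)]
    nlinarith
  -- positivity near zero
  obtain ⟨x₀, hx₀, hposx₀⟩ := uf_pos_near_zero hν0
  -- the first zero
  set Z : Set ℝ := {x : ℝ | 0 < x ∧ besselJ ν x = 0} with hZdef
  have hZu : Z = {x : ℝ | 0 < x ∧ uf ν x = 0} := by
    ext x
    simp only [hZdef, mem_setOf_eq]
    constructor
    · rintro ⟨h1, h2⟩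
      exact ⟨h1, (besselJ_zero_iff hν0 h1).mp h2⟩
    · rintro ⟨h1, h2⟩
      exact ⟨h1, (besselJ_zero_iff hν0 h1).mpr h2⟩
  have hZgt : ∀ z ∈ Z, x₀ < z := by
    intro z hz
    rw [hZu] at hz
    by_contra hle
    push_neg at hle
    exact (hposx₀ z hz.1 hle).ne' hz.2
  have hZ' : Z = {x : ℝ | x₀ ≤ x ∧ uf ν x = 0} := by
    rw [hZu]
    ext x
    simp only [mem_setOf_eq]
    constructor
    · rintro ⟨h1, h2⟩
      refine ⟨?_, h2⟩
      have := hZgt x (by rw [hZu]; exact ⟨h1, h2⟩)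
      linarith
    · rintro ⟨h1, h2⟩
      exact ⟨lt_of_lt_of_le hx₀ h1, h2⟩
  have hZclosed : IsClosed Z := by
    rw [hZ']
    exact isClosed_Ici.inter (isClosed_eq (uf_cont hν0) continuous_const)
  have hZne : Z.Nonempty := by
    obtain ⟨z, hz, hz0⟩ := hzero_in (ν/θ) le_rfl
    exact ⟨z, by rw [hZu]; exact ⟨lt_of_lt_of_le hbθ hz.1, hz0⟩⟩
  have hZbdd : BddBelow Z := ⟨0, fun z hz => by rw [hZu] at hz; exact hz.1.le⟩
  set j1 : ℝ := sInf Z with hj1def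
  have hj1mem : j1 ∈ Z := hZclosed.csInf_mem hZne hZbdd
  have hj1pos : 0 < j1 := by rw [hZu] at hj1mem; exact hj1mem.1
  have hj1zero : uf ν j1 = 0 := by rw [hZu] at hj1mem; exact hj1mem.2
  -- no zeros below j1, and positivity
  have hx₀j1 : x₀ < j1 := hZgt j1 hj1mem
  have hpos1 : ∀ x, 0 < x → x < j1 → 0 < uf ν x := by
    intro x hx hxj
    by_contra hle
    push_neg at hle
    rcases lt_or_eq_of_le hle with hlt | heq
    · -- uf x < 0, IVT with x₀ gives zero below j1
      have hxx₀ : x₀ < x := by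
        by_contra hh
        push_neg at hh
        exact absurd (hposx₀ x hx hh) (by linarith)
      obtain ⟨z, hz, hz0⟩ := intermediate_value_Icc' hxx₀.le
        ((uf_cont hν0).continuousOn) (show (0:ℝ) ∈ Icc (uf ν x) (uf ν x₀) from
          ⟨hlt.le, (hposx₀ x₀ hx₀ le_rfl).le⟩)
      have hzZ : z ∈ Z := by
        rw [hZu]
        exact ⟨lt_of_lt_of_le hx₀ hz.1, hz0⟩
      have := csInf_le hZbdd hzZ
      have : j1 ≤ z := this
      have : z < j1 := lt_of_le_of_lt hz.2 hxj
      linarith [csInf_le hZbdd hzZ, hz.2]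
    · have hxZ : x ∈ Z := by rw [hZu]; exact ⟨hx, heq⟩
      have := csInf_le hZbdd hxZ
      linarith
  -- bounds on j1
  have hj1le : j1 ≤ ν/θ + π/c := by
    obtain ⟨z, hz, hz0⟩ := hzero_in (ν/θ) le_rfl
    have hzZ : z ∈ Z := by rw [hZu]; exact ⟨lt_of_lt_of_le hbθ hz.1, hz0⟩
    exact (csInf_le hZbdd hzZ).trans hz.2
  have hj1sq : ν^2 - 1/4 < j1^2 :=
    sq_lower hν12 hj1pos hj1zero (fun x hx => hpos1 x hx.1 hx.2)
  -- derivative at j1 is negative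
  have hs := Real.sqrt_nonneg (ν^2 - 1/4)
  have hsj1 : Real.sqrt (ν^2 - 1/4) < j1 := by
    have h := Real.sqrt_lt_sqrt (by nlinarith : (0:ℝ) ≤ ν^2-1/4) hj1sq
    rwa [Real.sqrt_sq hj1pos.le] at h
  have hd1 : u1f ν j1 < 0 := by
    rcases lt_or_eq_of_le (u1f_nonpos_at_zero hν0 hj1pos hj1zero
      (fun x hx => hpos1 x hx.1 hx.2)) with h | h
    · exact h
    · exfalso
      set w : ℝ := (Real.sqrt (ν^2 - 1/4) + j1)/2 with hwdef
      have hw0 : 0 < w := by positivity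
      have hwj1 : w < j1 := by rw [hwdef]; linarith
      have hws : Real.sqrt (ν^2 - 1/4) < w := by rw [hwdef]; linarith
      have hwsq : ν^2 - 1/4 < w^2 := by
        have h1 : Real.sqrt (ν^2-1/4)^2 < w^2 := by nlinarith
        rwa [Real.sq_sqrt (by nlinarith : (0:ℝ) ≤ ν^2-1/4)] at h1
      exact energy hν12 hw0 hwj1 hwsq (hpos1 w hw0 hwj1).ne' hj1zero h
  -- negativity just to the right of j1
  obtain ⟨δ, hδ, hufneg⟩ := uf_neg_right hν0 hj1pos hj1zero hd1
  -- second zero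
  set Z2 : Set ℝ := {x : ℝ | j1 < x ∧ besselJ ν x = 0} with hZ2def
  have hZ2u : Z2 = {x : ℝ | j1 < x ∧ uf ν x = 0} := by
    ext x
    simp only [hZ2def, mem_setOf_eq]
    constructor
    · rintro ⟨h1, h2⟩
      exact ⟨h1, (besselJ_zero_iff hν0 (lt_trans hj1pos h1)).mp h2⟩
    · rintro ⟨h1, h2⟩
      exact ⟨h1, (besselJ_zero_iff hν0 (lt_trans hj1pos h1)).mpr h2⟩
  have hZ2gt : ∀ z ∈ Z2, j1 + δ < z := by
    intro z hz
    rw [hZ2u] at hz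
    by_contra hle
    push_neg at hle
    exact (hufneg z hz.1 hle).ne hz.2
  have hZ2' : Z2 = {x : ℝ | j1 + δ ≤ x ∧ uf ν x = 0} := by
    rw [hZ2u]
    ext x
    simp only [mem_setOf_eq]
    constructor
    · rintro ⟨h1, h2⟩
      refine ⟨?_, h2⟩
      have := hZ2gt x (by rw [hZ2u]; exact ⟨h1, h2⟩)
      linarith
    · rintro ⟨h1, h2⟩
      exact ⟨by linarith, h2⟩
  have hZ2closed : IsClosed Z2 := by
    rw [hZ2']
    exact isClosed_Ici.inter (isClosed_eq (uf_cont hν0) continuous_const)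
  have hZ2ne : ∃ z ∈ Z2, z ≤ ν/θ + 3*π/c := by
    obtain ⟨z, hz, hz0⟩ := hzero_in (ν/θ + 2*π/c) (by linarith)
    have hzj1 : j1 < z := by
      have := hz.1
      have h2 : j1 ≤ ν/θ + π/c := hj1le
      linarith
    refine ⟨z, by rw [hZ2u]; exact ⟨hzj1, hz0⟩, ?_⟩
    have := hz.2
    have harith : ν/θ + 2*π/c + π/c = ν/θ + 3*π/c := by ring
    linarith
  obtain ⟨z2, hz2mem, hz2le⟩ := hZ2ne
  have hZ2nonempty : Z2.Nonempty := ⟨z2, hz2mem⟩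
  have hZ2bdd : BddBelow Z2 := ⟨j1, fun z hz => by rw [hZ2u] at hz; exact hz.1.le⟩
  set j2 : ℝ := sInf Z2 with hj2def
  have hj2mem : j2 ∈ Z2 := hZ2closed.csInf_mem hZ2nonempty hZ2bdd
  have hj2gt : j1 < j2 := by rw [hZ2u] at hj2mem; exact hj2mem.1
  have hj2zero : uf ν j2 = 0 := by rw [hZ2u] at hj2mem; exact hj2mem.2
  have hj2le : j2 ≤ ν/θ + 3*π/c := (csInf_le hZ2bdd hz2mem).trans hz2le
  -- negativity on (j1, j2)
  have hneg2 : ∀ x ∈ Ioo j1 j2, uf ν x < 0 := by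
    intro x hx
    have hδj2 : j1 + δ < j2 := hZ2gt j2 hj2mem
    rcases le_or_gt x (j1 + δ) with hle | hgt
    · exact hufneg x hx.1 hle
    · by_contra hge
      push_neg at hge
      rcases lt_or_eq_of_le hge with hlt | heq
      · -- uf x > 0, IVT from j1+δ (negative) to x
        have hn : uf ν (j1+δ) < 0 := hufneg (j1+δ) (by linarith) le_rfl
        obtain ⟨z, hz, hz0⟩ := intermediate_value_Icc hgt.le
          ((uf_cont hν0).continuousOn) (show (0:ℝ) ∈ Icc (uf ν (j1+δ)) (uf ν x) from
            ⟨hn.le, hlt.le⟩)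
        have hzZ2 : z ∈ Z2 := by
          rw [hZ2u]
          exact ⟨by linarith [hz.1], hz0⟩
        have := csInf_le hZ2bdd hzZ2
        have := hz.2
        have := hx.2
        linarith
      · have hxZ2 : x ∈ Z2 := by rw [hZ2u]; exact ⟨hx.1, heq.symm⟩
        have := csInf_le hZ2bdd hxZ2
        linarith [hx.2]
  -- derivative at j2 is positive
  have hd2 : 0 < u1f ν j2 := by
    rcases lt_or_eq_of_le (u1f_nonneg_at_zero hν0 hj1pos hj2gt hj2zero hneg2) with h | h
    · exact h
    · exfalso
      set w : ℝ := max ((Real.sqrt (ν^2 - 1/4) + j2)/2) ((j1+j2)/2) with hwdef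
      have hsj2 : Real.sqrt (ν^2 - 1/4) < j2 := lt_trans hsj1 hj2gt
      have hw0 : 0 < w := by
        apply lt_of_lt_of_le _ (le_max_right _ _)
        linarith
      have hwj2 : w < j2 := by
        apply max_lt <;> linarith
      have hwgtj1 : j1 < w := lt_of_lt_of_le (by linarith) (le_max_right _ _)
      have hws : Real.sqrt (ν^2 - 1/4) < w :=
        lt_of_lt_of_le (by linarith) (le_max_left _ _)
      have hwsq : ν^2 - 1/4 < w^2 := by
        have h1 : Real.sqrt (ν^2-1/4)^2 < w^2 := by nlinarith
        rwa [Real.sq_sqrt (by nlinarith : (0:ℝ) ≤ ν^2-1/4)] at h1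
      exact energy hν12 hw0 hwj2 hwsq (hneg2 w ⟨hwgtj1, hwj2⟩).ne hj2zero h.symm
  -- identify with besselJZero
  have hbz1 : besselJZero ν 1 = j1 := by
    rw [hj1def, hZdef]
    show besselJZero ν (0+1) = _
    rw [besselJZero, besselJZero]
  have hbz2 : besselJZero ν 2 = j2 := by
    rw [hj2def, hZ2def, ← hbz1]
    show besselJZero ν (1+1) = _
    rw [besselJZero]
  exact ⟨j1, j2, hbz1, hbz2, hj1pos, hj2gt, hj1sq, hj2le,
    hpos1, hj1zero, hj2zero, hd1, hd2⟩

end BesselAux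


lemma arith_tau_j2 {m M0 τ θ K j1 j2 : ℝ} (hτ0 : 0 < τ)
    (hfrac : 0 < 1 - τ/θ) (hM₀ : (1 + τ*K)/(1 - τ/θ) < M0) (hmM : M0 ≤ m)
    (hj2 : j2 ≤ m/θ + K) (hj1m : m - 1 < j1) : τ * j2 < j1 := by
  have ha := (div_lt_iff₀ hfrac).mp hM₀
  have hb : M0 * (1 - τ/θ) ≤ m * (1 - τ/θ) := mul_le_mul_of_nonneg_right hmM hfrac.le
  have h2 : (1 + τ*K) < (1 - τ/θ) * m := by linarith
  have e : τ*(m/θ) = (τ/θ)*m := by ring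
  have e2 : (1 - τ/θ) * m = m - (τ/θ)*m := by ring
  have h3 : τ * (m/θ + K) < m - 1 := by
    rw [mul_add, e]
    linarith
  calc τ * j2 ≤ τ * (m/θ + K) := mul_le_mul_of_nonneg_left hj2 hτ0.le
    _ < m - 1 := h3
    _ < j1 := hj1m

lemma arith_m_sub_one_lt {m j1 : ℝ} (hm : 2 ≤ m) (hj1pos : 0 < j1)
    (hsq : m^2 - 1/4 < j1^2) : m - 1 < j1 := by
  by_contra hcon
  push_neg at hcon
  have h1 : j1^2 ≤ (m-1)^2 := by
    have := pow_le_pow_left₀ hj1pos.le hcon 2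
    simpa using this
  nlinarith [h1, hsq, hm]

lemma arith_caseA_neg {μ τ m j : ℝ} (ht2 : 0 < τ^2) (hle : 2*μ ≤ τ^2) (hm : 2 ≤ m)
    (hj : m^2 - 1/4 < j^2) : 2*μ*(m^2-1) - τ^2*j^2 < 0 := by
  have hA1 : τ^2*(m^2 - 1/4) < τ^2*j^2 := mul_lt_mul_of_pos_left hj ht2
  have hfact : 0 ≤ (τ^2 - 2*μ) * (m^2 - 1) := mul_nonneg (by linarith) (by nlinarith)
  linarith [hA1, hfact, ht2]

lemma arith_caseA_pos {μ τ θ K m j M1 : ℝ} (hμ : 0 < μ) (ht2 : 0 < τ^2) (hK : 0 < K)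
    (hm : 2 ≤ m) (hj0 : 0 ≤ j) (hjR : j ≤ m/θ + K) (hε : 0 < 2*μ - τ^2/θ^2)
    (hM₁ : (2*μ + 2*τ^2*K/θ + τ^2*K^2 + 1)/(2*μ - τ^2/θ^2) < M1) (hmM : M1 ≤ m) :
    0 < 2*μ*(m^2-1) - τ^2*j^2 := by
  have hm0 : (0:ℝ) < m := by linarith
  have ha := (div_lt_iff₀ hε).mp hM₁
  have hb : M1 * (2*μ - τ^2/θ^2) ≤ m * (2*μ - τ^2/θ^2) :=
    mul_le_mul_of_nonneg_right hmM hε.le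
  have hεm : (2*μ + 2*τ^2*K/θ + τ^2*K^2 + 1) < (2*μ - τ^2/θ^2) * m := by linarith
  have step : (2*μ + 2*τ^2*K/θ + τ^2*K^2 + 1)*m < (2*μ - τ^2/θ^2)*m^2 := by
    calc (2*μ + 2*τ^2*K/θ + τ^2*K^2 + 1)*m
        < ((2*μ - τ^2/θ^2) * m)*m := mul_lt_mul_of_pos_right hεm hm0
      _ = (2*μ - τ^2/θ^2)*m^2 := by ring
  have e1 : τ^2*(m/θ + K)^2 = (τ^2/θ^2)*m^2 + 2*(τ^2*K/θ)*m + τ^2*K^2 := by ring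
  have h2μm : 0 ≤ 2*μ*(m-1) := mul_nonneg (by linarith) (by linarith)
  have hK2m : 0 ≤ τ^2*K^2*(m-1) := mul_nonneg (by positivity) (by linarith)
  have key2 : τ^2*(m/θ + K)^2 < 2*μ*(m^2 - 1) := by
    rw [e1]
    have e2 : τ^2/θ^2*m^2 = (τ^2*(θ⁻¹)^2)*m^2 := by ring
    have e3 : 2*(τ^2*K/θ)*m = 2*(τ^2*K*θ⁻¹)*m := by ring
    have e4 : (2*μ + 2*τ^2*K*θ⁻¹ + τ^2*K^2 + 1)*m < (2*μ - τ^2*(θ⁻¹)^2)*m^2 := by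
      calc (2*μ + 2*τ^2*K*θ⁻¹ + τ^2*K^2 + 1)*m
          = (2*μ + 2*τ^2*K/θ + τ^2*K^2 + 1)*m := by ring
        _ < (2*μ - τ^2/θ^2)*m^2 := step
        _ = (2*μ - τ^2*(θ⁻¹)^2)*m^2 := by ring
    rw [e2, e3]
    linarith [e4, h2μm, hK2m, hm0]
  have hsq : τ^2*j^2 ≤ τ^2*(m/θ + K)^2 := by
    have h1 : j^2 ≤ (m/θ + K)^2 := pow_le_pow_left₀ hj0 hjR 2
    exact mul_le_mul_of_nonneg_left h1 ht2.le
  linarith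

lemma arith_sq_mono {m j1 j2 : ℝ} (hj1 : 0 < j1) (hj12 : j1 < j2)
    (hsq : m^2 - 1/4 < j1^2) : m^2 - 1/4 < j2^2 := by nlinarith

open BesselAux Real Set in
set_option maxHeartbeats 1000000 in
/-- For fixed `μ > 0`, `δ > 0`, `τ ∈ (0,1)`, for all sufficiently large `m` one has
`f_m(j_{m,1}) · f_m(j_{m,2}) < 0`. -/
theorem fAE_sign_change_at_first_two_bessel_zeros
    (μ δ τ : ℝ) (hμ : 0 < μ) (hδ : 0 < δ) (hτ : τ ∈ Set.Ioo (0 : ℝ) 1) :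
    ∃ M : ℕ, ∀ m : ℕ, M ≤ m →
      fAE μ δ τ m (besselJZero (m : ℝ) 1) * fAE μ δ τ m (besselJZero (m : ℝ) 2) < 0 := by
  obtain ⟨hτ0, hτ1⟩ := hτ
  obtain ⟨θ, hθ0, hθ1, hθτ, hAcase⟩ :
      ∃ θ : ℝ, 0 < θ ∧ θ < 1 ∧ τ < θ ∧ (2*μ ≤ τ^2 ∨ τ^2/θ^2 < 2*μ) := by
    rcases le_or_gt (2*μ) (τ^2) with h | h
    · exact ⟨(1+τ)/2, by linarith, by linarith, by linarith, Or.inl h⟩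
    · have hs0 : 0 < Real.sqrt (2*μ) := Real.sqrt_pos.mpr (by linarith)
      have hs2 : Real.sqrt (2*μ)^2 = 2*μ := Real.sq_sqrt (by linarith)
      have hτs : τ < Real.sqrt (2*μ) := by nlinarith
      have hts1 : τ/Real.sqrt (2*μ) < 1 := (div_lt_one hs0).mpr hτs
      refine ⟨max ((1+τ)/2) ((τ/Real.sqrt (2*μ) + 1)/2), ?_, ?_, ?_, Or.inr ?_⟩
      · apply lt_of_lt_of_le _ (le_max_left _ _); linarith
      · apply max_lt <;> linarith
      · apply lt_of_lt_of_le _ (le_max_left _ _); linarith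
      · set θ' := max ((1+τ)/2) ((τ/Real.sqrt (2*μ) + 1)/2) with hθ'
        have h1 : τ/Real.sqrt (2*μ) < θ' := by
          apply lt_of_lt_of_le _ (le_max_right _ _); linarith
        have hθ'0 : 0 < θ' := lt_of_lt_of_le (by linarith) (le_max_left _ _)
        have h2 : τ < θ' * Real.sqrt (2*μ) := by
          have := (div_lt_iff₀ hs0).mp h1
          linarith
        have h3 : τ^2 < θ'^2 * (2*μ) := by nlinarith
        rw [div_lt_iff₀ (by positivity)]
        nlinarith
  set K := 3*π/Real.sqrt (1-θ^2) with hK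
  have h1θ : (0:ℝ) < 1 - θ^2 := by nlinarith
  have hKpos : 0 < K := div_pos (by positivity) (Real.sqrt_pos.mpr h1θ)
  have hfrac : 0 < 1 - τ/θ := by
    have : τ/θ < 1 := (div_lt_one hθ0).mpr hθτ
    linarith
  have ht2 : (0:ℝ) < τ^2 := by positivity
  obtain ⟨M₀, hM₀⟩ := exists_nat_gt ((1 + τ*K)/(1 - τ/θ))
  obtain ⟨M₁, hM₁⟩ := exists_nat_gt ((2*μ + 2*τ^2*K/θ + τ^2*K^2 + 1)/(2*μ - τ^2/θ^2))
  refine ⟨max (max M₀ M₁) 2, fun m hm => ?_⟩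
  have hm2 : 2 ≤ m := le_trans (le_max_right _ _) hm
  have hmR : (2:ℝ) ≤ (m:ℝ) := by exact_mod_cast hm2
  have hν1 : (1:ℝ) ≤ (m:ℝ) := by linarith
  have hν0 : (0:ℝ) ≤ (m:ℝ) := by linarith
  have hm0R : (0:ℝ) < (m:ℝ) := by linarith
  have hmM₀ : (M₀:ℝ) ≤ (m:ℝ) := by
    exact_mod_cast le_trans (le_trans (le_max_left _ _) (le_max_left _ _)) hm
  have hmM₁ : (M₁:ℝ) ≤ (m:ℝ) := by
    exact_mod_cast le_trans (le_trans (le_max_right _ _) (le_max_left _ _)) hm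
  obtain ⟨j1, j2, hbz1, hbz2, hj1pos, hj12, hj1sq, hj2le, hpos1, hz1, hz2, hd1, hd2⟩ :=
    key (ν := (m:ℝ)) hν1 hθ0 hθ1
  rw [hbz1, hbz2]
  have hj2pos : 0 < j2 := lt_trans hj1pos hj12
  have hj1m : (m:ℝ) - 1 < j1 := arith_m_sub_one_lt hmR hj1pos hj1sq
  have hRj2 : j2 ≤ (m:ℝ)/θ + K := hj2le
  have hτj2 : τ * j2 < j1 := arith_tau_j2 hτ0 hfrac hM₀ hmM₀ hRj2 hj1m
  have hJ1 : besselJ (m:ℝ) j1 = 0 := (besselJ_zero_iff hν0 hj1pos).mpr hz1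
  have hJ2 : besselJ (m:ℝ) j2 = 0 := (besselJ_zero_iff hν0 hj2pos).mpr hz2
  have hP1 : 0 < besselJ (m:ℝ) (τ*j1) := by
    have hx : 0 < τ*j1 := by positivity
    obtain ⟨c, hc, hcx⟩ := besselJ_as_uf hν0 hx
    rw [hcx]
    have hlt : τ*j1 < j1 := by
      have := mul_lt_mul_of_pos_right hτ1 hj1pos
      simpa using this
    exact mul_pos hc (hpos1 _ hx hlt)
  have hP2 : 0 < besselJ (m:ℝ) (τ*j2) := by
    have hx : 0 < τ*j2 := by positivity
    obtain ⟨c, hc, hcx⟩ := besselJ_as_uf hν0 hx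
    rw [hcx]
    exact mul_pos hc (hpos1 _ hx hτj2)
  have hN1 : besselJ ((m:ℝ)-1) j1 < 0 := by
    obtain ⟨c, hc, hcx⟩ := besselJ_sub_one_at_zero (ν := (m:ℝ)) hν1 hj1pos hz1
    rw [hcx]
    exact mul_neg_of_pos_of_neg hc hd1
  have hN2 : 0 < besselJ ((m:ℝ)-1) j2 := by
    obtain ⟨c, hc, hcx⟩ := besselJ_sub_one_at_zero (ν := (m:ℝ)) hν1 hj2pos hz2
    rw [hcx]
    exact mul_pos hc hd2
  have hf1 : fAE μ δ τ m j1
      = (2*μ*((m:ℝ)^2 - 1) - τ^2*j1^2) * besselJ ((m:ℝ)-1) j1 * besselJ (m:ℝ) (τ*j1) := by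
    unfold fAE
    rw [hJ1]
    ring
  have hf2 : fAE μ δ τ m j2
      = (2*μ*((m:ℝ)^2 - 1) - τ^2*j2^2) * besselJ ((m:ℝ)-1) j2 * besselJ (m:ℝ) (τ*j2) := by
    unfold fAE
    rw [hJ2]
    ring
  have hAA : ((2*μ*((m:ℝ)^2 - 1) - τ^2*j1^2) < 0 ∧ (2*μ*((m:ℝ)^2 - 1) - τ^2*j2^2) < 0)
      ∨ (0 < (2*μ*((m:ℝ)^2 - 1) - τ^2*j1^2) ∧ 0 < (2*μ*((m:ℝ)^2 - 1) - τ^2*j2^2)) := by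
    rcases hAcase with h | h
    · left
      have hsq2 : (m:ℝ)^2 - 1/4 < j2^2 := arith_sq_mono hj1pos hj12 hj1sq
      exact ⟨arith_caseA_neg ht2 h hmR hj1sq, arith_caseA_neg ht2 h hmR hsq2⟩
    · right
      have hε : 0 < 2*μ - τ^2/θ^2 := by linarith
      have hj1R : j1 ≤ (m:ℝ)/θ + K := le_trans hj12.le hRj2
      exact ⟨arith_caseA_pos hμ ht2 hKpos hmR hj1pos.le hj1R hε hM₁ hmM₁,
        arith_caseA_pos hμ ht2 hKpos hmR hj2pos.le hRj2 hε hM₁ hmM₁⟩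
  rw [hf1, hf2]
  rcases hAA with ⟨h1, h2⟩ | ⟨h1, h2⟩
  · have hx1 : 0 < (2*μ*((m:ℝ)^2 - 1) - τ^2*j1^2) * besselJ ((m:ℝ)-1) j1 * besselJ (m:ℝ) (τ*j1) :=
      mul_pos (mul_pos_of_neg_of_neg h1 hN1) hP1
    have hx2 : (2*μ*((m:ℝ)^2 - 1) - τ^2*j2^2) * besselJ ((m:ℝ)-1) j2 * besselJ (m:ℝ) (τ*j2) < 0 :=
      mul_neg_of_neg_of_pos (mul_neg_of_neg_of_pos h2 hN2) hP2
    exact mul_neg_of_pos_of_neg hx1 hx2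
  · have hx1 : (2*μ*((m:ℝ)^2 - 1) - τ^2*j1^2) * besselJ ((m:ℝ)-1) j1 * besselJ (m:ℝ) (τ*j1) < 0 :=
      mul_neg_of_neg_of_pos (mul_neg_of_pos_of_neg h1 hN1) hP1
    have hx2 : 0 < (2*μ*((m:ℝ)^2 - 1) - τ^2*j2^2) * besselJ ((m:ℝ)-1) j2 * besselJ (m:ℝ) (τ*j2) :=
      mul_pos (mul_pos h2 hN2) hP2
    exact mul_neg_of_neg_of_pos hx1 hx2
end

section
/- Let (k_m)_{m∈ℕ} be any sequence of positive reals such that k_m ∈ (j_{m,1}, j_{m,2}) for all sufficiently large m. Then k_m/m → 1 as m → ∞. -/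
open Real Filter Set

set_option maxHeartbeats 1000000

namespace BJ

noncomputable def A (ν : ℝ) (k : ℕ) : ℝ :=
  (-1 : ℝ) ^ k / (Nat.factorial k * Real.Gamma ((k : ℝ) + ν + 1))

noncomputable def C (ν : ℝ) : ℝ := 1 / Real.Gamma (ν + 1)

variable {ν : ℝ}

lemma gamma_pos (hν : 0 ≤ ν) (k : ℕ) : 0 < Real.Gamma ((k : ℝ) + ν + 1) :=
  Real.Gamma_pos_of_pos (by positivity)

lemma C_pos (hν : 0 ≤ ν) : 0 < C ν := by
  have := Real.Gamma_pos_of_pos (show (0:ℝ) < ν + 1 by linarith)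
  simp only [C]; positivity

lemma fact_succ_cast (k : ℕ) : (((k+1).factorial : ℕ) : ℝ) = ((k : ℝ) + 1) * k.factorial := by
  rw [Nat.factorial_succ]; push_cast; ring

lemma fact_pos_cast (k : ℕ) : (0:ℝ) < k.factorial := by
  exact_mod_cast k.factorial_pos

lemma one_le_fact_cast (k : ℕ) : (1:ℝ) ≤ k.factorial := by
  exact_mod_cast Nat.one_le_iff_ne_zero.2 k.factorial_ne_zero

lemma gamma_ge (hν : 0 ≤ ν) (k : ℕ) :
    (k.factorial : ℝ) * Real.Gamma (ν + 1) ≤ Real.Gamma ((k : ℝ) + ν + 1) := by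
  induction k with
  | zero => simp
  | succ n ih =>
    have hpos : (0:ℝ) < (n : ℝ) + ν + 1 := by positivity
    have h1 : ((n + 1 : ℕ) : ℝ) + ν + 1 = ((n : ℝ) + ν + 1) + 1 := by push_cast; ring
    rw [h1, Real.Gamma_add_one hpos.ne']
    have hg := gamma_pos hν n
    have hgam := Real.Gamma_pos_of_pos (show (0:ℝ) < ν + 1 by linarith)
    have hfac := fact_pos_cast n
    calc (((n+1).factorial : ℕ) : ℝ) * Real.Gamma (ν + 1)
        = ((n : ℝ) + 1) * ((n.factorial : ℝ) * Real.Gamma (ν + 1)) := by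
          rw [fact_succ_cast]; ring
      _ ≤ ((n : ℝ) + 1) * Real.Gamma ((n : ℝ) + ν + 1) := by
          apply mul_le_mul_of_nonneg_left ih (by positivity)
      _ ≤ ((n : ℝ) + ν + 1) * Real.Gamma ((n : ℝ) + ν + 1) := by
          apply mul_le_mul_of_nonneg_right (by linarith) hg.le

lemma abs_A_le (hν : 0 ≤ ν) (k : ℕ) :
    |A ν k| ≤ C ν / ((k.factorial : ℝ) * k.factorial) := by
  have hg := gamma_pos hν k
  have hgam := Real.Gamma_pos_of_pos (show (0:ℝ) < ν + 1 by linarith)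
  have hfac := fact_pos_cast k
  have h1 : |A ν k| = 1 / ((k.factorial : ℝ) * Real.Gamma ((k : ℝ) + ν + 1)) := by
    rw [A, abs_div, abs_pow, abs_neg, abs_one, one_pow, abs_of_pos (by positivity)]
  have h2 : C ν / ((k.factorial : ℝ) * k.factorial)
      = 1 / ((k.factorial : ℝ) * k.factorial * Real.Gamma (ν+1)) := by
    rw [C]; field_simp
  rw [h1, h2]
  apply one_div_le_one_div_of_le (by positivity)
  have := gamma_ge hν k
  calc (k.factorial : ℝ) * k.factorial * Real.Gamma (ν+1)
      = (k.factorial : ℝ) * ((k.factorial : ℝ) * Real.Gamma (ν+1)) := by ring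
    _ ≤ (k.factorial : ℝ) * Real.Gamma ((k:ℝ) + ν + 1) :=
        mul_le_mul_of_nonneg_left this hfac.le

section Series

variable {c : ℕ → ℝ} {Cc : ℝ}

lemma coef_nonneg (hc : ∀ k, |c k| ≤ Cc / k.factorial) : 0 ≤ Cc := by
  have h := (abs_nonneg (c 0)).trans (hc 0)
  simpa using h

lemma summable_term (hc : ∀ k, |c k| ≤ Cc / k.factorial) (t : ℝ) :
    Summable (fun k => c k * t ^ k) := by
  have hC := coef_nonneg hc
  refine Summable.of_norm_bounded (g := fun k : ℕ => Cc * (|t| ^ k / k.factorial))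
    ((Real.summable_pow_div_factorial |t|).mul_left Cc) (fun k => ?_)
  rw [norm_mul, norm_pow, Real.norm_eq_abs, Real.norm_eq_abs]
  calc |c k| * |t| ^ k ≤ (Cc / k.factorial) * |t| ^ k := by
        apply mul_le_mul_of_nonneg_right (hc k) (by positivity)
    _ = Cc * (|t| ^ k / k.factorial) := by ring

lemma coef_shift (hc : ∀ k, |c k| ≤ Cc / k.factorial) (k : ℕ) :
    |((k : ℝ) + 1) * c (k + 1)| ≤ Cc / k.factorial := by
  have hC := coef_nonneg hc
  have h1 : |((k : ℝ) + 1) * c (k + 1)| = ((k : ℝ) + 1) * |c (k + 1)| := by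
    rw [abs_mul, abs_of_pos (by positivity)]
  rw [h1]
  calc ((k : ℝ) + 1) * |c (k + 1)| ≤ ((k : ℝ) + 1) * (Cc / (k + 1).factorial) := by
        apply mul_le_mul_of_nonneg_left (hc (k+1)) (by positivity)
    _ = Cc / k.factorial := by
        rw [fact_succ_cast]
        have h0 := (fact_pos_cast k).ne'
        field_simp

/-- summability of the termwise-differentiated series -/
lemma summable_deriv_term (hc : ∀ k, |c k| ≤ Cc / k.factorial) {R : ℝ} (hR : 0 ≤ R) :
    Summable (fun k : ℕ => Cc * ((k : ℝ) * R ^ (k - 1)) / k.factorial) := by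
  have hC := coef_nonneg hc
  rw [← summable_nat_add_iff 1]
  apply Summable.congr ((Real.summable_pow_div_factorial R).mul_left Cc)
  intro k
  show Cc * (R ^ k / k.factorial) = Cc * (((k+1 : ℕ) : ℝ) * R ^ ((k+1) - 1)) / ((k+1).factorial)
  have hk : (k + 1) - 1 = k := rfl
  rw [hk, fact_succ_cast]
  have h0 := fact_pos_cast k
  rw [mul_div_assoc]
  congr 1
  have h1 := (fact_pos_cast k).ne'
  push_cast
  field_simp

lemma hasDerivAt_series (hc : ∀ k, |c k| ≤ Cc / k.factorial) (t : ℝ) :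
    HasDerivAt (fun y => ∑' k, c k * y ^ k)
      (∑' k : ℕ, (((k : ℝ) + 1) * c (k + 1)) * t ^ k) t := by
  have hC := coef_nonneg hc
  set R := |t| + 1 with hRdef
  have hR : 0 ≤ R := by positivity
  have ht : t ∈ Metric.ball (0:ℝ) R := by
    rw [Metric.mem_ball, Real.dist_eq, sub_zero, hRdef]
    linarith
  have key : HasDerivAt (fun y => ∑' k, c k * y ^ k)
      (∑' k, c k * ((k : ℝ) * t ^ (k - 1))) t := by
    apply hasDerivAt_tsum_of_isPreconnected (summable_deriv_term hc hR)
      Metric.isOpen_ball ((convex_ball (0:ℝ) R).isPreconnected)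
      (fun n y _ => (hasDerivAt_pow n y).const_mul (c n)) ?_ ht (summable_term hc t) ht
    · intro n y hy
      have hyR : |y| ≤ R := by
        rw [Metric.mem_ball, Real.dist_eq, sub_zero] at hy
        exact hy.le
      rw [Real.norm_eq_abs, abs_mul, abs_mul, abs_pow]
      have h1 : |c n| * (|(n:ℝ)| * |y| ^ (n-1)) ≤ (Cc / n.factorial) * ((n:ℝ) * R ^ (n-1)) := by
        apply mul_le_mul (hc n) ?_ (by positivity) (by positivity)
        rw [abs_of_nonneg (by positivity : (0:ℝ) ≤ (n:ℝ))]
        apply mul_le_mul_of_nonneg_left (pow_le_pow_left₀ (abs_nonneg y) hyR _) (by positivity)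
      calc |c n| * (|(n:ℝ)| * |y| ^ (n-1)) ≤ (Cc / n.factorial) * ((n:ℝ) * R ^ (n-1)) := h1
        _ = Cc * ((n:ℝ) * R ^ (n-1)) / n.factorial := by ring
  convert key using 1
  have hs : Summable (fun k => c k * ((k : ℝ) * t ^ (k - 1))) := by
    apply Summable.of_norm_bounded (summable_deriv_term hc hR)
    intro n
    rw [Real.norm_eq_abs, abs_mul, abs_mul, abs_pow]
    have hyR : |t| ≤ R := by rw [hRdef]; linarith
    calc |c n| * (|(n:ℝ)| * |t| ^ (n-1))
        ≤ (Cc / n.factorial) * ((n:ℝ) * R ^ (n-1)) := by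
          apply mul_le_mul (hc n) ?_ (by positivity) (by positivity)
          rw [abs_of_nonneg (by positivity : (0:ℝ) ≤ (n:ℝ))]
          apply mul_le_mul_of_nonneg_left (pow_le_pow_left₀ (abs_nonneg t) hyR _) (by positivity)
      _ = Cc * ((n:ℝ) * R ^ (n-1)) / n.factorial := by ring
  rw [Summable.tsum_eq_zero_add hs]
  simp only [Nat.cast_zero, zero_mul, mul_zero, zero_add]
  apply tsum_congr
  intro k
  have hk : (k + 1) - 1 = k := rfl
  rw [hk]
  push_cast
  ring

end Series

section Gfun

noncomputable def c1 (ν : ℝ) (k : ℕ) : ℝ := ((k : ℝ) + 1) * A ν (k + 1)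
noncomputable def c2 (ν : ℝ) (k : ℕ) : ℝ := ((k : ℝ) + 1) * c1 ν (k + 1)

noncomputable def G0 (ν : ℝ) : ℝ → ℝ := fun t => ∑' k : ℕ, A ν k * t ^ k
noncomputable def G1 (ν : ℝ) : ℝ → ℝ := fun t => ∑' k : ℕ, c1 ν k * t ^ k
noncomputable def G2 (ν : ℝ) : ℝ → ℝ := fun t => ∑' k : ℕ, c2 ν k * t ^ k

variable {ν : ℝ}

lemma quad_shift {c : ℕ → ℝ} {Cc : ℝ} (hC : 0 ≤ Cc)
    (hc : ∀ k, |c k| ≤ Cc / ((k.factorial : ℝ) * k.factorial)) (k : ℕ) :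
    |((k : ℝ) + 1) * c (k + 1)| ≤ Cc / ((k.factorial : ℝ) * k.factorial) := by
  have h1 : |((k : ℝ) + 1) * c (k + 1)| = ((k : ℝ) + 1) * |c (k + 1)| := by
    rw [abs_mul, abs_of_pos (by positivity)]
  rw [h1]
  have hf := fact_pos_cast k
  have hf1 := fact_pos_cast (k+1)
  calc ((k : ℝ) + 1) * |c (k + 1)|
      ≤ ((k : ℝ) + 1) * (Cc / (((k+1).factorial : ℝ) * (k+1).factorial)) :=
        mul_le_mul_of_nonneg_left (hc (k+1)) (by positivity)
    _ = Cc / ((k.factorial : ℝ) * (k+1).factorial) := by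
        rw [fact_succ_cast]; field_simp
    _ ≤ Cc / ((k.factorial : ℝ) * k.factorial) := by
        gcongr
        exact Nat.le_succ k

lemma lin_of_quad {c : ℕ → ℝ} {Cc : ℝ} (hC : 0 ≤ Cc)
    (hc : ∀ k, |c k| ≤ Cc / ((k.factorial : ℝ) * k.factorial)) (k : ℕ) :
    |c k| ≤ Cc / k.factorial := by
  refine (hc k).trans ?_
  gcongr
  nlinarith [one_le_fact_cast k, fact_pos_cast k]

lemma mulk_of_quad {c : ℕ → ℝ} {Cc : ℝ} (hC : 0 ≤ Cc)
    (hc : ∀ k, |c k| ≤ Cc / ((k.factorial : ℝ) * k.factorial)) (k : ℕ) :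
    |(k : ℝ) * c k| ≤ Cc / k.factorial := by
  have hf := fact_pos_cast k
  have hk : (k : ℝ) ≤ k.factorial := by exact_mod_cast Nat.self_le_factorial k
  rw [abs_mul, abs_of_nonneg (Nat.cast_nonneg k)]
  calc (k : ℝ) * |c k| ≤ (k : ℝ) * (Cc / ((k.factorial : ℝ) * k.factorial)) :=
        mul_le_mul_of_nonneg_left (hc k) (Nat.cast_nonneg k)
    _ ≤ (k.factorial : ℝ) * (Cc / ((k.factorial : ℝ) * k.factorial)) := by
        apply mul_le_mul_of_nonneg_right hk (by positivity)
    _ = Cc / k.factorial := by field_simp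

variable (hν : 0 ≤ ν)
include hν

lemma quadA : ∀ k, |A ν k| ≤ C ν / ((k.factorial : ℝ) * k.factorial) := abs_A_le hν
lemma quadc1 : ∀ k, |c1 ν k| ≤ C ν / ((k.factorial : ℝ) * k.factorial) :=
  quad_shift (C_pos hν).le (quadA hν)
lemma quadc2 : ∀ k, |c2 ν k| ≤ C ν / ((k.factorial : ℝ) * k.factorial) :=
  quad_shift (C_pos hν).le (quadc1 hν)

lemma linA : ∀ k, |A ν k| ≤ C ν / k.factorial := lin_of_quad (C_pos hν).le (quadA hν)
lemma linc1 : ∀ k, |c1 ν k| ≤ C ν / k.factorial := lin_of_quad (C_pos hν).le (quadc1 hν)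
lemma linc2 : ∀ k, |c2 ν k| ≤ C ν / k.factorial := lin_of_quad (C_pos hν).le (quadc2 hν)

lemma hasDerivAt_G0 (t : ℝ) : HasDerivAt (G0 ν) (G1 ν t) t := by
  have h := hasDerivAt_series (linA hν) t
  exact h

lemma hasDerivAt_G1 (t : ℝ) : HasDerivAt (G1 ν) (G2 ν t) t := by
  have h := hasDerivAt_series (linc1 hν) t
  exact h

lemma A_rec (k : ℕ) : ((k : ℝ) + 1) * (((k : ℝ) + ν + 1)) * A ν (k + 1) = - A ν k := by
  have hpos : (0:ℝ) < (k : ℝ) + ν + 1 := by positivity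
  have hg := gamma_pos hν k
  have hfac := fact_pos_cast k
  rw [A, A]
  have hc : (((k+1 : ℕ) : ℝ)) + ν + 1 = ((k : ℝ) + ν + 1) + 1 := by push_cast; ring
  rw [hc, Real.Gamma_add_one hpos.ne', fact_succ_cast, pow_succ]
  field_simp

lemma G_ode (t : ℝ) : t * G2 ν t + (ν + 1) * G1 ν t + G0 ν t = 0 := by
  have hw : ∀ k : ℕ, |(k : ℝ) * c1 ν k| ≤ C ν / k.factorial :=
    mulk_of_quad (C_pos hν).le (quadc1 hν)
  have hsw : Summable (fun k : ℕ => ((k : ℝ) * c1 ν k) * t ^ k) := summable_term hw t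
  have h2 : t * G2 ν t = ∑' k : ℕ, ((k : ℝ) * c1 ν k) * t ^ k := by
    rw [Summable.tsum_eq_zero_add hsw]
    simp only [Nat.cast_zero, zero_mul, zero_add]
    rw [G2, ← tsum_mul_left]
    apply tsum_congr
    intro k
    simp only [c2]
    push_cast
    ring
  have h1 : (ν + 1) * G1 ν t = ∑' k : ℕ, ((ν + 1) * c1 ν k) * t ^ k := by
    rw [G1, ← tsum_mul_left]
    apply tsum_congr; intro k; ring
  have hs1 : Summable (fun k : ℕ => ((ν + 1) * c1 ν k) * t ^ k) := by
    have := (summable_term (linc1 hν) t).mul_left (ν + 1)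
    apply this.congr; intro k; ring
  have hs0 : Summable (fun k : ℕ => A ν k * t ^ k) := summable_term (linA hν) t
  rw [h2, h1, G0, ← Summable.tsum_add hsw hs1, ← Summable.tsum_add (hsw.add hs1) hs0]
  have : ∀ k : ℕ, (((k : ℝ) * c1 ν k) * t ^ k + ((ν + 1) * c1 ν k) * t ^ k) + A ν k * t ^ k
      = 0 := by
    intro k
    have hrec := A_rec hν k
    have hthis : (k : ℝ) * c1 ν k + (ν + 1) * c1 ν k = ((k : ℝ) + ν + 1) * c1 ν k := by ring
    have h3 : ((k : ℝ) + ν + 1) * c1 ν k = - A ν k := by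
      rw [c1]; linear_combination hrec
    linear_combination t ^ k * hthis + t ^ k * h3
  calc ∑' k : ℕ, ((((k : ℝ) * c1 ν k) * t ^ k + ((ν + 1) * c1 ν k) * t ^ k) + A ν k * t ^ k)
      = ∑' _ : ℕ, (0:ℝ) := by
        apply tsum_congr; intro k
        rw [← this k]
    _ = 0 := tsum_zero

end Gfun

section Ufun

variable {ν : ℝ}

noncomputable def U (ν : ℝ) : ℝ → ℝ := fun x => x ^ (ν + 1/2) * G0 ν (x ^ 2 / 4)

noncomputable def U1 (ν : ℝ) : ℝ → ℝ := fun x =>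
  (ν + 1/2) * x ^ (ν - 1/2) * G0 ν (x ^ 2 / 4) + x ^ (ν + 1/2) * (G1 ν (x ^ 2 / 4) * (x / 2))

lemma hasDerivAt_sq4 (x : ℝ) : HasDerivAt (fun y : ℝ => y ^ 2 / 4) (x / 2) x := by
  have := (hasDerivAt_pow 2 x).div_const 4
  refine this.congr_deriv (Eq.symm ?_)
  push_cast
  ring

lemma besselJ_eq (hν : 0 ≤ ν) {x : ℝ} (hx : 0 < x) :
    besselJ ν x = (x / 2) ^ ν * G0 ν (x ^ 2 / 4) := by
  have h2 : (0:ℝ) < x / 2 := by linarith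
  rw [besselJ, G0, ← tsum_mul_left]
  apply tsum_congr
  intro k
  have he : (x / 2) ^ (2 * (k : ℝ) + ν) = (x / 2) ^ ν * (x ^ 2 / 4) ^ k := by
    rw [Real.rpow_add h2, mul_comm ((x/2) ^ (2*(k:ℝ)))]
    congr 1
    have : (2 * (k : ℝ)) = ((2 * k : ℕ) : ℝ) := by push_cast; ring
    rw [this, Real.rpow_natCast, pow_mul]
    congr 1
    ring
  rw [he, A]
  ring

lemma hasDerivAt_U (hν : 0 ≤ ν) {x : ℝ} (hx : 0 < x) :
    HasDerivAt (U ν) (U1 ν x) x := by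
  have hrpow : HasDerivAt (fun y : ℝ => y ^ (ν + 1/2)) ((ν + 1/2) * x ^ (ν - 1/2)) x := by
    have h := Real.hasDerivAt_rpow_const (x := x) (p := ν + 1/2) (Or.inl hx.ne')
    have h12 : ν + 1/2 - 1 = ν - 1/2 := by ring
    rw [h12] at h
    exact h
  have hcomp : HasDerivAt (fun y : ℝ => G0 ν (y ^ 2 / 4)) (G1 ν (x ^ 2 / 4) * (x / 2)) x :=
    (hasDerivAt_G0 hν _).comp x (hasDerivAt_sq4 x)
  exact hrpow.mul hcomp

lemma hasDerivAt_U1 (hν : 0 ≤ ν) {x : ℝ} (hx : 0 < x) :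
    HasDerivAt (U1 ν) (((ν ^ 2 - 1/4) / x ^ 2 - 1) * U ν x) x := by
  have hrpow : HasDerivAt (fun y : ℝ => y ^ (ν + 1/2)) ((ν + 1/2) * x ^ (ν - 1/2)) x := by
    have h := Real.hasDerivAt_rpow_const (x := x) (p := ν + 1/2) (Or.inl hx.ne')
    have h12 : ν + 1/2 - 1 = ν - 1/2 := by ring
    rw [h12] at h
    exact h
  have hrpow2 : HasDerivAt (fun y : ℝ => y ^ (ν - 1/2)) ((ν - 1/2) * x ^ (ν - 3/2)) x := by
    have h := Real.hasDerivAt_rpow_const (x := x) (p := ν - 1/2) (Or.inl hx.ne')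
    have h12 : ν - 1/2 - 1 = ν - 3/2 := by ring
    rw [h12] at h
    exact h
  have hG0comp : HasDerivAt (fun y : ℝ => G0 ν (y ^ 2 / 4)) (G1 ν (x ^ 2 / 4) * (x / 2)) x :=
    (hasDerivAt_G0 hν _).comp x (hasDerivAt_sq4 x)
  have hG1comp : HasDerivAt (fun y : ℝ => G1 ν (y ^ 2 / 4)) (G2 ν (x ^ 2 / 4) * (x / 2)) x :=
    (hasDerivAt_G1 hν _).comp x (hasDerivAt_sq4 x)
  have hhalf : HasDerivAt (fun y : ℝ => y / 2) (1 / 2) x := (hasDerivAt_id x).div_const 2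
  have hf1 : HasDerivAt (fun y : ℝ => (ν + 1/2) * y ^ (ν - 1/2) * G0 ν (y ^ 2 / 4))
      ((ν + 1/2) * ((ν - 1/2) * x ^ (ν - 3/2)) * G0 ν (x ^ 2 / 4)
        + (ν + 1/2) * x ^ (ν - 1/2) * (G1 ν (x ^ 2 / 4) * (x / 2))) x := by
    exact (hrpow2.const_mul (ν + 1/2)).mul hG0comp
  have hinner : HasDerivAt (fun y : ℝ => G1 ν (y ^ 2 / 4) * (y / 2))
      (G2 ν (x ^ 2 / 4) * (x / 2) * (x / 2) + G1 ν (x ^ 2 / 4) * (1 / 2)) x :=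
    hG1comp.mul hhalf
  have hf2 : HasDerivAt (fun y : ℝ => y ^ (ν + 1/2) * (G1 ν (y ^ 2 / 4) * (y / 2)))
      ((ν + 1/2) * x ^ (ν - 1/2) * (G1 ν (x ^ 2 / 4) * (x / 2))
        + x ^ (ν + 1/2) * (G2 ν (x ^ 2 / 4) * (x / 2) * (x / 2) + G1 ν (x ^ 2 / 4) * (1 / 2))) x :=
    hrpow.mul hinner
  have hsum := hf1.add hf2
  have hode := G_ode hν (x ^ 2 / 4)
  have e1 : x ^ (ν - 1/2) = x ^ (ν - 3/2) * x := by
    rw [← Real.rpow_add_one hx.ne']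
    congr 1
    ring
  have e2 : x ^ (ν + 1/2) = x ^ (ν - 3/2) * x * x := by
    rw [← Real.rpow_add_one hx.ne', ← Real.rpow_add_one hx.ne']
    congr 1
    ring
  refine hsum.congr_deriv (Eq.symm ?_)
  rw [U, e2, e1]
  have hx2 : x ^ 2 ≠ 0 := by positivity
  have hdiv : (ν ^ 2 - 1/4) / x ^ 2 * (x * x) = ν ^ 2 - 1/4 := by
    rw [div_mul_eq_mul_div, div_eq_iff hx2]
    ring
  linear_combination (x ^ (ν - 3/2) * G0 ν (x ^ 2 / 4)) * hdiv
    + (-(x ^ (ν - 3/2) * x * x)) * hode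

end Ufun

section Qual

variable {ν : ℝ}

lemma continuous_G0 (hν : 0 ≤ ν) : Continuous (G0 ν) := by
  rw [continuous_iff_continuousAt]
  exact fun t => (hasDerivAt_G0 hν t).continuousAt

lemma G0_zero (hν : 0 ≤ ν) : G0 ν 0 = 1 / Real.Gamma (ν + 1) := by
  rw [G0, tsum_eq_single 0 (fun k hk => by simp [zero_pow hk])]
  simp [A]

lemma continuous_U (hν : 0 ≤ ν) : Continuous (U ν) := by
  rw [continuous_iff_continuousAt]
  intro x
  apply ContinuousAt.mul
  · exact Real.continuousAt_rpow_const x (ν + 1/2) (Or.inr (by linarith))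
  · exact ((continuous_G0 hν).comp ((continuous_pow 2).div_const 4)).continuousAt

lemma U_tendsto_zero (hν : 0 ≤ ν) :
    Filter.Tendsto (U ν) (nhdsWithin 0 (Ioi 0)) (nhds 0) := by
  have h0 : U ν 0 = 0 := by
    rw [U, Real.zero_rpow (by positivity : ν + 1/2 ≠ 0), zero_mul]
  have := ((continuous_U hν).tendsto 0)
  rw [h0] at this
  exact this.mono_left nhdsWithin_le_nhds

lemma U_pos_near (hν : 0 ≤ ν) : ∃ δ > 0, ∀ x : ℝ, 0 < x → x < δ → 0 < U ν x := by
  have h0 : 0 < G0 ν 0 := by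
    rw [G0_zero hν]
    have := Real.Gamma_pos_of_pos (show (0:ℝ) < ν + 1 by linarith)
    positivity
  have hc : ContinuousAt (fun x : ℝ => G0 ν (x ^ 2 / 4)) 0 :=
    ((continuous_G0 hν).comp ((continuous_pow 2).div_const 4)).continuousAt
  have h00 : (fun x : ℝ => G0 ν (x ^ 2 / 4)) 0 = G0 ν 0 := by norm_num
  have hev : ∀ᶠ x in nhds (0:ℝ), 0 < G0 ν (x ^ 2 / 4) := by
    have := hc.eventually_mem (s := Ioi (0:ℝ)) ?_
    · exact this
    · have he0 : (0:ℝ) ^ 2 / 4 = 0 := by norm_num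
      show Ioi (0:ℝ) ∈ nhds (G0 ν (0 ^ 2 / 4))
      rw [he0]
      exact Ioi_mem_nhds h0
  rcases Metric.eventually_nhds_iff.1 hev with ⟨δ, hδ, hball⟩
  refine ⟨δ, hδ, fun x hx hxδ => ?_⟩
  have : 0 < G0 ν (x ^ 2 / 4) := hball (by
    rw [Real.dist_eq, sub_zero, abs_of_pos hx]; exact hxδ)
  have hr : 0 < x ^ (ν + 1/2) := Real.rpow_pos_of_pos hx _
  exact mul_pos hr this

lemma U_pos (hν : 1 ≤ ν) : ∀ x : ℝ, 0 < x → x ≤ ν - 1 → 0 < U ν x := by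
  have hν0 : 0 ≤ ν := by linarith
  by_contra hcon
  push_neg at hcon
  obtain ⟨x₀, hx₀, hx₀le, hU₀⟩ := hcon
  obtain ⟨δ, hδ, hδpos⟩ := U_pos_near hν0
  set δ₁ := min (δ / 2) (x₀ / 2) with hδ₁def
  have hδ₁ : 0 < δ₁ := lt_min (by linarith) (by linarith)
  have hδ₁δ : δ₁ < δ := (min_le_left _ _).trans_lt (by linarith)
  have hδ₁x₀ : δ₁ ≤ x₀ := (min_le_right _ _).trans (by linarith)
  set Z := {y : ℝ | y ∈ Icc δ₁ x₀ ∧ U ν y ≤ 0} with hZdef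
  have hZclosed : IsClosed Z := by
    have : Z = Icc δ₁ x₀ ∩ (U ν) ⁻¹' (Iic 0) := rfl
    rw [this]
    exact isClosed_Icc.inter (IsClosed.preimage (continuous_U hν0) isClosed_Iic)
  have hZne : Z.Nonempty := ⟨x₀, ⟨hδ₁x₀, le_refl _⟩, hU₀⟩
  have hZbdd : BddBelow Z := ⟨δ₁, fun y hy => hy.1.1⟩
  set z := sInf Z with hzdef
  have hzZ : z ∈ Z := hZclosed.csInf_mem hZne hZbdd
  have hz_pos : 0 < z := lt_of_lt_of_le hδ₁ hzZ.1.1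
  have hz_le : z ≤ x₀ := hzZ.1.2
  have hz_gt : ∀ y : ℝ, 0 < y → y < z → 0 < U ν y := by
    intro y hy hyz
    by_cases hyδ : y ≤ δ₁
    · exact hδpos y hy (lt_of_le_of_lt hyδ hδ₁δ)
    · push_neg at hyδ
      by_contra hUy
      push_neg at hUy
      have : y ∈ Z := ⟨⟨hyδ.le, hyz.le.trans hz_le⟩, hUy⟩
      exact absurd (csInf_le hZbdd this) (not_le.2 hyz)
  -- the midpoint
  set w := z / 2 with hwdef
  have hw_pos : 0 < w := by positivity
  have hwz : w < z := by linarith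
  have hUw : 0 < U ν w := hz_gt w hw_pos hwz
  -- convexity on [a, z] for 0 < a < w
  have key : ∀ a : ℝ, 0 < a → a < w → U ν w ≤ U ν a := by
    intro a ha haw
    have haz : a < z := by linarith
    have hconv : ConvexOn ℝ (Icc a z) (U ν) := by
      apply convexOn_of_hasDerivWithinAt2_nonneg (convex_Icc a z)
        ((continuous_U hν0).continuousOn) (f' := U1 ν)
        (f'' := fun y => ((ν ^ 2 - 1/4) / y ^ 2 - 1) * U ν y)
      · intro y hy
        rw [interior_Icc] at hy
        exact (hasDerivAt_U hν0 (ha.trans hy.1)).hasDerivWithinAt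
      · intro y hy
        rw [interior_Icc] at hy
        exact (hasDerivAt_U1 hν0 (ha.trans hy.1)).hasDerivWithinAt
      · intro y hy
        rw [interior_Icc] at hy
        have hy0 : 0 < y := ha.trans hy.1
        have hUy : 0 < U ν y := hz_gt y hy0 hy.2
        have hyν : y ≤ ν - 1 := le_trans (hy.2.le.trans hz_le) hx₀le
        have hsq : y ^ 2 ≤ ν ^ 2 - 1/4 := by nlinarith
        have hψ : 0 ≤ (ν ^ 2 - 1/4) / y ^ 2 - 1 := by
          have h1 : (1:ℝ) ≤ (ν ^ 2 - 1/4) / y ^ 2 := (one_le_div (by positivity)).2 hsq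
          linarith
        positivity
    -- chord comparison
    have hUz : U ν z ≤ 0 := hzZ.2
    have hUa : 0 < U ν a := hz_gt a ha haz
    set α := (z - w) / (z - a) with hαdef
    set β := (w - a) / (z - a) with hβdef
    have hza : 0 < z - a := by linarith
    have hα : 0 ≤ α := div_nonneg (by linarith) hza.le
    have hβ : 0 ≤ β := by
      rw [hβdef]
      have : 0 ≤ w - a := by linarith
      positivity
    have hαβ : α + β = 1 := by
      rw [hαdef, hβdef]
      field_simp
      ring
    have hcomb : α • a + β • z = w := by
      rw [hαdef, hβdef]
      simp only [smul_eq_mul]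
      field_simp
      ring
    have hle := hconv.2 (x := a) (y := z)
      ⟨le_refl a, haz.le⟩ ⟨haz.le, le_refl z⟩ hα hβ hαβ
    rw [hcomb] at hle
    have hα1 : α ≤ 1 := by
      rw [hαdef, div_le_one hza]
      linarith
    calc U ν w ≤ α * U ν a + β * U ν z := by simpa using hle
      _ ≤ α * U ν a := by nlinarith
      _ ≤ U ν a := by nlinarith
  -- limit as a → 0⁺ gives contradiction
  have hev : ∀ᶠ a in nhdsWithin (0:ℝ) (Ioi 0), U ν w ≤ U ν a := by
    filter_upwards [Ioo_mem_nhdsGT_of_mem (by constructor <;> linarith : (0:ℝ) ∈ Ico 0 w)]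
      with a ha
    exact key a ha.1 ha.2
  have := ge_of_tendsto (U_tendsto_zero hν0) hev
  linarith

end Qual

section Sturm

lemma sturm_aux {u u' Q : ℝ → ℝ} {a q : ℝ} (hq : 0 < q)
    (hu : ∀ x ∈ Icc a (a + π / Real.sqrt q), HasDerivAt u (u' x) x)
    (hu' : ∀ x ∈ Icc a (a + π / Real.sqrt q), HasDerivAt u' (-Q x * u x) x)
    (hQ : ∀ x ∈ Icc a (a + π / Real.sqrt q), q ≤ Q x)
    (hpos : ∀ x ∈ Icc a (a + π / Real.sqrt q), 0 < u x) : False := by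
  set s := Real.sqrt q with hsdef
  have hs : 0 < s := Real.sqrt_pos.2 hq
  have hs2 : s * s = q := Real.mul_self_sqrt hq.le
  set b := a + π / s with hbdef
  have hab : a ≤ b := by
    have : 0 < π / s := by positivity
    rw [hbdef]; linarith [Real.pi_pos]
  set W := fun x : ℝ => u x * (s * Real.cos (s * (x - a))) - u' x * Real.sin (s * (x - a))
    with hWdef
  have hW : ∀ x ∈ Icc a b, HasDerivAt W
      ((Q x - q) * (u x * Real.sin (s * (x - a)))) x := by
    intro x hx
    have hinner : HasDerivAt (fun y : ℝ => s * (y - a)) s x := by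
      simpa using ((hasDerivAt_id x).sub_const a).const_mul s
    have hsin : HasDerivAt (fun y : ℝ => Real.sin (s * (y - a)))
        (Real.cos (s * (x - a)) * s) x := (Real.hasDerivAt_sin _).comp x hinner
    have hcos : HasDerivAt (fun y : ℝ => s * Real.cos (s * (y - a)))
        (s * (-Real.sin (s * (x - a)) * s)) x :=
      ((Real.hasDerivAt_cos _).comp x hinner).const_mul s
    have h1 := ((hu x hx).mul hcos).sub ((hu' x hx).mul hsin)
    refine h1.congr_deriv (Eq.symm ?_)
    linear_combination (u x * Real.sin (s * (x - a))) * hs2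
  have hWmono : MonotoneOn W (Icc a b) := by
    apply monotoneOn_of_hasDerivWithinAt_nonneg (convex_Icc a b)
      (f' := fun x => (Q x - q) * (u x * Real.sin (s * (x - a))))
    · intro x hx
      exact (hW x hx).continuousAt.continuousWithinAt
    · intro x hx
      rw [interior_Icc] at hx
      exact (hW x (Ioo_subset_Icc_self hx)).hasDerivWithinAt.mono interior_subset
    · intro x hx
      rw [interior_Icc] at hx
      have hxI : x ∈ Icc a b := Ioo_subset_Icc_self hx
      have h1 : 0 ≤ Q x - q := by linarith [hQ x hxI]
      have h2 : 0 < u x := hpos x hxI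
      have h3 : 0 ≤ Real.sin (s * (x - a)) := by
        apply Real.sin_nonneg_of_nonneg_of_le_pi
        · have : 0 ≤ x - a := by linarith [hx.1]
          positivity
        · have hxb : x - a ≤ π / s := by
            have := hx.2
            rw [hbdef] at this
            linarith
          calc s * (x - a) ≤ s * (π / s) := by
                apply mul_le_mul_of_nonneg_left hxb hs.le
            _ = π := by field_simp
      positivity
  have hWa : W a = u a * s := by
    rw [hWdef]
    simp
  have hWb : W b = -(u b * s) := by
    have hb1 : s * (b - a) = π := by
      rw [hbdef]
      field_simp
      ring
    show u b * (s * Real.cos (s * (b - a))) - u' b * Real.sin (s * (b - a)) = -(u b * s)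
    rw [hb1, Real.sin_pi, Real.cos_pi]
    ring
  have hle := hWmono ⟨le_refl a, hab⟩ ⟨hab, le_refl b⟩ hab
  rw [hWa, hWb] at hle
  have hua := hpos a ⟨le_refl a, hab⟩
  have hub := hpos b ⟨hab, le_refl b⟩
  nlinarith

lemma sturm_zero {u u' Q : ℝ → ℝ} {a q : ℝ} (hq : 0 < q)
    (hu : ∀ x ∈ Icc a (a + π / Real.sqrt q), HasDerivAt u (u' x) x)
    (hu' : ∀ x ∈ Icc a (a + π / Real.sqrt q), HasDerivAt u' (-Q x * u x) x)
    (hQ : ∀ x ∈ Icc a (a + π / Real.sqrt q), q ≤ Q x) :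
    ∃ z ∈ Icc a (a + π / Real.sqrt q), u z = 0 := by
  set s := Real.sqrt q with hsdef
  have hs : 0 < s := Real.sqrt_pos.2 hq
  set b := a + π / s with hbdef
  have hab : a ≤ b := by
    have : 0 < π / s := by positivity
    rw [hbdef]; linarith [Real.pi_pos]
  by_contra hcon
  push_neg at hcon
  have hcont : ContinuousOn u (Icc a b) :=
    fun x hx => (hu x hx).continuousAt.continuousWithinAt
  -- u has constant sign
  have hsign : (∀ x ∈ Icc a b, 0 < u x) ∨ (∀ x ∈ Icc a b, u x < 0) := by
    rcases lt_or_gt_of_ne (hcon a ⟨le_refl a, hab⟩) with hneg | hpos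
    · right
      intro x hx
      by_contra hux
      push_neg at hux
      have hux' : 0 < u x := lt_of_le_of_ne hux (Ne.symm (hcon x hx))
      have hsub : Icc a x ⊆ Icc a b := Icc_subset_Icc (le_refl a) hx.2
      have := intermediate_value_Icc hx.1 (hcont.mono hsub)
      have h0 : (0:ℝ) ∈ Icc (u a) (u x) := ⟨hneg.le, hux⟩
      obtain ⟨z, hz, hz0⟩ := this h0
      exact hcon z (hsub hz) hz0
    · left
      intro x hx
      by_contra hux
      push_neg at hux
      have hux' : u x < 0 := lt_of_le_of_ne hux (hcon x hx)
      have hsub : Icc a x ⊆ Icc a b := Icc_subset_Icc (le_refl a) hx.2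
      have := intermediate_value_Icc' hx.1 (hcont.mono hsub)
      have h0 : (0:ℝ) ∈ Icc (u x) (u a) := ⟨hux, hpos.le⟩
      obtain ⟨z, hz, hz0⟩ := this h0
      exact hcon z (hsub hz) hz0
  rcases hsign with hpos | hneg
  · exact sturm_aux hq hu hu' hQ hpos
  · apply sturm_aux (u := fun x => -u x) (u' := fun x => -u' x) (Q := Q) hq
    · intro x hx
      exact (hu x hx).neg
    · intro x hx
      have := (hu' x hx).neg
      refine this.congr_deriv (Eq.symm ?_)
      show -Q x * -u x = -(-Q x * u x)
      ring
    · exact hQ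
    · intro x hx
      have := hneg x hx
      linarith

end Sturm

section Main

variable {ν : ℝ}

lemma exists_U_zero (hν : 0 ≤ ν) {a q : ℝ} (hq : 0 < q) (ha : 0 < a)
    (hQ : ∀ x ∈ Icc a (a + π / Real.sqrt q), q ≤ 1 - (ν ^ 2 - 1/4) / x ^ 2) :
    ∃ z ∈ Icc a (a + π / Real.sqrt q), U ν z = 0 := by
  have hsub : ∀ x ∈ Icc a (a + π / Real.sqrt q), 0 < x := fun x hx => lt_of_lt_of_le ha hx.1
  apply sturm_zero (u' := U1 ν) (Q := fun x => 1 - (ν ^ 2 - 1/4) / x ^ 2) hq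
  · exact fun x hx => hasDerivAt_U hν (hsub x hx)
  · intro x hx
    have := hasDerivAt_U1 hν (hsub x hx)
    convert this using 1
    ring
  · exact hQ

lemma besselJ_zero_iff (hν : 0 ≤ ν) {x : ℝ} (hx : 0 < x) :
    besselJ ν x = 0 ↔ U ν x = 0 := by
  rw [besselJ_eq hν hx, U]
  have h1 : (x / 2) ^ ν ≠ 0 := (Real.rpow_pos_of_pos (by linarith) ν).ne'
  have h2 : x ^ (ν + 1/2) ≠ 0 := (Real.rpow_pos_of_pos hx _).ne'
  constructor
  · intro h
    rcases mul_eq_zero.1 h with h' | h'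
    · exact absurd h' h1
    · rw [h', mul_zero]
  · intro h
    rcases mul_eq_zero.1 h with h' | h'
    · exact absurd h' h2
    · rw [h', mul_zero]

end Main

end BJ

open BJ

/-- If `k_m ∈ (j_{m,1}, j_{m,2})` for all sufficiently large `m`, then `k_m / m → 1`. -/
theorem tendsto_div_of_mem_Ioo_besselJZero
    (k : ℕ → ℝ)
    (hk : ∀ᶠ m : ℕ in Filter.atTop, k m ∈ Set.Ioo (besselJZero (m : ℝ) 1) (besselJZero (m : ℝ) 2)) :
    Filter.Tendsto (fun m : ℕ => k m / (m : ℝ)) Filter.atTop (nhds 1) := by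
  rw [Metric.tendsto_nhds]
  intro ε hε
  set δ := min (ε / 2) (1 / 2) with hδdef
  have hδpos : 0 < δ := lt_min (by linarith) (by norm_num)
  have hδle : δ ≤ 1 / 2 := min_le_right _ _
  have hδε : δ ≤ ε / 2 := min_le_left _ _
  set q := δ / 2 with hqdef
  have hq : 0 < q := by positivity
  set L := π / Real.sqrt q with hLdef
  have hL : 0 < L := div_pos Real.pi_pos (Real.sqrt_pos.2 hq)
  have h1 : ∀ᶠ m : ℕ in atTop, 1 ≤ (m : ℝ) := by
    filter_upwards [eventually_ge_atTop 1] with m hm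
    exact_mod_cast hm
  have h2 : ∀ᶠ m : ℕ in atTop, (2 * L + 1) / δ ≤ (m : ℝ) :=
    tendsto_natCast_atTop_atTop.eventually_ge_atTop _
  have h3 : ∀ᶠ m : ℕ in atTop, 2 / ε < (m : ℝ) :=
    tendsto_natCast_atTop_atTop.eventually_gt_atTop _
  filter_upwards [hk, h1, h2, h3] with m hkm hm1 hm2 hm3
  set ν : ℝ := (m : ℝ) with hνdef
  have hν0 : (0:ℝ) ≤ ν := by linarith
  have hν0' : (0:ℝ) < ν := by linarith
  have hν1 : (1:ℝ) ≤ ν := hm1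
  -- the Q bound
  have hQgen : ∀ x : ℝ, (1 + δ) * ν ≤ x → q ≤ 1 - (ν ^ 2 - 1/4) / x ^ 2 := by
    intro x hx
    have hx0 : 0 < x := lt_of_lt_of_le (by nlinarith) hx
    have hkey : (ν ^ 2 - 1/4) / x ^ 2 ≤ 1 / (1 + δ) ^ 2 := by
      have ha1 : (ν ^ 2 - 1/4) / x ^ 2 ≤ ν ^ 2 / x ^ 2 := by
        gcongr
        linarith
      have ha2 : ν ^ 2 / x ^ 2 ≤ ν ^ 2 / ((1 + δ) * ν) ^ 2 := by
        gcongr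
      have ha3 : ν ^ 2 / ((1 + δ) * ν) ^ 2 = 1 / (1 + δ) ^ 2 := by
        field_simp
      linarith
    have hr : (1 / (1 + δ) ^ 2) * (1 + δ) ^ 2 = 1 := by
      field_simp
    have h5 : q ≤ 1 - 1 / (1 + δ) ^ 2 := by
      rw [hqdef]
      nlinarith [hr, hδpos, hδle, sq_nonneg δ, (by positivity : (0:ℝ) < (1+δ)^2)]
    linarith
  -- two zeros of U
  set a₁ := (1 + δ) * ν with ha₁def
  have ha₁pos : 0 < a₁ := by positivity
  obtain ⟨z₁, hz₁I, hz₁U⟩ := exists_U_zero hν0 hq ha₁pos (fun x hx => hQgen x hx.1)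
  set a₂ := a₁ + L + 1 with ha₂def
  have ha₂pos : 0 < a₂ := by positivity
  have ha₁₂ : a₁ ≤ a₂ := by linarith
  obtain ⟨z₂, hz₂I, hz₂U⟩ := exists_U_zero hν0 hq ha₂pos
    (fun x hx => hQgen x (le_trans (by linarith) hx.1))
  have hz₁pos : 0 < z₁ := lt_of_lt_of_le ha₁pos hz₁I.1
  have hz₂pos : 0 < z₂ := lt_of_lt_of_le ha₂pos hz₂I.1
  have hz₁₂ : z₁ < z₂ := by
    have hzu : z₁ ≤ a₁ + L := by rw [hLdef]; exact hz₁I.2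
    have hzl : a₂ ≤ z₂ := hz₂I.1
    rw [ha₂def] at hzl
    linarith
  have hJ₁ : besselJ ν z₁ = 0 := (besselJ_zero_iff hν0 hz₁pos).2 hz₁U
  have hJ₂ : besselJ ν z₂ = 0 := (besselJ_zero_iff hν0 hz₂pos).2 hz₂U
  have hmδ : 2 * L + 1 ≤ ν * δ := by
    rw [div_le_iff₀ hδpos] at hm2
    linarith
  have hz₂ub : z₂ ≤ (1 + 2 * δ) * ν := by
    have hzb : z₂ ≤ a₂ + L := by rw [hLdef]; exact hz₂I.2
    rw [ha₂def, ha₁def] at hzb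
    linarith
  -- infima
  have e1 : besselJZero ν 1 = sInf {x : ℝ | 0 < x ∧ besselJ ν x = 0} := rfl
  have e2 : besselJZero ν 2 = sInf {x : ℝ | besselJZero ν 1 < x ∧ besselJ ν x = 0} := rfl
  have hz₁S : z₁ ∈ {x : ℝ | 0 < x ∧ besselJ ν x = 0} := ⟨hz₁pos, hJ₁⟩
  have hS1lb : ∀ x ∈ {x : ℝ | 0 < x ∧ besselJ ν x = 0}, ν - 1 ≤ x := by
    rintro x ⟨hx0, hxJ⟩
    by_contra hcon
    push_neg at hcon
    exact absurd ((besselJ_zero_iff hν0 hx0).1 hxJ)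
      (U_pos hν1 x hx0 (le_of_lt hcon)).ne'
  have hj1_ge : ν - 1 ≤ besselJZero ν 1 := by
    rw [e1]
    exact le_csInf ⟨z₁, hz₁S⟩ hS1lb
  have hj1_le : besselJZero ν 1 ≤ z₁ := by
    rw [e1]
    exact csInf_le ⟨0, fun x hx => hx.1.le⟩ hz₁S
  have hz₂S2 : z₂ ∈ {x : ℝ | besselJZero ν 1 < x ∧ besselJ ν x = 0} :=
    ⟨lt_of_le_of_lt hj1_le hz₁₂, hJ₂⟩
  have hj2_le : besselJZero ν 2 ≤ z₂ := by
    rw [e2]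
    exact csInf_le ⟨besselJZero ν 1, fun x hx => hx.1.le⟩ hz₂S2
  -- conclude
  have hlow : ν - 1 < k m := lt_of_le_of_lt hj1_ge hkm.1
  have hupp : k m < (1 + 2 * δ) * ν := lt_of_lt_of_le hkm.2 (hj2_le.trans hz₂ub)
  rw [Real.dist_eq, abs_sub_lt_iff]
  constructor
  · have : k m / ν < 1 + ε := by
      rw [div_lt_iff₀ hν0']
      nlinarith
    linarith
  · have h4 : (ν - 1) / ν < k m / ν := by gcongr
    have h5 : (ν - 1) / ν = 1 - 1 / ν := by
      field_simp
    have h6 : 1 / ν < ε / 2 := by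
      rw [div_lt_div_iff₀ hν0' two_pos]
      rw [div_lt_iff₀ hε] at hm3
      nlinarith
    rw [h5] at h4
    linarith
end

section
/- The function φ(x) = x·e^{√(1−x²)}/(1+√(1−x²)) is strictly increasing on (0,1), and 0 < φ(x) < 1 for every x ∈ (0,1). -/
noncomputable def phiAE (x : ℝ) : ℝ :=
  x * Real.exp (Real.sqrt (1 - x ^ 2)) / (1 + Real.sqrt (1 - x ^ 2))

lemma phiAE_hasDerivAt {x : ℝ} (hx : x ∈ Set.Ioo (0:ℝ) 1) :
    HasDerivAt phiAE
      (Real.sqrt (1 - x ^ 2) * Real.exp (Real.sqrt (1 - x ^ 2)) /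
        (1 + Real.sqrt (1 - x ^ 2))) x := by
  obtain ⟨hx0, hx1⟩ := hx
  have hu : (0:ℝ) < 1 - x ^ 2 := by nlinarith
  set s := Real.sqrt (1 - x ^ 2) with hs
  have hspos : 0 < s := Real.sqrt_pos.mpr hu
  have hssq : s ^ 2 = 1 - x ^ 2 := Real.sq_sqrt hu.le
  have hden : (0:ℝ) < 1 + s := by linarith
  have h1 : HasDerivAt (fun x : ℝ => 1 - x ^ 2) (-(2 * x)) x := by
    simpa using (hasDerivAt_pow 2 x).const_sub 1
  have h2 : HasDerivAt (fun x : ℝ => Real.sqrt (1 - x ^ 2))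
      (1 / (2 * s) * (-(2 * x))) x := by
    convert h1.sqrt hu.ne' using 1
    rw [hs]
    ring
  have h3 := h2.exp
  have h4 : HasDerivAt (fun x : ℝ => x * Real.exp (Real.sqrt (1 - x ^ 2)))
      (1 * Real.exp s + x * (Real.exp s * (1 / (2 * s) * (-(2 * x))))) x :=
    (hasDerivAt_id x).mul h3
  have h5 : HasDerivAt (fun x : ℝ => 1 + Real.sqrt (1 - x ^ 2))
      (1 / (2 * s) * (-(2 * x))) x := h2.const_add 1
  have h6 := h4.div h5 hden.ne'
  refine h6.congr_deriv ?_
  rw [← hs]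
  set E := Real.exp s with hE
  field_simp
  ring_nf
  linear_combination (-(E*s)) * hssq

/-- `φ` is strictly increasing on `(0,1)` and takes values in `(0,1)` there. -/
theorem phiAE_strictMonoOn_and_mem_Ioo :
    StrictMonoOn phiAE (Set.Ioo (0 : ℝ) 1) ∧
      ∀ x ∈ Set.Ioo (0 : ℝ) 1, 0 < phiAE x ∧ phiAE x < 1 := by
  have hcont : Continuous phiAE := by
    apply Continuous.div
    · fun_prop
    · fun_prop
    · intro x
      have := Real.sqrt_nonneg (1 - x ^ 2)
      positivity
  have hmono : StrictMonoOn phiAE (Set.Icc (0:ℝ) 1) := by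
    apply strictMonoOn_of_deriv_pos (convex_Icc 0 1) hcont.continuousOn
    intro x hx
    rw [interior_Icc] at hx
    rw [(phiAE_hasDerivAt hx).deriv]
    obtain ⟨hx0, hx1⟩ := hx
    have hu : (0:ℝ) < 1 - x ^ 2 := by nlinarith
    have hspos : 0 < Real.sqrt (1 - x ^ 2) := Real.sqrt_pos.mpr hu
    positivity
  have h0 : phiAE 0 = 0 := by simp [phiAE]
  have h1 : phiAE 1 = 1 := by norm_num [phiAE]
  refine ⟨hmono.mono (Set.Ioo_subset_Icc_self), fun x hx => ?_⟩
  obtain ⟨hx0, hx1⟩ := hx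
  constructor
  · have := hmono (by norm_num) ⟨hx0.le, hx1.le⟩ hx0
    simpa [h0] using this
  · have := hmono ⟨hx0.le, hx1.le⟩ (by norm_num) hx1
    simpa [h1] using this
end
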